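/- arXiv:2401.03909 — 9 statements merged into one kernel-verified Lean document; each statement's English description precedes it below -/
import Mathlib

section
/- Let V be an n-dimensional real vector space with a nondegenerate symmetric bilinear form g, and let W be a Weyl-type tensor on V, i.e. a (0,4)-tensor satisfying W(a,b,c,d) = -W(b,a,c,d) = -W(a,b,d,c) = W(c,d,a,b), the first Bianchi identity, and vanishing of all traces with respect to g. If there exist n-3 vectors v_1,...,v_{n-3} in V that are orthonormal with respect to g (i.e. g(v_i,v_j) = ±δ_{ij}) and satisfy W(a,b,c,v_i) = 0 for all a,b,c ∈ V and all i, then W = 0. -/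
/-!
`W` vanishes as soon as one of its arguments is one of the `v i`, so it is determined by its
values on the `g`-orthogonal complement `U` of their span, a 3-dimensional space on which `g` is
nondegenerate. Completing the `v i` by an orthogonal basis `u₀, u₁, u₂` of `U` gives an orthogonal
basis of `V`. The trace of a bilinear form with respect to `g` may be computed in any orthogonal
basis, so trace-freeness reads `∑ₚ g(uₚ, uₚ)⁻¹ W(uₚ, u_q, uₚ, u_s) = 0`, and in dimension three
these equations force every component `W(uₚ, u_q, u_r, u_s)` to vanish.
-/

/-- A "Weyl-type" tensor `W` on a real vector space `V` with a symmetric bilinear form `g`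
admitting an orthonormal basis `b` with signs `ε`: `W` is (multi)linear, antisymmetric in the
first and last index pairs, satisfies the pair-interchange symmetry, the first Bianchi identity,
and is totally trace-free with respect to `g`. -/
def IsWeylLike {V : Type*} [AddCommGroup V] [Module ℝ V] {n : ℕ}
    (g : V → V → ℝ) (W : V → V → V → V → ℝ)
    (b : Module.Basis (Fin n) ℝ V) (ε : Fin n → ℝ) : Prop :=
  (∀ i, ε i = 1 ∨ ε i = -1) ∧
  (∀ i j, g (b i) (b j) = if i = j then ε i else 0) ∧
  (∀ x y, g x y = g y x) ∧
  (∀ x x' y, g (x + x') y = g x y + g x' y) ∧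
  (∀ (r : ℝ) (x y : V), g (r • x) y = r * g x y) ∧
  (∀ a a' c d e, W (a + a') c d e = W a c d e + W a' c d e) ∧
  (∀ (r : ℝ) (a c d e : V), W (r • a) c d e = r * W a c d e) ∧
  (∀ a c d e, W a c d e = - W c a d e) ∧
  (∀ a c d e, W a c d e = - W a c e d) ∧
  (∀ a c d e, W a c d e = W d e a c) ∧
  (∀ a c d e, W a c d e + W c d a e + W d a c e = 0) ∧
  (∀ a c, ∑ i, ε i * W (b i) a (b i) c = 0)

namespace LinearMap.BilinForm

variable {K V ι ι' : Type*} [Field K] [AddCommGroup V] [Module K V] {B : LinearMap.BilinForm K V}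

theorem repr_mul_apply_self_of_isOrthoᵢ {e : Module.Basis ι K V} (he : B.IsOrthoᵢ e)
    (x : V) (i : ι) : e.repr x i * B (e i) (e i) = B x (e i) := by
  classical
  suffices h : B (e i) (e i) • e.coord i = B.flip (e i) by
    simpa [mul_comm] using LinearMap.congr_fun h x
  refine e.ext fun j => ?_
  obtain rfl | hji := eq_or_ne j i
  · simp
  · simp [hji, he hji]

variable [Fintype ι] [Fintype ι']

theorem sum_inv_mul_eq_trace {e : Module.Basis ι K V} (he : B.IsOrthoᵢ e)
    (hd : ∀ i, B (e i) (e i) ≠ 0) (A : V →ₗ[K] V) :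
    ∑ i, (B (e i) (e i))⁻¹ * B (A (e i)) (e i) = LinearMap.trace K V A := by
  classical
  rw [LinearMap.trace_eq_matrix_trace K e, Matrix.trace]
  refine Finset.sum_congr rfl fun i _ => ?_
  rw [Matrix.diag_apply, LinearMap.toMatrix_apply, ← repr_mul_apply_self_of_isOrthoᵢ he (A (e i)),
    mul_comm, mul_inv_cancel_right₀ (hd i)]

theorem sum_inv_mul_eq_of_isOrthoᵢ (hB : B.Nondegenerate) (T : LinearMap.BilinForm K V)
    {e : Module.Basis ι K V} {e' : Module.Basis ι' K V} (he : B.IsOrthoᵢ e)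
    (he' : B.IsOrthoᵢ e') :
    ∑ i, (B (e i) (e i))⁻¹ * T (e i) (e i) = ∑ j, (B (e' j) (e' j))⁻¹ * T (e' j) (e' j) := by
  have := e.finiteDimensional_of_finite
  simp_rw [← symmCompOfNondegenerate_left_apply T hB]
  rw [sum_inv_mul_eq_trace he (he.not_isOrtho_basis_self_of_separatingLeft hB.1),
    sum_inv_mul_eq_trace he' (he'.not_isOrtho_basis_self_of_separatingLeft hB.1)]

open Module Submodule in
theorem exists_orthogonal_basis_extending [Invertible (2 : K)] [FiniteDimensional K V]
    (hB : B.IsSymm) {v : ι → V} (hv : B.IsOrthoᵢ v) (hvv : ∀ i, B (v i) (v i) ≠ 0) :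
    ∃ m, Fintype.card ι + m = finrank K V ∧
      ∃ e : Basis (ι ⊕ Fin m) K V, B.IsOrthoᵢ e ∧ ∀ i, e (.inl i) = v i := by
  have hli : LinearIndependent K v := linearIndependent_of_iIsOrtho hv hvv
  set S := span K (Set.range v)
  have hS : (B.restrict S).Nondegenerate :=
    (iIsOrtho.nondegenerate_iff_not_isOrtho_basis_self _ (Basis.span hli)
      fun i j hij => by simpa [Function.onFun] using hv hij).2 fun i => by simpa using hvv i
  have hcompl : IsCompl S (B.orthogonal S) :=
    isCompl_orthogonal_of_restrict_nondegenerate hB.isRefl hS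
  obtain ⟨u, hu⟩ := exists_orthogonal_basis (isSymm_iff.1 (hB.restrict (B.orthogonal S)))
  have hvu : ∀ i p, B (v i) (u p) = 0 := fun i p => (u p).2 _ (subset_span ⟨i, rfl⟩)
  refine ⟨_, ?_, ((Basis.span hli).prod u).map (prodEquivOfIsCompl _ _ hcompl), ?_,
    fun i => by simp⟩
  · rw [← finrank_span_eq_card hli, finrank_add_eq_of_isCompl hcompl]
  · rintro (i | p) (j | q) hij <;> simp only [Function.onFun]
    · simpa using (hv (Sum.inl_injective.ne_iff.1 hij) : B (v i) (v j) = 0)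
    · simpa using hvu i q
    · simpa [hB.eq] using hvu j p
    · simpa using (hu (Sum.inr_injective.ne_iff.1 hij) : B.restrict _ (u p) (u q) = 0)

end LinearMap.BilinForm

section ThreeDimensional

variable {K α : Type*} [Field K] [CharZero K]

theorem eq_zero_of_antisymm_of_lt [LinearOrder α] {w : α → α → α → α → K}
    (h₁₂ : ∀ p q r s, w p q r s = -w q p r s)
    (h₃₄ : ∀ p q r s, w p q r s = -w p q s r)
    (hlt : ∀ p q r s, p < q → r < s → w p q r s = 0) (p q r s : α) : w p q r s = 0 := by
  have hlt' : ∀ p q r s, p < q → w p q r s = 0 := fun p q r s hpq => by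
    rcases lt_trichotomy r s with hrs | rfl | hrs
    · exact hlt p q r s hpq hrs
    · exact CharZero.eq_neg_self_iff.1 (h₃₄ p q r r)
    · rw [h₃₄, hlt p q s r hpq hrs, neg_zero]
  rcases lt_trichotomy p q with hpq | rfl | hpq
  · exact hlt' p q r s hpq
  · exact CharZero.eq_neg_self_iff.1 (h₁₂ p p r s)
  · rw [h₁₂, hlt' q p r s hpq, neg_zero]

theorem eq_zero_of_sum_mul_eq_zero_of_fin_three {w : Fin 3 → Fin 3 → Fin 3 → Fin 3 → K}
    {μ : Fin 3 → K} (hμ : ∀ p, μ p ≠ 0)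
    (h₁₂ : ∀ p q r s, w p q r s = -w q p r s) (h₃₄ : ∀ p q r s, w p q r s = -w p q s r)
    (hpair : ∀ p q r s, w p q r s = w r s p q) (htr : ∀ q s, ∑ p, μ p * w p q p s = 0) :
    ∀ p q r s, w p q r s = 0 := by
  have hdiag₁₂ : ∀ p r s, w p p r s = 0 := fun p r s => CharZero.eq_neg_self_iff.1 (h₁₂ p p r s)
  have hdiag₃₄ : ∀ p q r, w p q r r = 0 := fun p q r => CharZero.eq_neg_self_iff.1 (h₃₄ p q r r)
  have hflip : ∀ p q r s, w p q r s = w q p s r := fun p q r s => by rw [h₁₂, h₃₄, neg_neg]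
  have htr' : ∀ q s, μ 0 * w 0 q 0 s + μ 1 * w 1 q 1 s + μ 2 * w 2 q 2 s = 0 := fun q s => by
    simpa [Fin.sum_univ_three] using htr q s
  -- the three sectional components solve a linear system of determinant `-2 μ₀ μ₁ μ₂`
  have e₀ := htr' 0 0
  have e₁ := htr' 1 1
  have e₂ := htr' 2 2
  simp only [hdiag₁₂, mul_zero, zero_add, add_zero] at e₀ e₁ e₂
  rw [hflip 1 0 1 0, hflip 2 0 2 0] at e₀
  rw [hflip 2 1 2 1] at e₁
  have h₁₂₁₂ : w 1 2 1 2 = 0 := by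
    have : 2 * μ 1 * μ 2 * w 1 2 1 2 = 0 := by
      linear_combination (-μ 0) * e₀ + μ 1 * e₁ + μ 2 * e₂
    simpa [hμ] using this
  have h₀₁₀₁ : w 0 1 0 1 = 0 := by simpa [h₁₂₁₂, hμ] using e₁
  have h₀₂₀₂ : w 0 2 0 2 = 0 := by simpa [h₁₂₁₂, hμ] using e₂
  have h₀₁₀₂ : w 0 1 0 2 = 0 := by simpa [hdiag₁₂, hdiag₃₄, hμ] using htr' 1 2
  have h₀₁₁₂ : w 0 1 1 2 = 0 := by
    rw [h₁₂, neg_eq_zero]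
    simpa [hdiag₁₂, hdiag₃₄, hμ] using htr' 0 2
  have h₀₂₁₂ : w 0 2 1 2 = 0 := by
    rw [hflip]
    simpa [hdiag₁₂, hdiag₃₄, hμ] using htr' 0 1
  refine eq_zero_of_antisymm_of_lt h₁₂ h₃₄ fun p q r s hpq hrs => ?_
  fin_cases p <;> fin_cases q <;> fin_cases r <;> fin_cases s <;> simp at hpq hrs ⊢ <;>
    first | assumption | (rw [hpair]; assumption)

end ThreeDimensional

namespace IsWeylLike

variable {V : Type*} [AddCommGroup V] [Module ℝ V] {n : ℕ} {g : V → V → ℝ}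
  {W : V → V → V → V → ℝ} {b : Module.Basis (Fin n) ℝ V} {ε : Fin n → ℝ}
  (hW : IsWeylLike g W b ε)
include hW

def bilinForm : LinearMap.BilinForm ℝ V :=
  LinearMap.mk₂ ℝ g hW.2.2.2.1 hW.2.2.2.2.1
    (fun x y y' => by rw [hW.2.2.1 x, hW.2.2.2.1, hW.2.2.1 y, hW.2.2.1 y'])
    (fun r x y => by rw [hW.2.2.1 x, hW.2.2.2.2.1, hW.2.2.1 y, smul_eq_mul])

@[simp]
theorem bilinForm_apply (x y : V) : hW.bilinForm x y = g x y := rfl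

theorem bilinForm_isSymm : hW.bilinForm.IsSymm := ⟨fun x y => hW.2.2.1 x y⟩

theorem bilinForm_isOrthoᵢ_basis : hW.bilinForm.IsOrthoᵢ b := fun i j hij => by
  simp [Function.onFun, hW.2.1, hij]

theorem bilinForm_nondegenerate : hW.bilinForm.Nondegenerate := by
  refine (LinearMap.BilinForm.iIsOrtho.nondegenerate_iff_not_isOrtho_basis_self _ b
    hW.bilinForm_isOrthoᵢ_basis).2 fun i => ?_
  rcases hW.1 i with h | h <;> simp [hW.2.1, h]

theorem add₁ (a a' c d e : V) : W (a + a') c d e = W a c d e + W a' c d e := hW.2.2.2.2.2.1 ..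

theorem smul₁ (r : ℝ) (a c d e : V) : W (r • a) c d e = r * W a c d e := hW.2.2.2.2.2.2.1 ..

theorem antisymm₁₂ (a c d e : V) : W a c d e = -W c a d e := hW.2.2.2.2.2.2.2.1 ..

theorem antisymm₃₄ (a c d e : V) : W a c d e = -W a c e d := hW.2.2.2.2.2.2.2.2.1 ..

theorem pair_comm (a c d e : V) : W a c d e = W d e a c := hW.2.2.2.2.2.2.2.2.2.1 ..

theorem add₂ (a c c' d e : V) : W a (c + c') d e = W a c d e + W a c' d e := by
  rw [hW.antisymm₁₂, hW.add₁, hW.antisymm₁₂ a, hW.antisymm₁₂ a c', neg_add]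

theorem smul₂ (r : ℝ) (a c d e : V) : W a (r • c) d e = r * W a c d e := by
  rw [hW.antisymm₁₂, hW.smul₁, hW.antisymm₁₂ a, mul_neg]

theorem add₃ (a c d d' e : V) : W a c (d + d') e = W a c d e + W a c d' e := by
  rw [hW.pair_comm, hW.add₁, hW.pair_comm d, hW.pair_comm d']

theorem smul₃ (r : ℝ) (a c d e : V) : W a c (r • d) e = r * W a c d e := by
  rw [hW.pair_comm, hW.smul₁, hW.pair_comm d]

theorem add₄ (a c d e e' : V) : W a c d (e + e') = W a c d e + W a c d e' := by
  rw [hW.antisymm₃₄, hW.add₃, hW.antisymm₃₄ a c e, hW.antisymm₃₄ a c e', neg_add, neg_neg, neg_neg]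

theorem smul₄ (r : ℝ) (a c d e : V) : W a c d (r • e) = r * W a c d e := by
  rw [hW.antisymm₃₄, hW.smul₃, hW.antisymm₃₄ a c e, mul_neg, neg_neg]

def toLinearMap : V →ₗ[ℝ] V →ₗ[ℝ] V →ₗ[ℝ] V →ₗ[ℝ] ℝ :=
  LinearMap.mk₂ ℝ (fun a c => LinearMap.mk₂ ℝ (W a c) (hW.add₃ a c) (hW.smul₃ · a c)
      (hW.add₄ a c) (hW.smul₄ · a c))
    (fun a a' c => LinearMap.ext₂ (hW.add₁ a a' c)) (fun r a c => LinearMap.ext₂ (hW.smul₁ r a c))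
    (fun a c c' => LinearMap.ext₂ (hW.add₂ a c c')) (fun r a c => LinearMap.ext₂ (hW.smul₂ r a c))

@[simp]
theorem toLinearMap_apply (a c d e : V) : hW.toLinearMap a c d e = W a c d e := rfl

theorem apply_eq_zero_of_forall_apply_eq_zero {x : V} (hx : ∀ a c d, W a c d x = 0)
    {a c d e : V} (h : x = a ∨ x = c ∨ x = d ∨ x = e) : W a c d e = 0 := by
  rcases h with rfl | rfl | rfl | rfl
  · rw [hW.pair_comm, hW.antisymm₃₄, hx, neg_zero]
  · rw [hW.pair_comm, hx]
  · rw [hW.antisymm₃₄, hx, neg_zero]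
  · exact hx a c d

theorem sum_inv_mul_eq_zero_of_isOrthoᵢ {ι : Type*} [Fintype ι] {e : Module.Basis ι ℝ V}
    (he : hW.bilinForm.IsOrthoᵢ e) (a c : V) :
    ∑ i, (g (e i) (e i))⁻¹ * W (e i) a (e i) c = 0 := by
  have h := LinearMap.BilinForm.sum_inv_mul_eq_of_isOrthoᵢ hW.bilinForm_nondegenerate
    (LinearMap.mk₂ ℝ (fun x y => W x a y c) (hW.add₁ · · a · c) (hW.smul₁ · · a · c)
      (hW.add₃ · a · · c) (hW.smul₃ · · a · c)) he hW.bilinForm_isOrthoᵢ_basis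
  simp only [bilinForm_apply, LinearMap.mk₂_apply] at h
  obtain ⟨hε, hgb, -, -, -, -, -, -, -, -, -, htr⟩ := hW
  simp only [hgb, if_pos] at h
  rw [h, ← htr a c]
  refine Finset.sum_congr rfl fun i _ => ?_
  rcases hε i with h | h <;> simp [h]

end IsWeylLike

/-- if a Weyl-type tensor on an `n`-dimensional space annihilates `n-3`
orthonormal vectors, it vanishes. -/
theorem weyl_eq_zero_of_orthonormal_kernel
    {V : Type*} [AddCommGroup V] [Module ℝ V] {n : ℕ} (hn : 4 ≤ n)
    (g : V → V → ℝ) (W : V → V → V → V → ℝ)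
    (b : Module.Basis (Fin n) ℝ V) (ε : Fin n → ℝ)
    (hW : IsWeylLike g W b ε)
    (v : Fin (n - 3) → V) (δ : Fin (n - 3) → ℝ)
    (hδ : ∀ i, δ i = 1 ∨ δ i = -1)
    (horth : ∀ i j, g (v i) (v j) = if i = j then δ i else 0)
    (hker : ∀ i a c d, W a c d (v i) = 0) :
    ∀ a c d e, W a c d e = 0 := by
  have := b.finiteDimensional_of_finite
  have hv : hW.bilinForm.IsOrthoᵢ v := fun i j hij => by simp [Function.onFun, horth, hij]
  have hvv : ∀ i, hW.bilinForm (v i) (v i) ≠ 0 := fun i => by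
    rcases hδ i with h | h <;> simp [horth, h]
  obtain ⟨m, hm, e, he, hev⟩ :=
    hW.bilinForm.exists_orthogonal_basis_extending hW.bilinForm_isSymm hv hvv
  obtain rfl : m = 3 := by
    rw [Fintype.card_fin, Module.finrank_eq_card_basis b, Fintype.card_fin] at hm
    omega
  have hkernel : ∀ j {a c d x}, v j = a ∨ v j = c ∨ v j = d ∨ v j = x → W a c d x = 0 :=
    fun j => hW.apply_eq_zero_of_forall_apply_eq_zero (hker j)
  have hcore : ∀ p q r s, W (e (.inr p)) (e (.inr q)) (e (.inr r)) (e (.inr s)) = 0 := by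
    refine eq_zero_of_sum_mul_eq_zero_of_fin_three (μ := fun p => (g (e (.inr p)) (e (.inr p)))⁻¹)
      (fun p => inv_ne_zero ?_) (fun _ _ _ _ => hW.antisymm₁₂ ..) (fun _ _ _ _ => hW.antisymm₃₄ ..)
      (fun _ _ _ _ => hW.pair_comm ..) fun q s => ?_
    · exact he.not_isOrtho_basis_self_of_separatingLeft hW.bilinForm_nondegenerate.1 (.inr p)
    · simpa [Fintype.sum_sum_type, hev, hkernel _ (Or.inl rfl)] using
        hW.sum_inv_mul_eq_zero_of_isOrthoᵢ he (e (.inr q)) (e (.inr s))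
  have hbasis : ∀ i j k l, W (e i) (e j) (e k) (e l) = 0
    | .inr p, .inr q, .inr r, .inr s => hcore p q r s
    | .inl t, _, _, _ => hkernel t (by simp [hev])
    | _, .inl t, _, _ => hkernel t (by simp [hev])
    | _, _, .inl t, _ => hkernel t (by simp [hev])
    | _, _, _, .inl t => hkernel t (by simp [hev])
  have hL : hW.toLinearMap = 0 :=
    e.ext fun i => e.ext fun j => e.ext fun k => e.ext fun l => hbasis i j k l
  intro a c d x
  simpa using congr($hL a c d x)
end

section
/- Let V be an n-dimensional real vector space with a positive definite inner product g, and let W be a nonzero Weyl-type tensor on V. Then the kernel of W, namely ker W = {v ∈ V : W(a,b,c,v) = 0 for all a,b,c ∈ V}, has dimension at most n-4. -/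
open scoped RealInnerProductSpace

lemma Fintype.eq_or_eq_or_eq_of_card_le_three {ι : Type*} [Fintype ι] (hι : Fintype.card ι ≤ 3)
    {a b c : ι} (hab : a ≠ b) (hac : a ≠ c) (hbc : b ≠ c) (x : ι) : x = a ∨ x = b ∨ x = c := by
  classical
  by_contra! hx
  have h4 := Finset.card_le_univ {x, a, b, c}
  rw [Finset.card_insert_of_notMem (by simp [hx.1, hx.2.1, hx.2.2]),
    Finset.card_insert_of_notMem (by simp [hab, hac]),
    Finset.card_insert_of_notMem (by simp [hbc]), Finset.card_singleton] at h4
  omega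

namespace TraceFree

variable {ι : Type*} [Fintype ι] {w : ι → ι → ι → ι → ℝ}

lemma apply_eq_zero_of_pairwise_ne (hι : Fintype.card ι ≤ 3)
    (h₁₂ : ∀ i j l m, w i j l m = -w j i l m) (h₃₄ : ∀ i j l m, w i j l m = -w i j m l)
    (htr : ∀ j m, ∑ i, w i j i m = 0) {a b c : ι} (hab : a ≠ b) (hac : a ≠ c) (hbc : b ≠ c) :
    w a b a c = 0 := by
  have h := htr b c
  rwa [Fintype.sum_eq_single a] at h
  intro x hxa
  rcases Fintype.eq_or_eq_or_eq_of_card_le_three hι hab hac hbc x with rfl | rfl | rfl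
  · exact absurd rfl hxa
  · linarith [h₁₂ x x x c]
  · linarith [h₃₄ x b x x]

lemma apply_eq_zero_of_ne (hι : Fintype.card ι ≤ 3)
    (h₁₂ : ∀ i j l m, w i j l m = -w j i l m) (h₃₄ : ∀ i j l m, w i j l m = -w i j m l)
    (htr : ∀ j m, ∑ i, w i j i m = 0) {a b : ι} (hab : a ≠ b) : w a b a b = 0 := by
  have hsymm : ∀ x y, w y x y x = w x y x y := fun x y => by
    rw [h₁₂ y x y x, h₃₄ x y y x, neg_neg]
  by_cases hc : ∃ c, c ≠ a ∧ c ≠ b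
  · obtain ⟨c, hca, hcb⟩ := hc
    have row : ∀ {x y z : ι}, x ≠ y → x ≠ z → y ≠ z → w x z x z + w y z y z = 0 := by
      intro x y z hxy hxz hyz
      have h := htr z z
      rwa [Fintype.sum_eq_add x y hxy] at h
      rintro t ⟨htx, hty⟩
      rcases Fintype.eq_or_eq_or_eq_of_card_le_three hι hxy hxz hyz t with rfl | rfl | rfl
      · exact absurd rfl htx
      · exact absurd rfl hty
      · linarith [h₁₂ t t t t]
    linarith [row hca.symm hab hcb, row hcb.symm hab.symm hca, row hab hca.symm hcb.symm,
      hsymm a b, hsymm a c, hsymm b c]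
  · push Not at hc
    have h := htr b b
    rwa [Fintype.sum_eq_single a] at h
    intro x hxa
    rw [hc x hxa]
    linarith [h₁₂ b b b b]

lemma apply_eq_zero_of_card_le_three (hι : Fintype.card ι ≤ 3)
    (h₁₂ : ∀ i j l m, w i j l m = -w j i l m) (h₃₄ : ∀ i j l m, w i j l m = -w i j m l)
    (htr : ∀ j m, ∑ i, w i j i m = 0) (i j l m : ι) : w i j l m = 0 := by
  have key : ∀ {a b c}, a ≠ b → a ≠ c → w a b a c = 0 := fun {a b c} hab hac => by
    rcases eq_or_ne b c with rfl | hbc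
    · exact apply_eq_zero_of_ne hι h₁₂ h₃₄ htr hab
    · exact apply_eq_zero_of_pairwise_ne hι h₁₂ h₃₄ htr hab hac hbc
  rcases eq_or_ne i j with rfl | hij
  · linarith [h₁₂ i i l m]
  rcases eq_or_ne l m with rfl | hlm
  · linarith [h₃₄ i j l l]
  -- with at most three indices available, `{i, j}` meets `{l, m}`
  rcases eq_or_ne i l with rfl | hil
  · exact key hij hlm
  rcases eq_or_ne i m with rfl | him
  · rw [h₃₄, key hij hil, neg_zero]
  rcases eq_or_ne j l with rfl | hjl
  · rw [h₁₂, key hij.symm hlm, neg_zero]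
  rcases eq_or_ne j m with rfl | hjm
  · rw [h₁₂, h₃₄, key hij.symm hjl, neg_neg]
  rcases Fintype.eq_or_eq_or_eq_of_card_le_three hι hij hil hjl m with h | h | h
  exacts [absurd h.symm him, absurd h.symm hjm, absurd h.symm hlm]

end TraceFree

namespace LinearMap

variable {R M N P : Type*} [CommRing R] [AddCommGroup M] [Module R M] [AddCommGroup N]
  [Module R N] [AddCommGroup P] [Module R P]

def compl₁₂₃₄ (T : M →ₗ[R] M →ₗ[R] M →ₗ[R] M →ₗ[R] P) (ψ : N →ₗ[R] M) :
    N →ₗ[R] N →ₗ[R] N →ₗ[R] N →ₗ[R] P :=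
  (T.compl₁₂ ψ ψ).compr₂ (llcomp R N (M →ₗ[R] P) (N →ₗ[R] P) (lcomp R P ψ) ∘ₗ lcomp R _ ψ)

@[simp]
lemma compl₁₂₃₄_apply (T : M →ₗ[R] M →ₗ[R] M →ₗ[R] M →ₗ[R] P) (ψ : N →ₗ[R] M) (a c d e : N) :
    T.compl₁₂₃₄ ψ a c d e = T (ψ a) (ψ c) (ψ d) (ψ e) :=
  rfl

lemma eq_zero_of_card_le_three {M ι : Type*} [AddCommGroup M] [Module ℝ M] [Fintype ι]
    (T : M →ₗ[ℝ] M →ₗ[ℝ] M →ₗ[ℝ] M →ₗ[ℝ] ℝ) (e : Module.Basis ι ℝ M) (hι : Fintype.card ι ≤ 3)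
    (h₁₂ : ∀ a c d f, T a c d f = -T c a d f) (h₃₄ : ∀ a c d f, T a c d f = -T a c f d)
    (htr : ∀ a c, ∑ i, T (e i) a (e i) c = 0) : T = 0 :=
  e.ext fun i => e.ext fun j => e.ext fun l => e.ext fun m =>
    TraceFree.apply_eq_zero_of_card_le_three (w := fun i j l m => T (e i) (e j) (e l) (e m)) hι
      (fun _ _ _ _ => h₁₂ _ _ _ _) (fun _ _ _ _ => h₃₄ _ _ _ _) (fun _ _ => htr _ _) i j l m

end LinearMap

section ParsevalFrame

variable {E ι κ : Type*} [NormedAddCommGroup E] [InnerProductSpace ℝ E] [Fintype ι] [Fintype κ]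

def IsParsevalFrame (f : ι → E) : Prop :=
  ∀ x, ∑ i, ⟪f i, x⟫ • f i = x

lemma OrthonormalBasis.isParsevalFrame (b : OrthonormalBasis ι ℝ E) : IsParsevalFrame b :=
  b.sum_repr'

lemma IsParsevalFrame.orthogonalProjectionOnto {f : ι → E} (hf : IsParsevalFrame f)
    (K : Submodule ℝ E) [K.HasOrthogonalProjection] :
    IsParsevalFrame fun i => K.orthogonalProjectionOnto (f i) := by
  intro x
  simp only [Submodule.inner_orthogonalProjectionOnto_eq_of_mem_right, ← map_smul, ← map_sum]
  rw [hf, Submodule.orthogonalProjectionOnto_mem_subspace_eq_self]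

lemma IsParsevalFrame.sum_apply_self_eq {f : ι → E} {f' : κ → E} (hf : IsParsevalFrame f)
    (hf' : IsParsevalFrame f') (B : E →ₗ[ℝ] E →ₗ[ℝ] ℝ) :
    ∑ i, B (f i) (f i) = ∑ k, B (f' k) (f' k) :=
  calc ∑ i, B (f i) (f i) = ∑ i, B (∑ k, ⟪f' k, f i⟫ • f' k) (f i) :=
      Finset.sum_congr rfl fun i _ => by rw [hf' (f i)]
    _ = ∑ k, B (f' k) (∑ i, ⟪f i, f' k⟫ • f i) := by
      simp only [map_sum, map_smul, LinearMap.sum_apply, LinearMap.smul_apply, real_inner_comm]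
      exact Finset.sum_comm
    _ = ∑ k, B (f' k) (f' k) := Finset.sum_congr rfl fun k _ => by rw [hf (f' k)]

end ParsevalFrame

namespace LinearMap

variable {E : Type*} [NormedAddCommGroup E] [InnerProductSpace ℝ E]

lemma apply_eq_apply_starProjection_orthogonal
    (T : E →ₗ[ℝ] E →ₗ[ℝ] E →ₗ[ℝ] E →ₗ[ℝ] ℝ)
    (h₁₂ : ∀ a c d e, T a c d e = -T c a d e) (h₃₄ : ∀ a c d e, T a c d e = -T a c e d)
    (hpair : ∀ a c d e, T a c d e = T d e a c) (K : Submodule ℝ E) [K.HasOrthogonalProjection]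
    (hK : ∀ k ∈ K, ∀ a c d, T a c d k = 0) (a c d e : E) :
    T a c d e = T (Kᗮ.starProjection a) (Kᗮ.starProjection c) (Kᗮ.starProjection d)
      (Kᗮ.starProjection e) := by
  have h₃ : ∀ k ∈ K, ∀ a c e, T a c k e = 0 := fun k hk a c e => by
    rw [h₃₄, hK k hk, neg_zero]
  have h₁ : ∀ k ∈ K, ∀ c d e, T k c d e = 0 := fun k hk c d e => by
    rw [hpair, h₃ k hk]
  have h₂ : ∀ k ∈ K, ∀ a d e, T a k d e = 0 := fun k hk a d e => by
    rw [h₁₂, h₁ k hk, neg_zero]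
  have hP : ∀ x, K.starProjection x ∈ K := K.starProjection_apply_mem
  conv_lhs => rw [← K.starProjection_add_starProjection_orthogonal a,
    ← K.starProjection_add_starProjection_orthogonal c,
    ← K.starProjection_add_starProjection_orthogonal d,
    ← K.starProjection_add_starProjection_orthogonal e]
  simp only [map_add, LinearMap.add_apply, h₁ _ (hP _), h₂ _ (hP _), h₃ _ (hP _), hK _ (hP _),
    zero_add]

theorem eq_zero_of_finrank_orthogonal_le_three [FiniteDimensional ℝ E] {ι : Type*}
    [Fintype ι] {f : ι → E} (hf : IsParsevalFrame f) (T : E →ₗ[ℝ] E →ₗ[ℝ] E →ₗ[ℝ] E →ₗ[ℝ] ℝ)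
    (h₁₂ : ∀ a c d e, T a c d e = -T c a d e) (h₃₄ : ∀ a c d e, T a c d e = -T a c e d)
    (hpair : ∀ a c d e, T a c d e = T d e a c) (htr : ∀ a c, ∑ i, T (f i) a (f i) c = 0)
    (K : Submodule ℝ E) (hK : ∀ k ∈ K, ∀ a c d, T a c d k = 0)
    (hdim : Module.finrank ℝ Kᗮ ≤ 3) : T = 0 := by
  set P := Kᗮ.orthogonalProjectionOnto
  set TK := T.compl₁₂₃₄ Kᗮ.subtype
  have hT : ∀ a c d e, T a c d e = TK (P a) (P c) (P d) (P e) :=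
    T.apply_eq_apply_starProjection_orthogonal h₁₂ h₃₄ hpair K hK
  have hTK : TK = 0 := by
    let e := stdOrthonormalBasis ℝ Kᗮ
    refine TK.eq_zero_of_card_le_three e.toBasis (by simpa using hdim) (fun _ _ _ _ => h₁₂ _ _ _ _)
      (fun _ _ _ _ => h₃₄ _ _ _ _) fun a c => ?_
    calc ∑ i, TK (e.toBasis i) a (e.toBasis i) c
        = ∑ i, TK (P (f i)) a (P (f i)) c :=
          -- the bilinear form `x y ↦ TK x a y c`
          e.isParsevalFrame.sum_apply_self_eq (hf.orthogonalProjectionOnto Kᗮ)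
            ((TK.flip a).compr₂ (applyₗ c))
      _ = ∑ i, T (f i) a (f i) c := by
          simp only [hT (f _), P, Submodule.orthogonalProjectionOnto_mem_subspace_eq_self]
      _ = 0 := htr a c
  ext a c d e
  rw [hT, hTK]
  rfl

end LinearMap

namespace IsWeylLike

variable {V : Type*} [AddCommGroup V] [Module ℝ V] {n : ℕ} {g : V → V → ℝ}
  {W : V → V → V → V → ℝ} {b : Module.Basis (Fin n) ℝ V} {ε : Fin n → ℝ}

lemma exists_linearMap (hW : IsWeylLike g W b ε) :
    ∃ T : V →ₗ[ℝ] V →ₗ[ℝ] V →ₗ[ℝ] V →ₗ[ℝ] ℝ, ∀ a c d e, T a c d e = W a c d e := by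
  obtain ⟨-, -, -, -, -, add₁, smul₁, h₁₂, h₃₄, hpair, -, -⟩ := hW
  have add₃ : ∀ a c d d' e, W a c (d + d') e = W a c d e + W a c d' e := fun a c d d' e => by
    rw [hpair, add₁, hpair d, hpair d']
  have smul₃ : ∀ (r : ℝ) a c d e, W a c (r • d) e = r * W a c d e := fun r a c d e => by
    rw [hpair, smul₁, hpair d]
  refine ⟨LinearMap.mk₂ ℝ
    (fun a c => LinearMap.mk₂ ℝ (fun d e => W a c d e) (add₃ a c) (smul₃ · a c)
      (fun d e e' => by rw [h₃₄, add₃, h₃₄ a c e d, h₃₄ a c e' d]; ring)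
      (fun r d e => by rw [h₃₄, smul₃, h₃₄ a c d e, smul_eq_mul]; ring))
    (fun a a' c => LinearMap.ext₂ fun d e => add₁ a a' c d e)
    (fun r a c => LinearMap.ext₂ fun d e => smul₁ r a c d e)
    (fun a c c' => LinearMap.ext₂ fun d e => by
      simp only [LinearMap.mk₂_apply, LinearMap.add_apply]
      rw [h₁₂, add₁, h₁₂ c, h₁₂ c']; ring)
    (fun r a c => LinearMap.ext₂ fun d e => by
      simp only [LinearMap.mk₂_apply, LinearMap.smul_apply, smul_eq_mul]
      rw [h₁₂, smul₁, h₁₂ c]; ring), fun _ _ _ _ => rfl⟩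

theorem apply_eq_zero_of_le_finrank_span_add_three (hW : IsWeylLike g W b ε) (hpos : ∀ i, ε i = 1)
    {ι : Type*} (v : ι → V) (hv : ∀ i a c d, W a c d (v i) = 0)
    (hdim : n ≤ Module.finrank ℝ (Submodule.span ℝ (Set.range v)) + 3) (a c d e : V) :
    W a c d e = 0 := by
  obtain ⟨T, hTW⟩ := hW.exists_linearMap
  obtain ⟨-, -, -, -, -, -, -, h₁₂, h₃₄, hpair, -, htr⟩ := hW
  let e₀ := EuclideanSpace.basisFun (Fin n) ℝ
  let φ : V ≃ₗ[ℝ] EuclideanSpace ℝ (Fin n) := b.equiv e₀.toBasis (Equiv.refl _)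
  set T' := T.compl₁₂₃₄ φ.symm.toLinearMap
  have hT' : ∀ a c d e, T' a c d e = W (φ.symm a) (φ.symm c) (φ.symm d) (φ.symm e) :=
    fun _ _ _ _ => hTW _ _ _ _
  have hφ : ∀ i, φ.symm (e₀ i) = b i := fun i => by
    rw [Module.Basis.equiv_symm, ← e₀.coe_toBasis, Module.Basis.equiv_apply]
    rfl
  set K := Submodule.span ℝ (Set.range (φ ∘ v)) with hK
  have hdim' : Module.finrank ℝ Kᗮ ≤ 3 := by
    have hKv : Module.finrank ℝ K = Module.finrank ℝ (Submodule.span ℝ (Set.range v)) := by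
      rw [hK, Set.range_comp, Submodule.span_image_linearEquiv, LinearEquiv.finrank_map_eq]
    have := K.finrank_add_finrank_orthogonal
    rw [finrank_euclideanSpace_fin] at this
    omega
  have hT'0 : T' = 0 := by
    exact T'.eq_zero_of_finrank_orthogonal_le_three e₀.isParsevalFrame
      (fun _ _ _ _ => by simp only [hT']; exact h₁₂ _ _ _ _)
      (fun _ _ _ _ => by simp only [hT']; exact h₃₄ _ _ _ _)
      (fun _ _ _ _ => by simp only [hT']; exact hpair _ _ _ _)
      (fun a c => by simpa [hT', hφ, hpos] using htr (φ.symm a) (φ.symm c)) K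
      (fun k hk a c d => (Submodule.span_le (p := LinearMap.ker (T' a c d))).2
        (Set.range_subset_iff.2 fun i => by simpa [hT'] using hv i _ _ _) hk) hdim'
  simpa [hT'] using congr($hT'0 (φ a) (φ c) (φ d) (φ e))

end IsWeylLike

theorem kernel_dim_le_of_weylLike_riemannian_general
    {V : Type*} [AddCommGroup V] [Module ℝ V] {n : ℕ}
    (g : V → V → ℝ) (W : V → V → V → V → ℝ)
    (b : Module.Basis (Fin n) ℝ V) (ε : Fin n → ℝ)
    (hW : IsWeylLike g W b ε)
    (hpos : ∀ i, ε i = 1)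
    (hne : ∃ a c d e, W a c d e ≠ 0) :
    ∀ (m : ℕ) (v : Fin m → V), LinearIndependent ℝ v →
      (∀ i a c d, W a c d (v i) = 0) → m ≤ n - 4 := by
  intro m v hv hker
  by_contra! hm
  obtain ⟨a, c, d, e, hW0⟩ := hne
  refine hW0 (hW.apply_eq_zero_of_le_finrank_span_add_three hpos v hker ?_ a c d e)
  rw [finrank_span_eq_card hv, Fintype.card_fin]
  omega

/-- in Riemannian signature, the kernel of a nonzero Weyl-type tensor has
dimension at most `n - 4` (stated via linearly independent families in the kernel). -/
theorem kernel_dim_le_of_weylLike_riemannian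
    {V : Type*} [AddCommGroup V] [Module ℝ V] {n : ℕ} (hn : 4 ≤ n)
    (g : V → V → ℝ) (W : V → V → V → V → ℝ)
    (b : Module.Basis (Fin n) ℝ V) (ε : Fin n → ℝ)
    (hW : IsWeylLike g W b ε)
    (hpos : ∀ i, ε i = 1)
    (hne : ∃ a c d e, W a c d e ≠ 0) :
    ∀ (m : ℕ) (v : Fin m → V), LinearIndependent ℝ v →
      (∀ i a c d, W a c d (v i) = 0) → m ≤ n - 4 :=
  kernel_dim_le_of_weylLike_riemannian_general g W b ε hW hpos hne
end

section
/- Let V be an n-dimensional real vector space with a nondegenerate symmetric bilinear form g of Lorentzian signature (1,n-1), and let W be a nonzero Weyl-type tensor on V. Then dim ker W ≤ n-3, where ker W = {v ∈ V : W(a,b,c,v) = 0 for all a,b,c}. -/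
/-!
Let `K` be the span of the given kernel vectors. By the symmetries of `W`, vectors of `K` may be
dropped from any slot, so if `V ⧸ K` has dimension at most two then, for covectors `A, B`
dual to lifts `u₀, u₁` of a basis of `V ⧸ K`, `W = λ (A ∧ B) ⊗ (A ∧ B)` with
`λ = W u₀ u₁ u₀ u₁` (and `W = 0` in dimension at most one). For `W ≠ 0` trace-freeness then
says that `A` and `B` are orthogonal null covectors of the Lorentzian form. They are linearly
independent, whereas in signature `(1, n-1)` two orthogonal null vectors are proportional.
-/

section Quotient

variable {𝕜 V : Type*} [Field 𝕜] [AddCommGroup V] [Module 𝕜 V]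

theorem Submodule.exists_sub_smul_mem_of_finrank_quotient_le_one [FiniteDimensional 𝕜 V]
    (K : Submodule 𝕜 V) (h : Module.finrank 𝕜 (V ⧸ K) ≤ 1) :
    ∃ u : V, ∀ x : V, ∃ t : 𝕜, x - t • u ∈ K := by
  obtain ⟨ū, hū⟩ := finrank_le_one_iff.mp h
  obtain ⟨u, rfl⟩ := K.mkQ_surjective ū
  refine ⟨u, fun x => ?_⟩
  obtain ⟨t, ht⟩ := hū (K.mkQ x)
  exact ⟨t, (Submodule.Quotient.eq K).mp (by simpa using ht.symm)⟩

theorem Submodule.exists_dual_pair_of_finrank_quotient_eq_two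
    (K : Submodule 𝕜 V) (h : Module.finrank 𝕜 (V ⧸ K) = 2) :
    ∃ (u₀ u₁ : V) (A B : V →ₗ[𝕜] 𝕜), A u₀ = 1 ∧ A u₁ = 0 ∧ B u₀ = 0 ∧ B u₁ = 1 ∧
      ∀ x, x - (A x • u₀ + B x • u₁) ∈ K := by
  have : Module.Finite 𝕜 (V ⧸ K) := Module.finite_of_finrank_eq_succ h
  let c := Module.finBasisOfFinrankEq 𝕜 (V ⧸ K) h
  obtain ⟨u₀, hu₀⟩ := K.mkQ_surjective (c 0)
  obtain ⟨u₁, hu₁⟩ := K.mkQ_surjective (c 1)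
  refine ⟨u₀, u₁, c.coord 0 ∘ₗ K.mkQ, c.coord 1 ∘ₗ K.mkQ, ?_, ?_, ?_, ?_, fun x => ?_⟩
  · simp [hu₀]
  · simp [hu₁]
  · simp [hu₀]
  · simp [hu₁]
  · refine (Submodule.Quotient.eq K).mp ?_
    have := c.sum_repr (K.mkQ x)
    rw [Fin.sum_univ_two] at this
    simpa [← hu₀, ← hu₁] using this.symm

end Quotient

/-- A symmetric bilinear form on `Λ²V`, written as a function of four vectors. -/
structure IsSymmBivectorForm {V : Type*} [AddCommGroup V] [Module ℝ V]
    (W : V → V → V → V → ℝ) : Prop where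
  add_left : ∀ a a' c d e, W (a + a') c d e = W a c d e + W a' c d e
  smul_left : ∀ (r : ℝ) a c d e, W (r • a) c d e = r * W a c d e
  antisymm_left : ∀ a c d e, W a c d e = -W c a d e
  pair_symm : ∀ a c d e, W a c d e = W d e a c

theorem IsWeylLike.isSymmBivectorForm {V : Type*} [AddCommGroup V] [Module ℝ V] {n : ℕ}
    {g : V → V → ℝ} {W : V → V → V → V → ℝ} {b : Module.Basis (Fin n) ℝ V} {ε : Fin n → ℝ}
    (hW : IsWeylLike g W b ε) : IsSymmBivectorForm W :=
  ⟨hW.2.2.2.2.2.1, hW.2.2.2.2.2.2.1, hW.2.2.2.2.2.2.2.1, hW.2.2.2.2.2.2.2.2.2.1⟩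

def wedge {V : Type*} (A B : V → ℝ) (x y : V) : ℝ := A x * B y - B x * A y

namespace IsSymmBivectorForm

variable {V : Type*} [AddCommGroup V] [Module ℝ V] {W : V → V → V → V → ℝ}

theorem antisymm_right (hW : IsSymmBivectorForm W) (a c d e : V) :
    W a c d e = -W a c e d := by
  rw [hW.pair_symm, hW.antisymm_left, hW.pair_symm e]

theorem apply_self_left (hW : IsSymmBivectorForm W) (a d e : V) : W a a d e = 0 := by
  linarith [hW.antisymm_left a a d e]

theorem apply_zero_left (hW : IsSymmBivectorForm W) (c d e : V) : W 0 c d e = 0 := by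
  simpa using hW.smul_left 0 0 c d e

theorem apply_smul_add_smul (hW : IsSymmBivectorForm W) (α β γ δ : ℝ) (u w d e : V) :
    W (α • u + β • w) (γ • u + δ • w) d e = (α * δ - β * γ) * W u w d e := by
  set y := γ • u + δ • w
  have hy : ∀ x, W x y d e = γ * W x u d e + δ * W x w d e := fun x => by
    rw [hW.antisymm_left, hW.add_left, hW.smul_left, hW.smul_left,
      hW.antisymm_left u, hW.antisymm_left w]
    ring
  rw [hW.add_left, hW.smul_left, hW.smul_left, hy, hy, hW.apply_self_left, hW.apply_self_left,
    hW.antisymm_left w u]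
  ring

theorem left_eq_zero_of_forall_right (hW : IsSymmBivectorForm W) {x : V}
    (hx : ∀ a c d, W a c d x = 0) (c d e : V) : W x c d e = 0 := by
  rw [hW.pair_symm, hW.antisymm_right, hx, neg_zero]

theorem apply_eq_zero_of_mem_span (hW : IsSymmBivectorForm W) {s : Set V}
    (hs : ∀ x ∈ s, ∀ c d e, W x c d e = 0) :
    ∀ x ∈ Submodule.span ℝ s, ∀ c d e, W x c d e = 0 := by
  intro x hx c d e
  induction hx using Submodule.span_induction with
  | mem x hx => exact hs x hx c d e
  | zero => exact hW.apply_zero_left c d e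
  | add x y _ _ hx hy => rw [hW.add_left, hx, hy, add_zero]
  | smul r x _ hx => rw [hW.smul_left, hx, mul_zero]

variable {K : Submodule ℝ V}

theorem apply_left_eq_of_sub_mem (hW : IsSymmBivectorForm W)
    (hK : ∀ k ∈ K, ∀ c d e, W k c d e = 0) {x y : V} (h : x - y ∈ K) (c d e : V) :
    W x c d e = W y c d e := by
  rw [← add_sub_cancel y x, hW.add_left, hK _ h, add_zero]

theorem eq_wedge_mul_wedge (hW : IsSymmBivectorForm W) (hK : ∀ k ∈ K, ∀ c d e, W k c d e = 0)
    {u₀ u₁ : V} {A B : V → ℝ} (hdec : ∀ x, x - (A x • u₀ + B x • u₁) ∈ K) (a c d e : V) :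
    W a c d e = wedge A B a c * (wedge A B d e * W u₀ u₁ u₀ u₁) := by
  have hpair : ∀ a c d e, W a c d e = wedge A B a c * W u₀ u₁ d e := fun a c d e => by
    rw [hW.apply_left_eq_of_sub_mem hK (hdec a), hW.antisymm_left _ c,
      hW.apply_left_eq_of_sub_mem hK (hdec c), ← hW.antisymm_left, hW.apply_smul_add_smul, wedge]
  rw [hpair, hW.pair_symm u₀, hpair]

theorem eq_zero_of_sub_smul_mem (hW : IsSymmBivectorForm W)
    (hK : ∀ k ∈ K, ∀ c d e, W k c d e = 0) {u : V} (hdec : ∀ x, ∃ t : ℝ, x - t • u ∈ K)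
    (a c d e : V) : W a c d e = 0 := by
  -- `eq_wedge_mul_wedge` needs no linearity of the coefficients, and `wedge A 0 = 0`.
  choose A hA using hdec
  rw [hW.eq_wedge_mul_wedge hK (u₁ := 0) (B := 0) (fun x => by simpa using hA x)]
  simp [wedge]

end IsSymmBivectorForm

section Lorentzian

variable {ι : Type*} [Fintype ι] {ε : ι → ℝ} {i₀ : ι}

theorem eq_zero_of_isotropic_of_apply_eq_zero (hε : ∀ i ≠ i₀, 0 < ε i) {p : ι → ℝ}
    (hp : ∑ i, ε i * (p i * p i) = 0) (hp₀ : p i₀ = 0) : p = 0 := by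
  have hnonneg : ∀ i ∈ Finset.univ, 0 ≤ ε i * (p i * p i) := fun i _ => by
    rcases eq_or_ne i i₀ with rfl | hi
    · simp [hp₀]
    · exact mul_nonneg (hε i hi).le (mul_self_nonneg _)
  funext i
  have hi_zero := (Finset.sum_eq_zero_iff_of_nonneg hnonneg).mp hp i (Finset.mem_univ i)
  rcases eq_or_ne i i₀ with rfl | hi
  · exact hp₀
  · exact mul_self_eq_zero.mp ((mul_eq_zero.mp hi_zero).resolve_left (hε i hi).ne')

theorem not_linearIndependent_of_isotropic (hε : ∀ i ≠ i₀, 0 < ε i) {p q : ι → ℝ}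
    (hp : ∑ i, ε i * (p i * p i) = 0) (hq : ∑ i, ε i * (q i * q i) = 0)
    (hpq : ∑ i, ε i * (p i * q i) = 0) : ¬ LinearIndependent ℝ ![p, q] := by
  intro hli
  -- `q i₀ • p - p i₀ • q` is isotropic with vanishing `i₀`-coordinate, hence zero.
  set r := q i₀ • p - p i₀ • q
  have hr : ∑ i, ε i * (r i * r i) = 0 := calc
    ∑ i, ε i * (r i * r i) = q i₀ ^ 2 * ∑ i, ε i * (p i * p i)
        - 2 * (p i₀ * q i₀) * ∑ i, ε i * (p i * q i) + p i₀ ^ 2 * ∑ i, ε i * (q i * q i) := by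
      simp only [Finset.mul_sum, ← Finset.sum_sub_distrib, ← Finset.sum_add_distrib]
      refine Finset.sum_congr rfl fun i _ => ?_
      simp only [r, Pi.sub_apply, Pi.smul_apply, smul_eq_mul]
      ring
    _ = 0 := by rw [hp, hq, hpq]; ring
  have hr₀ : r = 0 := eq_zero_of_isotropic_of_apply_eq_zero hε hr (by simp [r, mul_comm])
  obtain ⟨-, hp₀⟩ := LinearIndependent.pair_iff.mp hli (q i₀) (-p i₀)
    (by simpa [r, sub_eq_add_neg] using hr₀)
  exact hli.ne_zero 0 (eq_zero_of_isotropic_of_apply_eq_zero hε hp (neg_eq_zero.mp hp₀))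

variable {V : Type*}

theorem sum_wedge_mul_wedge_eq_zero {W : V → V → V → V → ℝ} {f : ι → V} {A B : V → ℝ}
    {u₀ u₁ : V} (hbase : W u₀ u₁ u₀ u₁ ≠ 0)
    (hW : ∀ a c d e, W a c d e = wedge A B a c * (wedge A B d e * W u₀ u₁ u₀ u₁))
    (htr : ∀ x y, ∑ i, ε i * W (f i) x (f i) y = 0) (x y : V) :
    ∑ i, ε i * (wedge A B (f i) x * wedge A B (f i) y) = 0 := by
  refine (mul_eq_zero.mp ?_).resolve_right hbase
  rw [← htr x y, Finset.sum_mul]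
  exact Finset.sum_congr rfl fun i _ => by rw [hW (f i) x (f i) y]; ring

variable [AddCommGroup V] [Module ℝ V]

theorem not_forall_sum_wedge_mul_wedge_eq_zero (b : Module.Basis ι ℝ V)
    (hε : ∀ i ≠ i₀, 0 < ε i) {u₀ u₁ : V} {A B : V →ₗ[ℝ] ℝ}
    (hA₀ : A u₀ = 1) (hA₁ : A u₁ = 0) (hB₀ : B u₀ = 0) (hB₁ : B u₁ = 1) :
    ¬ ∀ x y, ∑ i, ε i * (wedge A B (b i) x * wedge A B (b i) y) = 0 := by
  intro h
  have hw₀ : ∀ x, wedge A B x u₀ = -B x := fun x => by simp [wedge, hA₀, hB₀]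
  have hw₁ : ∀ x, wedge A B x u₁ = A x := fun x => by simp [wedge, hA₁, hB₁]
  refine not_linearIndependent_of_isotropic hε (p := fun i => A (b i)) (q := fun i => B (b i))
    (by simpa [hw₁] using h u₁ u₁) (by simpa [hw₀] using h u₀ u₀)
    (by simpa [hw₀, hw₁] using h u₁ u₀) (LinearIndependent.pair_iff.mpr fun s t hst => ?_)
  have hst' : s • A + t • B = 0 := b.ext fun i => by simpa using congr_fun hst i
  exact ⟨by simpa [hA₀, hB₀] using LinearMap.congr_fun hst' u₀,
    by simpa [hA₁, hB₁] using LinearMap.congr_fun hst' u₁⟩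

end Lorentzian

theorem kernel_dim_le_of_weylLike_lorentzian_general
    {V : Type*} [AddCommGroup V] [Module ℝ V] {n : ℕ}
    (g : V → V → ℝ) (W : V → V → V → V → ℝ)
    (b : Module.Basis (Fin n) ℝ V) (ε : Fin n → ℝ)
    (hW : IsWeylLike g W b ε)
    (hlor : ∃! i, ε i = -1)
    (hne : ∃ a c d e, W a c d e ≠ 0) :
    ∀ (m : ℕ) (v : Fin m → V), LinearIndependent ℝ v →
      (∀ i a c d, W a c d (v i) = 0) → m ≤ n - 3 := by
  intro m v hv hker
  have hS := hW.isSymmBivectorForm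
  obtain ⟨hε, -, -, -, -, -, -, -, -, -, -, htr⟩ := hW
  obtain ⟨i₀, -, hi₀⟩ := hlor
  have hpos : ∀ i ≠ i₀, 0 < ε i := fun i hi => by
    linarith [(hε i).resolve_right fun h => hi (hi₀ i h)]
  have : FiniteDimensional ℝ V := Module.Finite.of_basis b
  set K := Submodule.span ℝ (Set.range v)
  have hK : ∀ k ∈ K, ∀ c d e, W k c d e = 0 := hS.apply_eq_zero_of_mem_span <| by
    rintro _ ⟨i, rfl⟩
    exact hS.left_eq_zero_of_forall_right (hker i)
  have hdim := K.finrank_quotient_add_finrank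
  rw [finrank_span_eq_card hv, Module.finrank_eq_card_basis b, Fintype.card_fin,
    Fintype.card_fin] at hdim
  obtain ⟨a, c, d, e, hWne⟩ := hne
  by_contra! hm
  rcases (by omega : Module.finrank ℝ (V ⧸ K) ≤ 1 ∨ Module.finrank ℝ (V ⧸ K) = 2) with h1 | h2
  · obtain ⟨u, hu⟩ := K.exists_sub_smul_mem_of_finrank_quotient_le_one h1
    exact hWne (hS.eq_zero_of_sub_smul_mem hK hu a c d e)
  · obtain ⟨u₀, u₁, A, B, hA₀, hA₁, hB₀, hB₁, hdec⟩ :=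
      K.exists_dual_pair_of_finrank_quotient_eq_two h2
    have hform := hS.eq_wedge_mul_wedge hK hdec
    have hbase : W u₀ u₁ u₀ u₁ ≠ 0 := fun h0 => hWne (by rw [hform, h0, mul_zero, mul_zero])
    exact not_forall_sum_wedge_mul_wedge_eq_zero b hpos hA₀ hA₁ hB₀ hB₁
      (sum_wedge_mul_wedge_eq_zero hbase hform htr)

/-- in Lorentzian signature `(1, n-1)`, the kernel of a nonzero Weyl-type
tensor has dimension at most `n - 3`. -/
theorem kernel_dim_le_of_weylLike_lorentzian
    {V : Type*} [AddCommGroup V] [Module ℝ V] {n : ℕ} (hn : 4 ≤ n)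
    (g : V → V → ℝ) (W : V → V → V → V → ℝ)
    (b : Module.Basis (Fin n) ℝ V) (ε : Fin n → ℝ)
    (hW : IsWeylLike g W b ε)
    (hlor : ∃! i, ε i = -1)
    (hne : ∃ a c d e, W a c d e ≠ 0) :
    ∀ (m : ℕ) (v : Fin m → V), LinearIndependent ℝ v →
      (∀ i a c d, W a c d (v i) = 0) → m ≤ n - 3 :=
  kernel_dim_le_of_weylLike_lorentzian_general g W b ε hW hlor hne
end

section
/- Let V be an n-dimensional real vector space with a nondegenerate symmetric bilinear form g of signature (p,q) with 2 ≤ p ≤ q, and let W be a nonzero Weyl-type tensor on V. Then dim ker W ≤ n-2. -/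
/-!
Antisymmetry of `W` in its last two slots makes each `(d, e) ↦ W a c d e` an alternating bilinear
form whose radical contains `ker W`. An alternating form is skew, so it also vanishes when its
first argument lies in `ker W`; if `ker W` had codimension at most one, every pair of vectors would
be proportional modulo `ker W` and the form would vanish identically. Hence `W ≠ 0` forces
`dim ker W ≤ n - 2`.
-/

open Module

section Alternating

variable {𝕜 V M : Type*} [Field 𝕜] [AddCommGroup V] [Module 𝕜 V] [FiniteDimensional 𝕜 V]
  [AddCommGroup M] [Module 𝕜 M]

theorem Submodule.exists_sub_smul_mem_of_finrank_le_finrank_add_one {K : Submodule 𝕜 V}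
    (hK : finrank 𝕜 V ≤ finrank 𝕜 K + 1) : ∃ u : V, ∀ x : V, ∃ c : 𝕜, x - c • u ∈ K := by
  have hQ : finrank 𝕜 (V ⧸ K) ≤ 1 := by
    have := K.finrank_quotient_add_finrank
    omega
  obtain ⟨ū, hū⟩ := finrank_le_one_iff.mp hQ
  obtain ⟨u, rfl⟩ := K.mkQ_surjective ū
  refine ⟨u, fun x => ?_⟩
  obtain ⟨c, hc⟩ := hū (K.mkQ x)
  exact ⟨c, (Submodule.Quotient.eq K).mp (by simpa using hc.symm)⟩

theorem LinearMap.IsAlt.eq_zero_of_finrank_le {B : V →ₗ[𝕜] V →ₗ[𝕜] M} (hB : B.IsAlt)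
    {K : Submodule 𝕜 V} (hK : ∀ k ∈ K, ∀ x, B x k = 0)
    (hdim : finrank 𝕜 V ≤ finrank 𝕜 K + 1) : B = 0 := by
  obtain ⟨u, hu⟩ := K.exists_sub_smul_mem_of_finrank_le_finrank_add_one hdim
  have hBu : ∀ x, B x u = 0 := by
    intro x
    obtain ⟨c, hc⟩ := hu x
    calc B x u = B (x - c • u) u + c • B u u := by simp
      _ = 0 := by rw [← hB.neg, hK _ hc, hB.self_eq_zero]; simp
  ext x y
  obtain ⟨c, hc⟩ := hu y
  calc B x y = B x (y - c • u) + c • B x u := by simp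
    _ = 0 := by rw [hK _ hc, hBu]; simp

theorem LinearMap.IsAlt.finrank_add_two_le {B : V →ₗ[𝕜] V →ₗ[𝕜] M} (hB : B.IsAlt)
    (hB0 : B ≠ 0) {K : Submodule 𝕜 V} (hK : ∀ k ∈ K, ∀ x, B x k = 0) :
    finrank 𝕜 K + 2 ≤ finrank 𝕜 V := by
  by_contra! h
  exact hB0 (hB.eq_zero_of_finrank_le hK (by omega))

end Alternating

namespace IsWeylLike

variable {V : Type*} [AddCommGroup V] [Module ℝ V] {n : ℕ} {g : V → V → ℝ}
  {W : V → V → V → V → ℝ} {b : Basis (Fin n) ℝ V} {ε : Fin n → ℝ}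

theorem add_first (hW : IsWeylLike g W b ε) (a a' c d e : V) :
    W (a + a') c d e = W a c d e + W a' c d e :=
  hW.2.2.2.2.2.1 a a' c d e

theorem smul_first (hW : IsWeylLike g W b ε) (r : ℝ) (a c d e : V) :
    W (r • a) c d e = r * W a c d e :=
  hW.2.2.2.2.2.2.1 r a c d e

theorem swap_last (hW : IsWeylLike g W b ε) (a c d e : V) : W a c d e = -W a c e d :=
  hW.2.2.2.2.2.2.2.2.1 a c d e

theorem swap_pairs (hW : IsWeylLike g W b ε) (a c d e : V) : W a c d e = W d e a c :=
  hW.2.2.2.2.2.2.2.2.2.1 a c d e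

theorem add_third (hW : IsWeylLike g W b ε) (a c d d' e : V) :
    W a c (d + d') e = W a c d e + W a c d' e := by
  rw [hW.swap_pairs a c, hW.add_first, ← hW.swap_pairs a c d, ← hW.swap_pairs a c d']

theorem smul_third (hW : IsWeylLike g W b ε) (r : ℝ) (a c d e : V) :
    W a c (r • d) e = r * W a c d e := by
  rw [hW.swap_pairs a c, hW.smul_first, ← hW.swap_pairs a c d]

theorem add_fourth (hW : IsWeylLike g W b ε) (a c d e e' : V) :
    W a c d (e + e') = W a c d e + W a c d e' := by
  rw [hW.swap_last, hW.add_third, hW.swap_last a c e, hW.swap_last a c e']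
  ring

theorem smul_fourth (hW : IsWeylLike g W b ε) (r : ℝ) (a c d e : V) :
    W a c d (r • e) = r * W a c d e := by
  rw [hW.swap_last, hW.smul_third, hW.swap_last a c e]
  ring

def toBilin (hW : IsWeylLike g W b ε) (a c : V) : V →ₗ[ℝ] V →ₗ[ℝ] ℝ :=
  LinearMap.mk₂ ℝ (W a c) (hW.add_third a c) (fun r => hW.smul_third r a c) (hW.add_fourth a c)
    (fun r => hW.smul_fourth r a c)

theorem toBilin_apply (hW : IsWeylLike g W b ε) (a c d e : V) :
    hW.toBilin a c d e = W a c d e :=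
  rfl

theorem isAlt_toBilin (hW : IsWeylLike g W b ε) (a c : V) : (hW.toBilin a c).IsAlt := by
  intro d
  have := hW.swap_last a c d d
  rw [toBilin_apply]
  linarith

def kernel (hW : IsWeylLike g W b ε) : Submodule ℝ V :=
  ⨅ (a : V) (c : V) (d : V), LinearMap.ker (hW.toBilin a c d)

theorem mem_kernel (hW : IsWeylLike g W b ε) {e : V} :
    e ∈ hW.kernel ↔ ∀ a c d, W a c d e = 0 := by
  simp [kernel, Submodule.mem_iInf, toBilin_apply]

end IsWeylLike

theorem kernel_dim_le_of_weylLike_general_signature_general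
    {V : Type*} [AddCommGroup V] [Module ℝ V] {n : ℕ}
    (g : V → V → ℝ) (W : V → V → V → V → ℝ)
    (b : Module.Basis (Fin n) ℝ V) (ε : Fin n → ℝ)
    (hW : IsWeylLike g W b ε)
    (hne : ∃ a c d e, W a c d e ≠ 0) :
    ∀ (m : ℕ) (v : Fin m → V), LinearIndependent ℝ v →
      (∀ i a c d, W a c d (v i) = 0) → m ≤ n - 2 := by
  intro m v hv hker
  have : FiniteDimensional ℝ V := b.finiteDimensional_of_finite
  obtain ⟨a, c, d, e, hW0⟩ := hne
  have hBne : hW.toBilin a c ≠ 0 := fun h => hW0 (by simp [← hW.toBilin_apply, h])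
  have hn : finrank ℝ V = n := by rw [finrank_eq_card_basis b, Fintype.card_fin]
  have hcodim : finrank ℝ hW.kernel + 2 ≤ finrank ℝ V :=
    (hW.isAlt_toBilin a c).finrank_add_two_le hBne fun k hk x => hW.mem_kernel.mp hk a c x
  have hm : m ≤ finrank ℝ hW.kernel := by
    calc m = finrank ℝ (Submodule.span ℝ (Set.range v)) := by
          rw [finrank_span_eq_card hv, Fintype.card_fin]
      _ ≤ finrank ℝ hW.kernel := Submodule.finrank_mono <| Submodule.span_le.mpr <| by
          rintro _ ⟨i, rfl⟩
          exact hW.mem_kernel.mpr (hker i)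
  omega

/-- in signature `(p, q)` with `2 ≤ p ≤ q`, the kernel of a nonzero Weyl-type
tensor has dimension at most `n - 2`. -/
theorem kernel_dim_le_of_weylLike_general_signature
    {V : Type*} [AddCommGroup V] [Module ℝ V] {n p : ℕ} (hn : 4 ≤ n)
    (g : V → V → ℝ) (W : V → V → V → V → ℝ)
    (b : Module.Basis (Fin n) ℝ V) (ε : Fin n → ℝ)
    (hW : IsWeylLike g W b ε)
    (hp : ∃ S : Finset (Fin n), S.card = p ∧ ∀ i, i ∈ S ↔ ε i = -1)
    (hp2 : 2 ≤ p) (hpq : p ≤ n - p)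
    (hne : ∃ a c d e, W a c d e ≠ 0) :
    ∀ (m : ℕ) (v : Fin m → V), LinearIndependent ℝ v →
      (∀ i a c d, W a c d (v i) = 0) → m ≤ n - 2 :=
  kernel_dim_le_of_weylLike_general_signature_general g W b ε hW hne
end

section
/- Let V be a subspace of an n-dimensional real vector space E equipped with a nondegenerate symmetric bilinear form g of signature (p,q), where 0 ≤ p ≤ q. If dim V ≥ n - 3 + min(p,2), then V contains a subspace V' of dimension n-3 on which the restriction of g is nondegenerate. -/
/-!
The radical `R = V ⊓ Vᗮ` of `g` restricted to `V` is totally isotropic, so it meets the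
positive definite span of the `+1` basis vectors trivially and `dim R ≤ p`; since `R ⊆ Vᗮ`
also `dim R ≤ n - dim V`. A complement of `R` in `V` is nondegenerate of dimension
`dim V - dim R ≥ n - 3`, and `n - 3` vectors of an orthogonal basis of it span `V'`.
-/

/-- A symmetric bilinear form `g` on `E` admitting an orthonormal basis `b` with
signs `ε` (`g (b i) (b j) = ε i δ_{ij}`, `ε i = ±1`); in particular `g` is nondegenerate,
of signature determined by the number of `-1`s among the `ε i`. -/
def IsOrthoForm {E : Type*} [AddCommGroup E] [Module ℝ E] {n : ℕ}
    (g : E → E → ℝ) (b : Module.Basis (Fin n) ℝ E) (ε : Fin n → ℝ) : Prop :=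
  (∀ i, ε i = 1 ∨ ε i = -1) ∧
  (∀ i j, g (b i) (b j) = if i = j then ε i else 0) ∧
  (∀ x y, g x y = g y x) ∧
  (∀ x x' y, g (x + x') y = g x y + g x' y) ∧
  (∀ (r : ℝ) (x y : E), g (r • x) y = r * g x y)

open Module

namespace LinearMap.BilinForm

variable {K E : Type*} [Field K] [AddCommGroup E] [Module K E] [FiniteDimensional K E]
  {B : LinearMap.BilinForm K E}

theorem exists_le_disjoint_orthogonal_finrank_add (hB : B.IsRefl) (V : Submodule K E) :
    ∃ W ≤ V, Disjoint W (B.orthogonal W) ∧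
      finrank K W + finrank K ↥(V ⊓ B.orthogonal V) = finrank K V := by
  obtain ⟨W, hRW, hRW_sup⟩ :=
    IsModularLattice.exists_disjoint_and_sup_eq (inf_le_left : V ⊓ B.orthogonal V ≤ V)
  have hWV : W ≤ V := hRW_sup ▸ le_sup_right
  refine ⟨W, hWV, Submodule.disjoint_def.2 fun w hw hwW => ?_, ?_⟩
  · have hV : V ≤ LinearMap.ker (B.flip w) := hRW_sup ▸
      sup_le (fun r hr => hB _ _ (hr.2 w (hWV hw))) (fun w' hw' => hwW w' hw')
    exact Submodule.disjoint_def.1 hRW w ⟨hWV hw, fun v hv => hV hv⟩ hw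
  · have := Submodule.finrank_sup_add_finrank_inf_eq (V ⊓ B.orthogonal V) W
    rw [hRW_sup, hRW.eq_bot, finrank_bot] at this
    omega

theorem exists_le_finrank_eq_disjoint_orthogonal [Invertible (2 : K)] (hB : B.IsSymm)
    {W : Submodule K E} (hW : Disjoint W (B.orthogonal W)) {k : ℕ} (hk : k ≤ finrank K W) :
    ∃ U ≤ W, finrank K U = k ∧ Disjoint U (B.orthogonal U) := by
  obtain ⟨v, hv⟩ := exists_orthogonal_basis (isSymm_iff.1 (hB.restrict W))
  have hvv : ∀ i, B (v i) (v i) ≠ 0 := iIsOrtho.not_isOrtho_basis_self_of_nondegenerate hv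
    (B.nondegenerate_restrict_of_disjoint_orthogonal hB.isRefl hW)
  let u : Fin k → E := fun i => v (Fin.castLE hk i)
  have hu : LinearIndependent K u :=
    (v.linearIndependent.comp _ (Fin.castLE_injective hk)).map' W.subtype W.ker_subtype
  refine ⟨Submodule.span K (Set.range u), Submodule.span_le.2 ?_, ?_, ?_⟩
  · rintro _ ⟨i, rfl⟩
    exact (v _).2
  · rw [finrank_span_eq_card hu, Fintype.card_fin]
  · refine ((restrict_nondegenerate_iff_isCompl_orthogonal hB.isRefl).1 ?_).disjoint
    refine (iIsOrtho.nondegenerate_iff_not_isOrtho_basis_self _ (Basis.span hu) ?_).2 fun i => ?_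
    · intro i j hij
      simpa [Function.onFun, Basis.span_apply] using hv ((Fin.castLE_injective hk).ne hij)
    · simpa [Basis.span_apply] using hvv (Fin.castLE hk i)

end LinearMap.BilinForm

namespace IsOrthoForm

variable {E : Type*} [AddCommGroup E] [Module ℝ E] {n : ℕ} {g : E → E → ℝ}
  {b : Basis (Fin n) ℝ E} {ε : Fin n → ℝ}

def toBilinForm (hg : IsOrthoForm g b ε) : LinearMap.BilinForm ℝ E :=
  LinearMap.mk₂ ℝ g hg.2.2.2.1 hg.2.2.2.2
    (fun x y y' => by rw [hg.2.2.1, hg.2.2.2.1, hg.2.2.1 y, hg.2.2.1 y'])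
    (fun r x y => by rw [hg.2.2.1, hg.2.2.2.2, hg.2.2.1, smul_eq_mul])

@[simp]
theorem toBilinForm_apply (hg : IsOrthoForm g b ε) (x y : E) : hg.toBilinForm x y = g x y := rfl

theorem isSymm (hg : IsOrthoForm g b ε) : hg.toBilinForm.IsSymm := ⟨hg.2.2.1⟩

theorem iIsOrtho (hg : IsOrthoForm g b ε) : hg.toBilinForm.IsOrthoᵢ b := fun i j hij => by
  simp [Function.onFun, hg.2.1 i j, hij]

theorem nondegenerate (hg : IsOrthoForm g b ε) : hg.toBilinForm.Nondegenerate :=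
  (LinearMap.BilinForm.iIsOrtho.nondegenerate_iff_not_isOrtho_basis_self _ b hg.iIsOrtho).2
    fun i => by rcases hg.1 i with h | h <;> simp [hg.2.1, h]

theorem apply_self (hg : IsOrthoForm g b ε) (x : E) : g x x = ∑ i, ε i * b.repr x i ^ 2 := by
  rw [← hg.toBilinForm_apply, ← LinearMap.BilinForm.sum_repr_mul_repr_mul b]
  simp [Finsupp.sum_fintype, hg.2.1]
  exact Finset.sum_congr rfl fun i _ => by ring

theorem finrank_le_card_of_nonpos (hg : IsOrthoForm g b ε) {S : Finset (Fin n)}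
    (hS : ∀ i ∉ S, ε i = 1) {U : Submodule ℝ E} (hU : ∀ x ∈ U, g x x ≤ 0) :
    finrank ℝ U ≤ S.card := by
  let f : U →ₗ[ℝ] (S → ℝ) := (LinearMap.pi fun i : S => b.coord i) ∘ₗ U.subtype
  suffices Function.Injective f by
    simpa using LinearMap.finrank_le_finrank_of_injective this
  refine (injective_iff_map_eq_zero f).2 fun x hx => ?_
  have hxS : ∀ i ∈ S, b.repr x i = 0 := fun i hi => congrFun hx ⟨i, hi⟩
  have hsq : ∑ i, b.repr x i ^ 2 = g x x := by
    rw [hg.apply_self]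
    refine Finset.sum_congr rfl fun i _ => ?_
    by_cases hi : i ∈ S
    · simp [hxS i hi]
    · simp [hS i hi]
  have hzero := (Finset.sum_eq_zero_iff_of_nonneg fun i _ => sq_nonneg (b.repr x i)).1
    (le_antisymm (hsq ▸ hU x x.2) (Finset.sum_nonneg fun i _ => sq_nonneg _))
  exact Subtype.ext <| b.forall_coord_eq_zero_iff.1 fun i => by simpa using hzero i

end IsOrthoForm

theorem exists_nondegenerate_subspace_of_dim_ge_general
    {E : Type*} [AddCommGroup E] [Module ℝ E] {n p : ℕ}
    (g : E → E → ℝ) (b : Module.Basis (Fin n) ℝ E) (ε : Fin n → ℝ)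
    (hg : IsOrthoForm g b ε)
    (hp : ∃ S : Finset (Fin n), S.card = p ∧ ∀ i, i ∈ S ↔ ε i = -1)
    (V : Submodule ℝ E)
    (hdim : n - 3 + min p 2 ≤ Module.finrank ℝ V) :
    ∃ V' : Submodule ℝ E, V' ≤ V ∧ Module.finrank ℝ V' = n - 3 ∧
      ∀ x ∈ V', (∀ y ∈ V', g x y = 0) → x = 0 := by
  obtain ⟨S, rfl, hS⟩ := hp
  have : FiniteDimensional ℝ E := b.finiteDimensional_of_finite
  have hE : finrank ℝ E = n := by rw [finrank_eq_card_basis b, Fintype.card_fin]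
  have hR_card : finrank ℝ ↥(V ⊓ hg.toBilinForm.orthogonal V) ≤ S.card :=
    hg.finrank_le_card_of_nonpos (fun i hi => (hg.1 i).resolve_right (mt (hS i).2 hi))
      fun x hx => (hx.2 x hx.1 : g x x = 0).le
  have hR_codim : finrank ℝ ↥(V ⊓ hg.toBilinForm.orthogonal V) ≤ n - finrank ℝ V := by
    calc _ ≤ finrank ℝ ↥(hg.toBilinForm.orthogonal V) := Submodule.finrank_mono inf_le_right
      _ = n - finrank ℝ V := by rw [LinearMap.BilinForm.finrank_orthogonal hg.nondegenerate, hE]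
  obtain ⟨W, hWV, hW, hW_finrank⟩ :=
    LinearMap.BilinForm.exists_le_disjoint_orthogonal_finrank_add hg.isSymm.isRefl V
  obtain ⟨V', hV'W, hV'_finrank, hV'⟩ :=
    LinearMap.BilinForm.exists_le_finrank_eq_disjoint_orthogonal hg.isSymm hW (k := n - 3) (by omega)
  refine ⟨V', hV'W.trans hWV, hV'_finrank, fun x hx hxV' => ?_⟩
  exact Submodule.disjoint_def.1 hV' x hx fun y hy => (hg.2.2.1 y x).trans (hxV' y hy)

/-- if `dim V ≥ n - 3 + min p 2` in signature `(p,q)`, `p ≤ q`, then `V`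
contains an `(n-3)`-dimensional subspace on which `g` restricts nondegenerately. -/
theorem exists_nondegenerate_subspace_of_dim_ge
    {E : Type*} [AddCommGroup E] [Module ℝ E] {n p : ℕ} (hn : 4 ≤ n)
    (g : E → E → ℝ) (b : Module.Basis (Fin n) ℝ E) (ε : Fin n → ℝ)
    (hg : IsOrthoForm g b ε)
    (hp : ∃ S : Finset (Fin n), S.card = p ∧ ∀ i, i ∈ S ↔ ε i = -1)
    (hpq : p ≤ n - p)
    (V : Submodule ℝ E)
    (hdim : n - 3 + min p 2 ≤ Module.finrank ℝ V) :
    ∃ V' : Submodule ℝ E, V' ≤ V ∧ Module.finrank ℝ V' = n - 3 ∧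
      ∀ x ∈ V', (∀ y ∈ V', g x y = 0) → x = 0 :=
  exists_nondegenerate_subspace_of_dim_ge_general g b ε hg hp V hdim
end

section
/- Let T be a real vector space with a nondegenerate symmetric bilinear form and T' = T₁ ⊕ T₂ an orthogonal decomposition of a subspace, where the form is definite on T₁ (dim T₁ = m) and T₂ is totally null of dimension r. Then Λ²T' is a Lie subalgebra of so(T) isomorphic to (so(m) ⊕ a(r)) ⋉ ℝ^{rm}, where a(r) = Λ²T₂ is an abelian Lie algebra of dimension r(r-1)/2, ℝ^{rm} = T₁ ⊗ T₂ is an abelian ideal, so(m) = Λ²T₁ acts on T₁⊗T₂ via the standard representation on T₁, and a(r) acts trivially modulo Λ²T₂. -/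
/-- The endomorphism of `T` corresponding to `u ∧ v` under the identification
`Λ²T ≅ so(T)` via the bilinear form `B`: `w ↦ B(u,w)•v − B(v,w)•u`. -/
def wedgeEnd {T : Type*} [AddCommGroup T] [Module ℝ T]
    (B : T → T → ℝ) (u v : T) : T → T :=
  fun w => B u w • v - B v w • u

/-- Commutator bracket of endomorphisms (as plain maps). -/
def brk {T : Type*} [AddCommGroup T] (f g : T → T) : T → T :=
  fun w => f (g w) - g (f w)

/-- `B` is a symmetric nondegenerate bilinear form. -/
def IsSymmNondeg {T : Type*} [AddCommGroup T] [Module ℝ T] (B : T → T → ℝ) : Prop :=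
  (∀ x y, B x y = B y x) ∧
  (∀ x x' y, B (x + x') y = B x y + B x' y) ∧
  (∀ (r : ℝ) (x y : T), B (r • x) y = r * B x y) ∧
  (∀ x, (∀ y, B x y = 0) → x = 0)

/-!
Under `Λ²T ≅ so(T)` everything is decided on generators `u ∧ v`: the wedge is bilinear into
`Module.End ℝ T`, where the commutator is bilinear too. On generators
`[u∧v, x∧y] = B(u,y) x∧v + B(v,x) y∧u − B(v,y) x∧u − B(u,x) y∧v`, and the vanishing of `B` on
`T₁ × T₂` and on `T₂ × T₂` kills exactly the terms that would leave the claimed subspaces; for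
`e ⊥ u, v` it reduces to `[u∧v, x∧e] = ((u∧v) x) ∧ e`, the standard action of `so(m)`.

For the dimensions, nondegeneracy of `B` turns a basis `cᵢ` of a finite-dimensional subspace into
a biorthogonal family `uⱼ` of `T`, and the functionals `f ↦ B (f uₐ) u_b` are dual to the wedges
`cₐ ∧ c_b` with `a < b` (respectively with `cₐ ∈ T₁`, `c_b ∈ T₂`, using `T₁ ∩ T₂ = 0`, which holds
because `B` is definite on `T₁`). When a subspace is infinite-dimensional, `finrank` takes its junk
value `0` on both sides: the wedge span then contains wedge spans of finite-dimensional subspaces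
of every dimension.
-/

open Submodule Module

section

variable {K V : Type*} [DivisionRing K] [AddCommGroup V] [Module K V]

theorem Submodule.exists_linearIndependent_span_eq (W : Submodule K V) [FiniteDimensional K W] :
    ∃ c : Fin (finrank K W) → V, LinearIndependent K c ∧ span K (Set.range c) = W :=
  ⟨W.subtype ∘ finBasis K W, (finBasis K W).linearIndependent.map' _ W.ker_subtype, by
    rw [Set.range_comp, span_image, (finBasis K W).span_eq, map_subtype_top]⟩

theorem Submodule.exists_le_finiteDimensional_finrank_eq (W : Submodule K V) {n : ℕ}
    (hn : n ≤ Module.rank K W) :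
    ∃ W' ≤ W, FiniteDimensional K W' ∧ finrank K W' = n := by
  obtain ⟨f, hf⟩ := exists_linearIndependent_of_le_rank hn
  refine ⟨span K (Set.range (W.subtype ∘ f)), ?_, .span_of_finite K (Set.finite_range _), ?_⟩
  · rw [Set.range_comp, span_image]; exact map_subtype_le _ _
  · rw [finrank_span_eq_card (hf.map' _ W.ker_subtype), Fintype.card_fin]

theorem Submodule.exists_le_finrank_eq_of_not_finiteDimensional {W : Submodule K V}
    (hW : ¬FiniteDimensional K W) (n : ℕ) :
    ∃ W' ≤ W, FiniteDimensional K W' ∧ finrank K W' = n :=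
  W.exists_le_finiteDimensional_finrank_eq <|
    (Cardinal.natCast_lt_aleph0 (n := n)).le.trans (not_lt.1 (mt rank_lt_aleph0_iff.1 hW))

theorem Submodule.finrank_eq_zero_of_forall_le_finrank {S : Submodule K V}
    (h : ∀ n : ℕ, ∃ S' ≤ S, n ≤ finrank K S') : finrank K S = 0 := by
  by_contra hS
  have := Module.finite_of_finrank_pos (Nat.pos_of_ne_zero hS)
  obtain ⟨S', hS', hn⟩ := h (finrank K S + 1)
  have := Submodule.finrank_mono hS'
  omega

end

section

variable {T : Type*} [AddCommGroup T] [Module ℝ T] {B : T → T → ℝ}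

theorem wedgeEnd_swap (B : T → T → ℝ) (u v : T) : wedgeEnd B v u = -wedgeEnd B u v := by
  funext w
  simp [wedgeEnd]

theorem wedgeEnd_apply_mem {W : Submodule ℝ T} {u v : T} (hu : u ∈ W) (hv : v ∈ W) (x : T) :
    wedgeEnd B u v x ∈ W :=
  sub_mem (W.smul_mem _ hv) (W.smul_mem _ hu)

namespace IsSymmNondeg

def toBilin (hB : IsSymmNondeg B) : T →ₗ[ℝ] T →ₗ[ℝ] ℝ :=
  LinearMap.mk₂ ℝ B hB.2.1 hB.2.2.1
    (fun x y z => by rw [hB.1, hB.2.1, hB.1 y, hB.1 z])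
    (fun c x y => by rw [hB.1, hB.2.2.1, hB.1, smul_eq_mul])

theorem toBilin_apply (hB : IsSymmNondeg B) (x y : T) : hB.toBilin x y = B x y := rfl

def wedgeₗ (hB : IsSymmNondeg B) : T →ₗ[ℝ] T →ₗ[ℝ] Module.End ℝ T :=
  LinearMap.smulRightₗ ∘ₗ hB.toBilin - (LinearMap.smulRightₗ ∘ₗ hB.toBilin).flip

@[simp] theorem coe_wedgeₗ (hB : IsSymmNondeg B) (u v : T) :
    ⇑(hB.wedgeₗ u v) = wedgeEnd B u v :=
  rfl

theorem wedgeₗ_swap (hB : IsSymmNondeg B) (u v : T) :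
    hB.wedgeₗ v u = -hB.wedgeₗ u v :=
  LinearMap.coe_injective (wedgeEnd_swap B u v)

theorem wedgeₗ_self (hB : IsSymmNondeg B) (u : T) : hB.wedgeₗ u u = 0 :=
  LinearMap.coe_injective (by funext w; simp [wedgeEnd])

theorem exists_biorthogonal (hB : IsSymmNondeg B) {ι : Type*} [Finite ι] [DecidableEq ι]
    {c : ι → T} (hc : LinearIndependent ℝ c) :
    ∃ u : ι → T, ∀ i j, B (c i) (u j) = if i = j then 1 else 0 := by
  let Φ : T →ₗ[ℝ] ι → ℝ := LinearMap.pi fun i => hB.toBilin (c i)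
  have hli : LinearIndependent ℝ fun i => B (c i) :=
    hc.map' (LinearMap.ltoFun ℝ T ℝ ℝ ∘ₗ hB.toBilin) <| LinearMap.ker_eq_bot'.2
      fun x hx => hB.2.2.2 x fun y => congr_fun hx y
  have hΦ : Function.Surjective Φ := by
    rw [← span_flip_eq_top_iff_linearIndependent] at hli
    rw [← LinearMap.range_eq_top, ← hli, ← span_eq (LinearMap.range Φ), LinearMap.coe_range]
    rfl
  choose u hu using fun j => hΦ (Pi.single j 1)
  exact ⟨u, fun i j => by simpa [Φ, toBilin_apply, Pi.single_apply] using congr_fun (hu j) i⟩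

theorem linearIndependent_wedgeₗ (hB : IsSymmNondeg B) {ι κ : Type*} [Finite ι] {c : ι → T}
    (hc : LinearIndependent ℝ c) {a b : κ → ι} (hab : Function.Injective fun k => (a k, b k))
    (hswap : ∀ k k', (a k, b k) ≠ (b k', a k')) :
    LinearIndependent ℝ fun k => hB.wedgeₗ (c (a k)) (c (b k)) := by
  classical
  obtain ⟨u, hu⟩ := hB.exists_biorthogonal hc
  -- `f ↦ B (f (u (a k))) (u (b k))` takes the value `δₖₖ'` on the `k'`-th wedge.
  let Φ : Module.End ℝ T →ₗ[ℝ] κ → ℝ :=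
    LinearMap.pi fun k => hB.toBilin.flip (u (b k)) ∘ₗ LinearMap.applyₗ (u (a k))
  refine LinearIndependent.of_comp Φ ?_
  convert Pi.linearIndependent_single_one κ ℝ using 1
  funext k' k
  have hdiag : (a k' = a k ∧ b k' = b k) ↔ k' = k := by
    simpa [Prod.ext_iff] using hab.eq_iff (a := k') (b := k)
  have hoff : ¬(b k' = a k ∧ a k' = b k) := by
    simpa [Prod.ext_iff, eq_comm, and_comm] using hswap k k'
  simp only [Function.comp_apply, Φ, LinearMap.pi_apply, LinearMap.comp_apply,
    LinearMap.applyₗ_apply_apply, LinearMap.flip_apply, coe_wedgeₗ, wedgeEnd, map_sub, map_smul,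
    smul_eq_mul, toBilin_apply, hu, Pi.single_apply]
  rw [ite_zero_mul_ite_zero, ite_zero_mul_ite_zero, if_congr hdiag rfl rfl, if_neg hoff,
    sub_zero, mul_one]
  exact if_congr eq_comm rfl rfl

end IsSymmNondeg

theorem brk_wedgeEnd (hB : IsSymmNondeg B) (u v x y : T) :
    brk (wedgeEnd B u v) (wedgeEnd B x y) =
      B u y • wedgeEnd B x v + B v x • wedgeEnd B y u
        - B v y • wedgeEnd B x u - B u x • wedgeEnd B y v := by
  funext w
  simp only [brk, wedgeEnd, Pi.add_apply, Pi.sub_apply, Pi.smul_apply, ← hB.toBilin_apply,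
    map_sub, map_smul, smul_eq_mul]
  simp only [hB.toBilin_apply, hB.1 x u, hB.1 x v, hB.1 y u, hB.1 y v]
  module

theorem brk_wedgeEnd_of_orthogonal (hB : IsSymmNondeg B) {u v e : T} (hu : B u e = 0)
    (hv : B v e = 0) (x : T) :
    brk (wedgeEnd B u v) (wedgeEnd B x e) = wedgeEnd B (wedgeEnd B u v x) e := by
  rw [brk_wedgeEnd hB, hu, hv, wedgeEnd_swap B u e, wedgeEnd_swap B v e]
  funext w
  simp only [wedgeEnd, Pi.add_apply, Pi.sub_apply, Pi.smul_apply, Pi.neg_apply,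
    ← hB.toBilin_apply, map_sub, map_smul, LinearMap.sub_apply, LinearMap.smul_apply, smul_eq_mul]
  module

def wedgeSpan (B : T → T → ℝ) (U V : Submodule ℝ T) : Submodule ℝ (T → T) :=
  span ℝ {f | ∃ u ∈ U, ∃ v ∈ V, f = wedgeEnd B u v}

theorem wedgeEnd_mem_wedgeSpan {U V : Submodule ℝ T} {u v : T} (hu : u ∈ U) (hv : v ∈ V) :
    wedgeEnd B u v ∈ wedgeSpan B U V :=
  subset_span ⟨u, hu, v, hv, rfl⟩

theorem wedgeSpan_mono {U U' V V' : Submodule ℝ T} (hU : U ≤ U') (hV : V ≤ V') :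
    wedgeSpan B U V ≤ wedgeSpan B U' V' :=
  span_le.2 fun _ ⟨_, hu, _, hv, h⟩ => h ▸ wedgeEnd_mem_wedgeSpan (hU hu) (hV hv)

theorem wedgeSpan_comm (B : T → T → ℝ) (U V : Submodule ℝ T) :
    wedgeSpan B V U = wedgeSpan B U V := by
  have key : ∀ U V : Submodule ℝ T, wedgeSpan B V U ≤ wedgeSpan B U V := by
    refine fun U V => span_le.2 fun _ ⟨v, hv, u, hu, h⟩ => ?_
    rw [h, SetLike.mem_coe, wedgeEnd_swap]
    exact neg_mem (wedgeEnd_mem_wedgeSpan hu hv)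
  exact (key U V).antisymm (key V U)

theorem wedgeSpan_eq_map (hB : IsSymmNondeg B) (U V : Submodule ℝ T) :
    wedgeSpan B U V = (map₂ hB.wedgeₗ U V).map (LinearMap.ltoFun ℝ T T ℝ) := by
  rw [wedgeSpan, map₂_eq_span_image2, map_span, Set.image_image2]
  refine congrArg (span ℝ) (Set.ext fun f => ?_)
  simp [eq_comm]

theorem wedgeSpan_bot_right (hB : IsSymmNondeg B) (U : Submodule ℝ T) : wedgeSpan B U ⊥ = ⊥ := by
  rw [wedgeSpan_eq_map hB, map₂_bot_right, Submodule.map_bot]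

theorem wedgeSpan_sup_left (hB : IsSymmNondeg B) (U₁ U₂ V : Submodule ℝ T) :
    wedgeSpan B (U₁ ⊔ U₂) V = wedgeSpan B U₁ V ⊔ wedgeSpan B U₂ V := by
  simp only [wedgeSpan_eq_map hB, map₂_sup_left, Submodule.map_sup]

theorem wedgeSpan_sup_right (hB : IsSymmNondeg B) (U V₁ V₂ : Submodule ℝ T) :
    wedgeSpan B U (V₁ ⊔ V₂) = wedgeSpan B U V₁ ⊔ wedgeSpan B U V₂ := by
  simp only [wedgeSpan_eq_map hB, map₂_sup_right, Submodule.map_sup]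

theorem wedgeSpan_sup_self (hB : IsSymmNondeg B) (U V : Submodule ℝ T) :
    wedgeSpan B (U ⊔ V) (U ⊔ V) = wedgeSpan B U U ⊔ wedgeSpan B V V ⊔ wedgeSpan B U V := by
  rw [wedgeSpan_sup_left hB, wedgeSpan_sup_right hB, wedgeSpan_sup_right hB, wedgeSpan_comm B U V]
  simp only [sup_comm, sup_left_comm, sup_left_idem]

theorem apply_mem_of_mem_wedgeSpan {W : Submodule ℝ T} {f : T → T} (hf : f ∈ wedgeSpan B W W)
    (x : T) : f x ∈ W :=
  mem_comap.1 <| (span_le (p := W.comap (LinearMap.proj x))).2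
    (by rintro _ ⟨u, hu, v, hv, rfl⟩; exact wedgeEnd_apply_mem hu hv x) hf

theorem skew_of_mem_wedgeSpan (hB : IsSymmNondeg B) {U V : Submodule ℝ T} {f : T → T}
    (hf : f ∈ wedgeSpan B U V) (x y : T) : B (f x) y + B x (f y) = 0 := by
  let φ : (T → T) →ₗ[ℝ] ℝ :=
    hB.toBilin.flip y ∘ₗ LinearMap.proj x + hB.toBilin x ∘ₗ LinearMap.proj y
  refine (span_le (p := LinearMap.ker φ)).2 ?_ hf
  rintro _ ⟨u, -, v, -, rfl⟩
  simp only [SetLike.mem_coe, LinearMap.mem_ker, φ, LinearMap.add_apply, LinearMap.comp_apply,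
    LinearMap.proj_apply, LinearMap.flip_apply, wedgeEnd, map_sub, map_smul, smul_eq_mul]
  simp only [hB.toBilin_apply, hB.1 x u, hB.1 x v]
  ring

theorem brk_coe (F G : Module.End ℝ T) : brk ⇑F ⇑G = ⇑(F * G - G * F) := rfl

theorem brk_mem_of_forall_wedgeEnd (hB : IsSymmNondeg B) {U₁ V₁ U₂ V₂ : Submodule ℝ T}
    {R : Submodule ℝ (T → T)}
    (h : ∀ u ∈ U₁, ∀ v ∈ V₁, ∀ x ∈ U₂, ∀ y ∈ V₂, brk (wedgeEnd B u v) (wedgeEnd B x y) ∈ R) :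
    ∀ f ∈ wedgeSpan B U₁ V₁, ∀ g ∈ wedgeSpan B U₂ V₂, brk f g ∈ R := by
  have hle : map₂ (LinearMap.mul ℝ (Module.End ℝ T) - (LinearMap.mul ℝ (Module.End ℝ T)).flip)
      (map₂ hB.wedgeₗ U₁ V₁) (map₂ hB.wedgeₗ U₂ V₂) ≤ R.comap (LinearMap.ltoFun ℝ T T ℝ) := by
    rw [map₂_eq_span_image2 hB.wedgeₗ, map₂_eq_span_image2 hB.wedgeₗ, map₂_span_span, span_le]
    rintro _ ⟨_, ⟨u, hu, v, hv, rfl⟩, _, ⟨x, hx, y, hy, rfl⟩, rfl⟩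
    simpa [← brk_coe] using h u hu v hv x hx y hy
  rw [wedgeSpan_eq_map hB, wedgeSpan_eq_map hB]
  rintro _ ⟨F, hF, rfl⟩ _ ⟨G, hG, rfl⟩
  simpa [brk_coe] using hle (apply_mem_map₂ _ hF hG)

theorem brk_mem_wedgeSpan_self (hB : IsSymmNondeg B) (W : Submodule ℝ T) :
    ∀ f ∈ wedgeSpan B W W, ∀ g ∈ wedgeSpan B W W, brk f g ∈ wedgeSpan B W W := by
  refine brk_mem_of_forall_wedgeEnd hB fun u hu v hv x hx y hy => ?_
  rw [brk_wedgeEnd hB]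
  refine sub_mem (sub_mem (add_mem ?_ ?_) ?_) ?_ <;>
    exact smul_mem _ _ (wedgeEnd_mem_wedgeSpan ‹_› ‹_›)

theorem brk_eq_zero_of_orthogonal (hB : IsSymmNondeg B) {W U V : Submodule ℝ T}
    (hU : ∀ x ∈ W, ∀ y ∈ U, B x y = 0) (hV : ∀ x ∈ W, ∀ y ∈ V, B x y = 0) :
    ∀ f ∈ wedgeSpan B W W, ∀ g ∈ wedgeSpan B U V, brk f g = 0 := by
  intro f hf g hg
  rw [← mem_bot ℝ]
  refine brk_mem_of_forall_wedgeEnd hB (fun u hu v hv x hx y hy => ?_) f hf g hg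
  rw [brk_wedgeEnd hB, hV u hu y hy, hU v hv x hx, hV v hv y hy, hU u hu x hx]
  simp

theorem brk_mem_wedgeSpan_of_orthogonal (hB : IsSymmNondeg B) {U V : Submodule ℝ T}
    (hUV : ∀ x ∈ U, ∀ y ∈ V, B x y = 0) :
    ∀ f ∈ wedgeSpan B U U, ∀ g ∈ wedgeSpan B U V, brk f g ∈ wedgeSpan B U V := by
  refine brk_mem_of_forall_wedgeEnd hB fun u hu v hv x _ e he => ?_
  rw [brk_wedgeEnd_of_orthogonal hB (hUV u hu e he) (hUV v hv e he)]
  exact wedgeEnd_mem_wedgeSpan (wedgeEnd_apply_mem hu hv x) he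

theorem brk_mem_wedgeSpan_of_isotropic (hB : IsSymmNondeg B) {U V : Submodule ℝ T}
    (hUV : ∀ x ∈ U, ∀ y ∈ V, B x y = 0) (hV : ∀ x ∈ V, ∀ y ∈ V, B x y = 0) :
    ∀ f ∈ wedgeSpan B U V, ∀ g ∈ wedgeSpan B U V, brk f g ∈ wedgeSpan B V V := by
  refine brk_mem_of_forall_wedgeEnd hB fun u hu v hv x hx y hy => ?_
  rw [brk_wedgeEnd hB, hUV u hu y hy, hB.1 v x, hUV x hx v hv, hV v hv y hy]
  simpa using neg_mem (smul_mem _ (B u x) (wedgeEnd_mem_wedgeSpan (B := B) hy hv))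

theorem finrank_wedgeSpan_eq_finrank_map₂ (hB : IsSymmNondeg B) (U V : Submodule ℝ T) :
    finrank ℝ (wedgeSpan B U V) = finrank ℝ (map₂ hB.wedgeₗ U V) := by
  rw [wedgeSpan_eq_map hB]
  exact (equivMapOfInjective _ DFunLike.coe_injective _).finrank_eq.symm

theorem finrank_wedgeSpan_self_of_finiteDimensional (hB : IsSymmNondeg B) (W : Submodule ℝ T)
    [FiniteDimensional ℝ W] : finrank ℝ (wedgeSpan B W W) = (finrank ℝ W).choose 2 := by
  obtain ⟨c, hc, hcW⟩ := W.exists_linearIndependent_span_eq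
  let κ := {p : Fin (finrank ℝ W) × Fin (finrank ℝ W) // p.1 < p.2}
  have hspan :
      map₂ hB.wedgeₗ W W = span ℝ (Set.range fun p : κ => hB.wedgeₗ (c p.1.1) (c p.1.2)) := by
    conv_lhs => rw [← hcW, map₂_span_span]
    refine le_antisymm (span_le.2 ?_) (span_mono ?_)
    · rintro _ ⟨_, ⟨i, rfl⟩, _, ⟨j, rfl⟩, rfl⟩
      change hB.wedgeₗ (c i) (c j) ∈ _
      rcases lt_trichotomy i j with h | rfl | h
      · exact subset_span ⟨⟨(i, j), h⟩, rfl⟩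
      · rw [hB.wedgeₗ_self]
        exact zero_mem _
      · rw [hB.wedgeₗ_swap]
        exact neg_mem (subset_span ⟨⟨(j, i), h⟩, rfl⟩)
    · rintro _ ⟨p, rfl⟩
      exact Set.mem_image2_of_mem (Set.mem_range_self _) (Set.mem_range_self _)
  have hli := hB.linearIndependent_wedgeₗ hc (a := fun p : κ => p.1.1) (b := fun p => p.1.2)
    (fun p q h => Subtype.ext h) fun p q h => by
      obtain ⟨h₁, h₂⟩ := Prod.mk.inj h
      exact lt_asymm q.2 (h₁ ▸ h₂ ▸ p.2)
  rw [finrank_wedgeSpan_eq_finrank_map₂ hB, hspan, finrank_span_eq_card hli, Fintype.card_subtype,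
    Fintype.card_product_filter_lt, Fintype.card_fin]

theorem finrank_wedgeSpan_of_finiteDimensional (hB : IsSymmNondeg B) {U V : Submodule ℝ T}
    [FiniteDimensional ℝ U] [FiniteDimensional ℝ V] (hUV : Disjoint U V) :
    finrank ℝ (wedgeSpan B U V) = finrank ℝ U * finrank ℝ V := by
  obtain ⟨c₁, hc₁, hcU⟩ := U.exists_linearIndependent_span_eq
  obtain ⟨c₂, hc₂, hcV⟩ := V.exists_linearIndependent_span_eq
  have hc : LinearIndependent ℝ (Sum.elim c₁ c₂) := hc₁.sum_type hc₂ (by rwa [hcU, hcV])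
  have hspan : map₂ hB.wedgeₗ U V =
      span ℝ (Set.range fun p : _ × _ => hB.wedgeₗ (Sum.elim c₁ c₂ (.inl p.1))
        (Sum.elim c₁ c₂ (.inr p.2))) := by
    conv_lhs => rw [← hcU, ← hcV, map₂_span_span, Set.image2_range]
    rfl
  have hli := hB.linearIndependent_wedgeₗ hc
    (a := fun p : Fin (finrank ℝ U) × Fin (finrank ℝ V) => .inl p.1) (b := fun p => .inr p.2)
    (fun p q h => by simpa [Prod.ext_iff] using h) (by simp)
  rw [finrank_wedgeSpan_eq_finrank_map₂ hB, hspan, finrank_span_eq_card hli, Fintype.card_prod,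
    Fintype.card_fin, Fintype.card_fin]

theorem finrank_wedgeSpan_self (hB : IsSymmNondeg B) (W : Submodule ℝ T) :
    finrank ℝ (wedgeSpan B W W) = (finrank ℝ W).choose 2 := by
  by_cases hW : FiniteDimensional ℝ W
  · exact finrank_wedgeSpan_self_of_finiteDimensional hB W
  rw [finrank_of_not_finite hW, Nat.choose_zero_succ]
  refine finrank_eq_zero_of_forall_le_finrank fun n => ?_
  obtain ⟨W', hW', _, hn⟩ := exists_le_finrank_eq_of_not_finiteDimensional hW (n + 1)
  refine ⟨_, wedgeSpan_mono hW' hW', ?_⟩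
  rw [finrank_wedgeSpan_self_of_finiteDimensional hB W', hn, Nat.choose_succ_succ,
    Nat.choose_one_right]
  exact Nat.le_add_right n _

theorem finrank_wedgeSpan_of_not_finiteDimensional (hB : IsSymmNondeg B) {U V : Submodule ℝ T}
    (hUV : Disjoint U V) (hU : ¬FiniteDimensional ℝ U) : finrank ℝ (wedgeSpan B U V) = 0 := by
  rcases eq_or_ne V ⊥ with rfl | hV
  · rw [wedgeSpan_bot_right hB, finrank_bot]
  refine finrank_eq_zero_of_forall_le_finrank fun n => ?_
  obtain ⟨U', hU', _, hn⟩ := exists_le_finrank_eq_of_not_finiteDimensional hU n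
  have := nontrivial_iff_ne_bot.2 hV
  obtain ⟨V', hV', _, h1⟩ :=
    V.exists_le_finiteDimensional_finrank_eq (n := 1) (Cardinal.one_le_iff_pos.2 rank_pos)
  refine ⟨_, wedgeSpan_mono hU' hV', ?_⟩
  rw [finrank_wedgeSpan_of_finiteDimensional hB (hUV.mono hU' hV'), hn, h1, mul_one]

theorem finrank_wedgeSpan_of_disjoint (hB : IsSymmNondeg B) {U V : Submodule ℝ T}
    (hUV : Disjoint U V) :
    finrank ℝ (wedgeSpan B U V) = finrank ℝ U * finrank ℝ V := by
  by_cases hU : FiniteDimensional ℝ U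
  · by_cases hV : FiniteDimensional ℝ V
    · exact finrank_wedgeSpan_of_finiteDimensional hB hUV
    rw [← wedgeSpan_comm, finrank_wedgeSpan_of_not_finiteDimensional hB hUV.symm hV,
      finrank_of_not_finite hV, mul_zero]
  rw [finrank_wedgeSpan_of_not_finiteDimensional hB hUV hU, finrank_of_not_finite hU, zero_mul]

theorem disjoint_of_anisotropic_of_orthogonal {U V : Submodule ℝ T}
    (hU : ∀ x ∈ U, B x x = 0 → x = 0) (hUV : ∀ x ∈ U, ∀ y ∈ V, B x y = 0) : Disjoint U V :=
  disjoint_def.2 fun x hxU hxV => hU x hxU (hUV x hxU x hxV)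

end

/-- for `T' = T₁ ⊕ T₂` orthogonal with `B` definite on `T₁` (`dim T₁ = m`)
and `T₂` totally null of dimension `r`, the Lie algebra `Λ²T' ⊆ so(T)` is
`(so(m) ⊕ a(r)) ⋉ ℝ^{rm}`: it is spanned by `Λ²T₁`, `a(r) = Λ²T₂` and `N = T₁ ∧ T₂`, is
bracket-closed, `Λ²T₁ ≅ so(m)` has dimension `m(m-1)/2` and acts standardly on `N`,
`a(r)` is abelian of dimension `r(r-1)/2`, commutes with `so(m)` and acts trivially on `N`
modulo `Λ²T₂`, and `N ≅ ℝ^{rm}` is an abelian ideal. -/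
theorem lambda2_semidirect_so_m_plus_abelian
    {T : Type*} [AddCommGroup T] [Module ℝ T]
    (B : T → T → ℝ) (hB : IsSymmNondeg B)
    (T₁ T₂ : Submodule ℝ T) (m r : ℕ)
    (hm : Module.finrank ℝ T₁ = m) (hr : Module.finrank ℝ T₂ = r)
    (hdef : (∀ x ∈ T₁, x ≠ 0 → 0 < B x x) ∨ (∀ x ∈ T₁, x ≠ 0 → B x x < 0))
    (hnull : ∀ x ∈ T₂, ∀ y ∈ T₂, B x y = 0)
    (horth : ∀ x ∈ T₁, ∀ y ∈ T₂, B x y = 0)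
    (A A₁ A₂ N : Submodule ℝ (T → T))
    (hA : A = Submodule.span ℝ
      {f | ∃ u ∈ T₁ ⊔ T₂, ∃ v ∈ T₁ ⊔ T₂, f = wedgeEnd B u v})
    (hA₁ : A₁ = Submodule.span ℝ {f | ∃ u ∈ T₁, ∃ v ∈ T₁, f = wedgeEnd B u v})
    (hA₂ : A₂ = Submodule.span ℝ {f | ∃ u ∈ T₂, ∃ v ∈ T₂, f = wedgeEnd B u v})
    (hN : N = Submodule.span ℝ {f | ∃ u ∈ T₁, ∃ v ∈ T₂, f = wedgeEnd B u v}) :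
    A = A₁ ⊔ A₂ ⊔ N ∧
    (∀ f ∈ A, ∀ g ∈ A, brk f g ∈ A) ∧
    (∀ f ∈ A₁, ∀ g ∈ A₁, brk f g ∈ A₁) ∧
    (∀ f ∈ A₁, (∀ x ∈ T₁, f x ∈ T₁) ∧
      (∀ x ∈ T₁, ∀ y ∈ T₁, B (f x) y + B x (f y) = 0)) ∧
    Module.finrank ℝ A₁ = m * (m - 1) / 2 ∧
    (∀ f ∈ A₂, ∀ g ∈ A₂, brk f g = 0) ∧
    Module.finrank ℝ A₂ = r * (r - 1) / 2 ∧
    (∀ f ∈ A₁, ∀ g ∈ A₂, brk f g = 0) ∧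
    (∀ f ∈ A₂, ∀ g ∈ N, brk f g ∈ A₂) ∧
    (∀ f ∈ N, ∀ g ∈ N, brk f g ∈ A₂) ∧
    (∀ f ∈ A₁, ∀ g ∈ N, brk f g ∈ N) ∧
    Module.finrank ℝ N = r * m ∧
    (∀ u ∈ T₁, ∀ v ∈ T₁, ∀ x ∈ T₁, ∀ e ∈ T₂,
      brk (wedgeEnd B u v) (wedgeEnd B x e) = wedgeEnd B (wedgeEnd B u v x) e) := by
  obtain rfl : A = wedgeSpan B (T₁ ⊔ T₂) (T₁ ⊔ T₂) := hA
  obtain rfl : A₁ = wedgeSpan B T₁ T₁ := hA₁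
  obtain rfl : A₂ = wedgeSpan B T₂ T₂ := hA₂
  obtain rfl : N = wedgeSpan B T₁ T₂ := hN
  subst hm hr
  have horth' : ∀ x ∈ T₂, ∀ y ∈ T₁, B x y = 0 := fun x hx y hy => hB.1 y x ▸ horth y hy x hx
  have hdisj : Disjoint T₁ T₂ := by
    refine disjoint_of_anisotropic_of_orthogonal (fun x hx hxx => ?_) horth
    by_contra hx0
    rcases hdef with h | h
    exacts [(h x hx hx0).ne' hxx, (h x hx hx0).ne hxx]
  refine ⟨wedgeSpan_sup_self hB T₁ T₂, brk_mem_wedgeSpan_self hB _, brk_mem_wedgeSpan_self hB _,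
    fun f hf => ⟨fun x _ => apply_mem_of_mem_wedgeSpan hf x,
      fun x _ y _ => skew_of_mem_wedgeSpan hB hf x y⟩,
    (finrank_wedgeSpan_self hB T₁).trans (Nat.choose_two_right _),
    brk_eq_zero_of_orthogonal hB hnull hnull,
    (finrank_wedgeSpan_self hB T₂).trans (Nat.choose_two_right _),
    brk_eq_zero_of_orthogonal hB horth horth,
    fun f hf g hg => brk_eq_zero_of_orthogonal hB horth' hnull f hf g hg ▸ zero_mem _,
    brk_mem_wedgeSpan_of_isotropic hB horth hnull, brk_mem_wedgeSpan_of_orthogonal hB horth,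
    (finrank_wedgeSpan_of_disjoint hB hdisj).trans (mul_comm _ _),
    fun u hu v hv x _ e he => brk_wedgeEnd_of_orthogonal hB (horth u hu e he) (horth v hv e he) x⟩
end

section
/- Consider the Lorentzian pp-wave metric g = e^{-√2 t}(x² dt² + dt dz + dz dt + dx² + dy²) on ℝ⁴ with coordinates (t,x,y,z). Then for any constants c⁰, c' ∈ ℝ, the function σ = c⁰ + c' e^{-√2 t} satisfies the conformal-to-Einstein equation: the trace-free part of ∇∇σ + P σ vanishes, where ∇ is the Levi-Civita connection and P the Schouten tensor of g. In fact g is Ricci-flat and ∇∇σ = 0. -/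
noncomputable section

/-- Partial derivative of a function on `ι → ℝ` in the `i`-th coordinate direction. -/
def pderiv' {ι : Type} [Fintype ι] [DecidableEq ι]
    (i : ι) (f : (ι → ℝ) → ℝ) (x : ι → ℝ) : ℝ :=
  fderiv ℝ f x (Pi.single i 1)

/-- Christoffel symbols `Γ^k_{ij}` of the metric `g` (with pointwise inverse `ginv`). -/
def christoffel {ι : Type} [Fintype ι] [DecidableEq ι]
    (g ginv : (ι → ℝ) → ι → ι → ℝ) (k i j : ι) (x : ι → ℝ) : ℝ :=
  (1/2) * ∑ l, ginv x k l *
    (pderiv' i (fun y => g y l j) x + pderiv' j (fun y => g y l i) x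
      - pderiv' l (fun y => g y i j) x)

/-- Curvature tensor `R^l_{ijk}`, i.e. `R(∂_i,∂_j)∂_k = R^l_{ijk} ∂_l`. -/
def riemUp {ι : Type} [Fintype ι] [DecidableEq ι]
    (g ginv : (ι → ℝ) → ι → ι → ℝ) (l i j k : ι) (x : ι → ℝ) : ℝ :=
  pderiv' i (fun y => christoffel g ginv l j k y) x
    - pderiv' j (fun y => christoffel g ginv l i k y) x
    + ∑ m, christoffel g ginv l i m x * christoffel g ginv m j k x
    - ∑ m, christoffel g ginv l j m x * christoffel g ginv m i k x

/-- Ricci curvature `Ric_{jk} = R^l_{l j k}`. -/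
def ricciT {ι : Type} [Fintype ι] [DecidableEq ι]
    (g ginv : (ι → ℝ) → ι → ι → ℝ) (i j : ι) (x : ι → ℝ) : ℝ :=
  ∑ l, riemUp g ginv l l i j x

/-- Scalar curvature. -/
def scalT {ι : Type} [Fintype ι] [DecidableEq ι]
    (g ginv : (ι → ℝ) → ι → ι → ℝ) (x : ι → ℝ) : ℝ :=
  ∑ i, ∑ j, ginv x i j * ricciT g ginv i j x

/-- Covariant Hessian `∇_i ∇_j σ` of a function. -/
def hessT {ι : Type} [Fintype ι] [DecidableEq ι]
    (g ginv : (ι → ℝ) → ι → ι → ℝ) (σ : (ι → ℝ) → ℝ) (i j : ι) (x : ι → ℝ) : ℝ :=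
  pderiv' i (fun y => pderiv' j σ y) x - ∑ k, christoffel g ginv k i j x * pderiv' k σ x

/-- Laplacian `Δσ = g^{ij} ∇_i∇_j σ`. -/
def lapT {ι : Type} [Fintype ι] [DecidableEq ι]
    (g ginv : (ι → ℝ) → ι → ι → ℝ) (σ : (ι → ℝ) → ℝ) (x : ι → ℝ) : ℝ :=
  ∑ i, ∑ j, ginv x i j * hessT g ginv σ i j x

/-- Schouten tensor `P = (1/(n-2))(Ric - (Sc/(2(n-1))) g)` in dimension `n`. -/
def schoutenT {ι : Type} [Fintype ι] [DecidableEq ι] (n : ℕ)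
    (g ginv : (ι → ℝ) → ι → ι → ℝ) (i j : ι) (x : ι → ℝ) : ℝ :=
  (1/((n:ℝ) - 2)) * (ricciT g ginv i j x - (scalT g ginv x / (2*((n:ℝ) - 1))) * g x i j)

/-- Trace `J = g^{ij} P_{ij}` of the Schouten tensor. -/
def schoutenTr {ι : Type} [Fintype ι] [DecidableEq ι] (n : ℕ)
    (g ginv : (ι → ℝ) → ι → ι → ℝ) (x : ι → ℝ) : ℝ :=
  ∑ i, ∑ j, ginv x i j * schoutenT n g ginv i j x

/-- The pp-wave metric `e^{-√2 t}(x² dt² + 2 dt dz + dx² + dy²)` on `ℝ⁴`,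
coordinates `(t,x,y,z) = (0,1,2,3)`. -/
def gpp (x : Fin 4 → ℝ) (i j : Fin 4) : ℝ :=
  Real.exp (-(Real.sqrt 2) * x 0) *
    (if i = 0 ∧ j = 0 then (x 1)^2
     else if (i = 0 ∧ j = 3) ∨ (i = 3 ∧ j = 0) then 1
     else if (i = 1 ∧ j = 1) ∨ (i = 2 ∧ j = 2) then 1 else 0)

/-- The inverse of `gpp`. -/
def gppInv (x : Fin 4 → ℝ) (i j : Fin 4) : ℝ :=
  Real.exp (Real.sqrt 2 * x 0) *
    (if i = 3 ∧ j = 3 then -((x 1)^2)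
     else if (i = 0 ∧ j = 3) ∨ (i = 3 ∧ j = 0) then 1
     else if (i = 1 ∧ j = 1) ∨ (i = 2 ∧ j = 2) then 1 else 0)

/-! Everything is a direct computation in the coordinates `(t,x,y,z)`. Since
`∂_m g_ij = -√2 δ_m^t g_ij + 2x e^{-√2 t} δ_m^x δ_i^t δ_j^t`, the Christoffel symbols are
polynomials in `x` alone, and from them `Ric = 0` and `∇∇σ = 0` follow
componentwise. Then the Schouten tensor, its trace and `Δσ` vanish, so both sides of the
conformal-to-Einstein equation are zero. -/

theorem fderiv_eval_apply {𝕜 ι : Type*} [NontriviallyNormedField 𝕜] [Fintype ι]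
    {F : ι → Type*} [∀ i, NormedAddCommGroup (F i)] [∀ i, NormedSpace 𝕜 (F i)]
    (i : ι) (f v : ∀ i, F i) :
    fderiv 𝕜 (fun g : ∀ i, F i => g i) f v = v i := by
  rw [(hasFDerivAt_apply i f).fderiv, ContinuousLinearMap.proj_apply]

section RicciFlat

variable {ι : Type} [Fintype ι] [DecidableEq ι] {g ginv : (ι → ℝ) → ι → ι → ℝ} {x : ι → ℝ}

theorem scalT_eq_zero_of_ricciT_eq_zero (h : ∀ i j, ricciT g ginv i j x = 0) :
    scalT g ginv x = 0 := by
  simp [scalT, h]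

theorem schoutenT_eq_zero_of_ricciT_eq_zero (n : ℕ) (h : ∀ i j, ricciT g ginv i j x = 0)
    (i j : ι) : schoutenT n g ginv i j x = 0 := by
  simp [schoutenT, h, scalT_eq_zero_of_ricciT_eq_zero h]

theorem schoutenTr_eq_zero_of_ricciT_eq_zero (n : ℕ) (h : ∀ i j, ricciT g ginv i j x = 0) :
    schoutenTr n g ginv x = 0 := by
  simp [schoutenTr, schoutenT_eq_zero_of_ricciT_eq_zero n h]

theorem lapT_eq_zero_of_hessT_eq_zero {σ : (ι → ℝ) → ℝ} (h : ∀ i j, hessT g ginv σ i j x = 0) :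
    lapT g ginv σ x = 0 := by
  simp [lapT, h]

end RicciFlat

theorem pderiv'_gpp (x : Fin 4 → ℝ) (m i j : Fin 4) :
    pderiv' m (fun y => gpp y i j) x =
      (if m = 0 then -Real.sqrt 2 * gpp x i j else 0) +
        (if m = 1 ∧ i = 0 ∧ j = 0 then 2 * Real.exp (-Real.sqrt 2 * x 0) * x 1 else 0) := by
  fin_cases i <;> fin_cases j <;>
    simp (disch := fun_prop) [gpp, pderiv', fderiv_fun_mul, fderiv_exp, fderiv_fun_pow,
      fderiv_eval_apply, Pi.single_apply] <;>
    fin_cases m <;> simp <;> ring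

def ppChristoffel (k i j : Fin 4) (x : Fin 4 → ℝ) : ℝ :=
  if k = 0 ∧ i = 0 ∧ j = 0 then -Real.sqrt 2
  else if k = 1 ∧ i = 0 ∧ j = 0 then -x 1
  else if k = 1 ∧ ((i = 0 ∧ j = 1) ∨ (i = 1 ∧ j = 0)) then -Real.sqrt 2 / 2
  else if k = 2 ∧ ((i = 0 ∧ j = 2) ∨ (i = 2 ∧ j = 0)) then -Real.sqrt 2 / 2
  else if k = 3 ∧ i = 0 ∧ j = 0 then Real.sqrt 2 / 2 * x 1 ^ 2
  else if k = 3 ∧ ((i = 0 ∧ j = 1) ∨ (i = 1 ∧ j = 0)) then x 1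
  else if k = 3 ∧ ((i = 1 ∧ j = 1) ∨ (i = 2 ∧ j = 2)) then Real.sqrt 2 / 2
  else 0

theorem christoffel_gpp (x : Fin 4 → ℝ) (k i j : Fin 4) :
    christoffel gpp gppInv k i j x = ppChristoffel k i j x := by
  simp only [christoffel, Fin.sum_univ_four, pderiv'_gpp]
  fin_cases k <;> fin_cases i <;> fin_cases j <;>
    simp [gpp, gppInv, ppChristoffel, Real.exp_neg] <;>
    field_simp <;> ring

theorem ricciT_gpp (x : Fin 4 → ℝ) (i j : Fin 4) : ricciT gpp gppInv i j x = 0 := by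
  simp only [ricciT, riemUp, Fin.sum_univ_four, christoffel_gpp]
  fin_cases i <;> fin_cases j <;>
    simp (disch := fun_prop) [ppChristoffel, pderiv', fderiv_fun_mul, fderiv_fun_pow,
      fderiv_eval_apply, Pi.single_apply]
  -- Only `R_tt` survives: the `-1` coming from the profile `x²` is cancelled by the conformal
  -- factor, exactly because its exponent is `√2 t`.
  ring_nf
  norm_num

theorem hessT_gpp_scale (c0 c' : ℝ) (x : Fin 4 → ℝ) (i j : Fin 4) :
    hessT gpp gppInv (fun y => c0 + c' * Real.exp (-(Real.sqrt 2) * y 0)) i j x = 0 := by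
  simp only [hessT, christoffel_gpp]
  fin_cases i <;> fin_cases j <;>
    simp (disch := fun_prop) [ppChristoffel, pderiv', fderiv_fun_mul, fderiv_exp,
      fderiv_eval_apply, Pi.single_apply]
  ring

/-- for the pp-wave metric, `g` is Ricci-flat, `∇∇σ = 0`, and
`σ = c⁰ + c' e^{-√2 t}` solves the conformal-to-Einstein equation: the trace-free part
of `∇∇σ + Pσ` vanishes. -/
theorem ppwave_almost_einstein_scales (c0 c' : ℝ) (σ : (Fin 4 → ℝ) → ℝ)
    (hσ : σ = fun x => c0 + c' * Real.exp (-(Real.sqrt 2) * x 0)) :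
    (∀ (x : Fin 4 → ℝ) (i j : Fin 4), ricciT gpp gppInv i j x = 0) ∧
    (∀ (x : Fin 4 → ℝ) (i j : Fin 4), hessT gpp gppInv σ i j x = 0) ∧
    (∀ (x : Fin 4 → ℝ) (i j : Fin 4),
      hessT gpp gppInv σ i j x + schoutenT 4 gpp gppInv i j x * σ x =
        (1/4) * (lapT gpp gppInv σ x + schoutenTr 4 gpp gppInv x * σ x) * gpp x i j) := by
  subst hσ
  refine ⟨ricciT_gpp, hessT_gpp_scale c0 c', fun x i j => ?_⟩
  rw [hessT_gpp_scale, schoutenT_eq_zero_of_ricciT_eq_zero 4 (ricciT_gpp x),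
    lapT_eq_zero_of_hessT_eq_zero (hessT_gpp_scale c0 c' x),
    schoutenTr_eq_zero_of_ricciT_eq_zero 4 (ricciT_gpp x)]
  ring
end
end

section
/- Consider the Lorentzian metric g = (1/2)(dt dy + dy dt) + dx² + (x³ + h(y)x) dy² on ℝ³ with coordinates (x,y,t), where h is any smooth function of y. Then the vector field k = ∂/∂t is parallel with respect to the Levi-Civita connection of g and is null, i.e. g(k,k) = 0. -/
noncomputable section

/-- The 3-dimensional Lorentzian metric `(1/2)(dt dy + dy dt) + dx² + (x³ + h(y)x) dy²`
on `ℝ³`, coordinates `(x,y,t) = (0,1,2)`. -/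
def g3 (h : ℝ → ℝ) (x : Fin 3 → ℝ) (i j : Fin 3) : ℝ :=
  if i = 0 ∧ j = 0 then 1
  else if (i = 1 ∧ j = 2) ∨ (i = 2 ∧ j = 1) then 1/2
  else if i = 1 ∧ j = 1 then (x 0)^3 + h (x 1) * x 0 else 0

/-- The inverse of `g3`. -/
def g3Inv (h : ℝ → ℝ) (x : Fin 3 → ℝ) (i j : Fin 3) : ℝ :=
  if i = 0 ∧ j = 0 then 1
  else if (i = 1 ∧ j = 2) ∨ (i = 2 ∧ j = 1) then 2
  else if i = 2 ∧ j = 2 then -(4 * ((x 0)^3 + h (x 1) * x 0)) else 0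


lemma pd_const' {ι : Type} [Fintype ι] [DecidableEq ι] (i : ι) (c : ℝ) (x : ι → ℝ) :
    pderiv' i (fun _ => c) x = 0 := by
  simp [pderiv', fderiv_const]

lemma g3_L1 (h : ℝ → ℝ) (x : Fin 3 → ℝ) (i l : Fin 3) :
    pderiv' i (fun y => g3 h y l 2) x = 0 := by
  have e : (fun y : Fin 3 → ℝ => g3 h y l 2) =
      fun _ => (if l = 0 ∧ (2:Fin 3) = 0 then (1:ℝ)
        else if (l = 1 ∧ (2:Fin 3) = 2) ∨ (l = 2 ∧ (2:Fin 3) = 1) then 1/2 else 0) := by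
    funext y
    simp [g3, show (2:Fin 3) ≠ 1 from by decide]
  rw [e, pd_const']

lemma g3_aux2 (h : ℝ → ℝ) (hh : ContDiff ℝ (⊤ : ℕ∞) h) (x : Fin 3 → ℝ) :
    pderiv' 2 (fun y : Fin 3 → ℝ => (y 0)^3 + h (y 1) * y 0) x = 0 := by
  have hp0 : HasFDerivAt (fun y : Fin 3 → ℝ => y 0)
      ((ContinuousLinearMap.proj 0 : (Fin 3 → ℝ) →L[ℝ] ℝ)) x := by
    exact (ContinuousLinearMap.proj (R:=ℝ) (φ:=fun _ : Fin 3 => ℝ) 0).hasFDerivAt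
  have hp1 : HasFDerivAt (fun y : Fin 3 → ℝ => y 1)
      ((ContinuousLinearMap.proj 1 : (Fin 3 → ℝ) →L[ℝ] ℝ)) x := by
    exact (ContinuousLinearMap.proj (R:=ℝ) (φ:=fun _ : Fin 3 => ℝ) 1).hasFDerivAt
  have hder : HasDerivAt h (deriv h (x 1)) (x 1) :=
    ((hh.differentiable (by simp)) (x 1)).hasDerivAt
  have h1 : HasFDerivAt (fun y : Fin 3 → ℝ => h (y 1))
      (deriv h (x 1) • (ContinuousLinearMap.proj 1 : (Fin 3 → ℝ) →L[ℝ] ℝ)) x :=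
    hder.comp_hasFDerivAt x hp1
  have H : HasFDerivAt (fun y : Fin 3 → ℝ => (y 0 * y 0) * y 0 + h (y 1) * y 0) _ x :=
    ((hp0.mul hp0).mul hp0).add (h1.mul hp0)
  have e : (fun y : Fin 3 → ℝ => (y 0)^3 + h (y 1) * y 0)
      = fun y : Fin 3 → ℝ => (y 0 * y 0) * y 0 + h (y 1) * y 0 := by
    funext y; ring
  rw [pderiv', e, H.fderiv]
  simp [Pi.single_apply]

lemma g3_L2 (h : ℝ → ℝ) (hh : ContDiff ℝ (⊤ : ℕ∞) h) (x : Fin 3 → ℝ) (l j : Fin 3) :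
    pderiv' 2 (fun y => g3 h y l j) x = 0 := by
  by_cases hc : l = 1 ∧ j = 1
  · obtain ⟨rfl, rfl⟩ := hc
    have e : (fun y : Fin 3 → ℝ => g3 h y 1 1)
        = fun y : Fin 3 → ℝ => (y 0)^3 + h (y 1) * y 0 := by
      funext y; simp [g3]
    rw [e]; exact g3_aux2 h hh x
  · have e : (fun y : Fin 3 → ℝ => g3 h y l j) =
        fun _ => (if l = 0 ∧ j = 0 then (1:ℝ)
          else if (l = 1 ∧ j = 2) ∨ (l = 2 ∧ j = 1) then 1/2 else 0) := by
      funext y; simp [g3, hc]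
    rw [e, pd_const']

/-- the coordinate vector field `k = ∂/∂t` is parallel for the Levi-Civita
connection of `g3` (its covariant derivative `∇_j k^a = Γ^a_{j t}` vanishes) and is null. -/
theorem parallel_null_field_3dim (h : ℝ → ℝ) (hh : ContDiff ℝ (⊤ : ℕ∞) h) :
    (∀ (x : Fin 3 → ℝ) (a j : Fin 3),
      christoffel (g3 h) (g3Inv h) a j 2 x = 0) ∧
    (∀ x : Fin 3 → ℝ, g3 h x 2 2 = 0) := by
  constructor
  · intro x a j
    simp only [christoffel, g3_L1, g3_L2 h hh]
    simp
  · intro x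
    simp [g3]
end
end

section
/- In the setting of the warped-product almost Einstein scale σ = A + B|x|² + Σᵢ cⁱxᵢ with f = a + b|x|², Sc̃ = −48ab and aB = −bA, the quantity J^σ := −(n/2) g(dσ,dσ) + σ Δσ + J σ² is constant on M' and equals 2nAB − (n/2)|c|². Consequently, on the set where σ ≠ 0 the Einstein metric σ⁻²𝐠 in the conformal class has scalar curvature Sc^σ = 2(n-1)J^σ = n(n-1)(4AB − |c|²). -/
noncomputable section

/-- The warped product metric `g = ḡ ⊕ f² g̃` on `ℝ^{nb} × M̃` (local coordinates), where
`ḡ` is the diagonal pseudo-Euclidean metric with signs `ε` and `g̃` a metric on the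
4-dimensional fiber. -/
def warpG (nb : ℕ) (ε : Fin nb → ℝ) (f : (Fin nb → ℝ) → ℝ)
    (gt : (Fin 4 → ℝ) → Fin 4 → Fin 4 → ℝ)
    (p : (Fin nb ⊕ Fin 4) → ℝ) : (Fin nb ⊕ Fin 4) → (Fin nb ⊕ Fin 4) → ℝ
  | Sum.inl a, Sum.inl b => if a = b then ε a else 0
  | Sum.inl _, Sum.inr _ => 0
  | Sum.inr _, Sum.inl _ => 0
  | Sum.inr α, Sum.inr β => (f (p ∘ Sum.inl))^2 * gt (p ∘ Sum.inr) α β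

/-- The inverse of the warped product metric. -/
def warpGinv (nb : ℕ) (ε : Fin nb → ℝ) (f : (Fin nb → ℝ) → ℝ)
    (gtinv : (Fin 4 → ℝ) → Fin 4 → Fin 4 → ℝ)
    (p : (Fin nb ⊕ Fin 4) → ℝ) : (Fin nb ⊕ Fin 4) → (Fin nb ⊕ Fin 4) → ℝ
  | Sum.inl a, Sum.inl b => if a = b then (ε a)⁻¹ else 0
  | Sum.inl _, Sum.inr _ => 0
  | Sum.inr _, Sum.inl _ => 0
  | Sum.inr α, Sum.inr β => ((f (p ∘ Sum.inl))⁻¹)^2 * gtinv (p ∘ Sum.inr) α β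


namespace WPAux

open Filter Topology

set_option linter.unusedSectionVars false
variable {ι : Type} [Fintype ι] [DecidableEq ι] {κ : Type} [Fintype κ] [DecidableEq κ]
variable {u v : (ι → ℝ) → ℝ} {p : ι → ℝ} {i : ι}

lemma pderiv'_congr (h : u =ᶠ[nhds p] v) : pderiv' i u p = pderiv' i v p := by
  unfold pderiv'; rw [h.fderiv_eq]

lemma pderiv'_funext (h : ∀ q, u q = v q) (i : ι) (p : ι → ℝ) :
    pderiv' i u p = pderiv' i v p := by
  have : u = v := funext h
  rw [this]

lemma pderiv'_const (c : ℝ) : pderiv' i (fun _ => c) p = 0 := by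
  simp [pderiv']

lemma pderiv'_zero : pderiv' i (fun _ => (0:ℝ)) p = 0 := pderiv'_const 0

lemma pderiv'_coord (j : ι) : pderiv' i (fun q => q j) p = if j = i then 1 else 0 := by
  have : (fun q : ι → ℝ => q j) = (ContinuousLinearMap.proj (R := ℝ) (φ := fun _ : ι => ℝ) j) := rfl
  rw [pderiv', this, ContinuousLinearMap.fderiv]
  simp [Pi.single_apply]

lemma pderiv'_add (hu : DifferentiableAt ℝ u p) (hv : DifferentiableAt ℝ v p) :
    pderiv' i (fun q => u q + v q) p = pderiv' i u p + pderiv' i v p := by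
  simp [pderiv', fderiv_fun_add hu hv]

lemma pderiv'_mul (hu : DifferentiableAt ℝ u p) (hv : DifferentiableAt ℝ v p) :
    pderiv' i (fun q => u q * v q) p = pderiv' i u p * v p + u p * pderiv' i v p := by
  simp [pderiv', fderiv_fun_mul hu hv]; ring

lemma pderiv'_const_mul (c : ℝ) (hv : DifferentiableAt ℝ v p) :
    pderiv' i (fun q => c * v q) p = c * pderiv' i v p := by
  simp [pderiv', fderiv_const_mul hv]

lemma pderiv'_neg : pderiv' i (fun q => -u q) p = -pderiv' i u p := by
  simp [pderiv', fderiv_neg]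

lemma pderiv'_sub (hu : DifferentiableAt ℝ u p) (hv : DifferentiableAt ℝ v p) :
    pderiv' i (fun q => u q - v q) p = pderiv' i u p - pderiv' i v p := by
  simp [pderiv', fderiv_fun_sub hu hv]

lemma pderiv'_sum {α : Type*} (s : Finset α) (w : α → (ι → ℝ) → ℝ)
    (h : ∀ a ∈ s, DifferentiableAt ℝ (w a) p) :
    pderiv' i (fun q => ∑ a ∈ s, w a q) p = ∑ a ∈ s, pderiv' i (w a) p := by
  simp only [pderiv']
  rw [fderiv_fun_sum h]
  simp

lemma pderiv'_inv (hu : DifferentiableAt ℝ u p) (h0 : u p ≠ 0) :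
    pderiv' i (fun q => (u q)⁻¹) p = -pderiv' i u p / (u p)^2 := by
  have hc : fderiv ℝ (fun q => (u q)⁻¹) p
      = (fderiv ℝ (Inv.inv : ℝ → ℝ) (u p)).comp (fderiv ℝ u p) :=
    fderiv_comp p (differentiableAt_inv h0) hu
  rw [pderiv', hc, fderiv_inv' h0, ContinuousLinearMap.comp_apply]
  simp only [ContinuousLinearMap.neg_apply, ContinuousLinearMap.mulLeftRight_apply, pderiv']
  field_simp

/-- the precomposition continuous linear map -/
def cmap (φ : κ → ι) : ((ι → ℝ)) →L[ℝ] (κ → ℝ) :=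
  ContinuousLinearMap.pi fun k => ContinuousLinearMap.proj (φ k)

lemma cmap_apply (φ : κ → ι) (q : ι → ℝ) : cmap φ q = q ∘ φ := rfl

lemma pderiv'_comp (φ : κ → ι) (w : (κ → ℝ) → ℝ) (q : ι → ℝ)
    (hw : DifferentiableAt ℝ w (q ∘ φ)) (i : ι) :
    pderiv' i (fun q => w (q ∘ φ)) q = fderiv ℝ w (q ∘ φ) ((Pi.single i 1) ∘ φ) := by
  have he : (fun q : ι → ℝ => w (q ∘ φ)) = w ∘ (cmap φ) := rfl
  have hthis : fderiv ℝ (w ∘ (cmap φ)) q = (fderiv ℝ w (q ∘ φ)).comp (cmap φ : _ →L[ℝ] _) := by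
    rw [fderiv_comp q (by exact hw) ((cmap φ).differentiableAt)]
    rw [ContinuousLinearMap.fderiv]
    rfl
  rw [pderiv', show (fun q : ι → ℝ => w (q ∘ φ)) = w ∘ (cmap φ) from rfl, hthis,
    ContinuousLinearMap.comp_apply, cmap_apply]

lemma diff_comp (φ : κ → ι) (w : (κ → ℝ) → ℝ) (q : ι → ℝ)
    (hw : DifferentiableAt ℝ w (q ∘ φ)) :
    DifferentiableAt ℝ (fun q : ι → ℝ => w (q ∘ φ)) q := by
  have he : (fun q : ι → ℝ => w (q ∘ φ)) = w ∘ (cmap φ) := rfl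
  rw [he]
  exact hw.comp q ((cmap φ).differentiableAt)

section SumType
variable {α β : Type} [Fintype α] [DecidableEq α] [Fintype β] [DecidableEq β]

lemma single_inr_comp_inr (γ : β) :
    (Pi.single (Sum.inr γ : α ⊕ β) (1:ℝ)) ∘ Sum.inr = Pi.single γ 1 := by
  funext δ
  simp [Pi.single_apply, Function.comp]

lemma single_inl_comp_inr (k : α) :
    (Pi.single (Sum.inl k : α ⊕ β) (1:ℝ)) ∘ Sum.inr = (0 : β → ℝ) := by
  funext δ
  simp [Pi.single_apply, Function.comp]

lemma single_inl_comp_inl (k : α) :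
    (Pi.single (Sum.inl k : α ⊕ β) (1:ℝ)) ∘ Sum.inl = Pi.single k 1 := by
  funext δ
  simp [Pi.single_apply, Function.comp]

lemma single_inr_comp_inl (γ : β) :
    (Pi.single (Sum.inr γ : α ⊕ β) (1:ℝ)) ∘ Sum.inl = (0 : α → ℝ) := by
  funext δ
  simp [Pi.single_apply, Function.comp]

lemma pderiv'_inr_inr (w : (β → ℝ) → ℝ) (q : (α ⊕ β) → ℝ)
    (hw : DifferentiableAt ℝ w (q ∘ Sum.inr)) (γ : β) :
    pderiv' (Sum.inr γ) (fun q => w (q ∘ Sum.inr)) q = pderiv' γ w (q ∘ Sum.inr) := by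
  rw [pderiv'_comp _ _ _ hw, single_inr_comp_inr]; rfl

lemma pderiv'_inl_inr (w : (β → ℝ) → ℝ) (q : (α ⊕ β) → ℝ)
    (hw : DifferentiableAt ℝ w (q ∘ Sum.inr)) (k : α) :
    pderiv' (Sum.inl k) (fun q => w (q ∘ Sum.inr)) q = 0 := by
  rw [pderiv'_comp _ _ _ hw, single_inl_comp_inr]
  simp

lemma pderiv'_inl_inl (w : (α → ℝ) → ℝ) (q : (α ⊕ β) → ℝ)
    (hw : DifferentiableAt ℝ w (q ∘ Sum.inl)) (k : α) :
    pderiv' (Sum.inl k) (fun q => w (q ∘ Sum.inl)) q = pderiv' k w (q ∘ Sum.inl) := by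
  rw [pderiv'_comp _ _ _ hw, single_inl_comp_inl]; rfl

lemma pderiv'_inr_inl (w : (α → ℝ) → ℝ) (q : (α ⊕ β) → ℝ)
    (hw : DifferentiableAt ℝ w (q ∘ Sum.inl)) (γ : β) :
    pderiv' (Sum.inr γ) (fun q => w (q ∘ Sum.inl)) q = 0 := by
  rw [pderiv'_comp _ _ _ hw, single_inr_comp_inl]
  simp

end SumType

lemma contDiff_pderiv (hu : ContDiff ℝ (⊤ : ℕ∞) u) (i : ι) :
    ContDiff ℝ (⊤ : ℕ∞) (fun y => pderiv' i u y) := by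
  have h1 : ContDiff ℝ (⊤ : ℕ∞) (fderiv ℝ u) := hu.fderiv_right (by simp)
  exact (ContinuousLinearMap.apply ℝ ℝ (Pi.single i 1)).contDiff.comp h1

lemma contDiff_christoffel {g ginv : (ι → ℝ) → ι → ι → ℝ}
    (hg : ∀ a b, ContDiff ℝ (⊤ : ℕ∞) (fun y => g y a b))
    (hginv : ∀ a b, ContDiff ℝ (⊤ : ℕ∞) (fun y => ginv y a b)) (k i j : ι) :
    ContDiff ℝ (⊤ : ℕ∞) (fun y => christoffel g ginv k i j y) := by
  unfold christoffel
  apply ContDiff.mul contDiff_const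
  apply ContDiff.sum
  intro l _
  exact (hginv k l).mul
    (((contDiff_pderiv (hg l j) i).add (contDiff_pderiv (hg l i) j)).sub
      (contDiff_pderiv (hg i j) l))

lemma differentiable_coord (j : ι) : Differentiable ℝ (fun q : ι → ℝ => q j) :=
  (ContinuousLinearMap.proj j : (ι → ℝ) →L[ℝ] ℝ).differentiable

lemma christoffel_symm {g ginv : (ι → ℝ) → ι → ι → ℝ}
    (hsym : ∀ y a b', g y a b' = g y b' a) (k i j : ι) (x : ι → ℝ) :
    christoffel g ginv k i j x = christoffel g ginv k j i x := by
  unfold christoffel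
  congr 1
  apply Finset.sum_congr rfl
  intro l _
  rw [pderiv'_funext (fun q => hsym q i j) l x]
  ring_nf

lemma differentiable_quadlin (a0 b0 : ℝ) (e0 c0 : ι → ℝ) :
    Differentiable ℝ (fun x : ι → ℝ =>
      a0 + b0 * ∑ k, e0 k * (x k)^2 + ∑ k, c0 k * x k) := by
  apply Differentiable.add
  · apply Differentiable.add (differentiable_const _)
    apply Differentiable.const_mul
    apply Differentiable.fun_sum
    intro k _
    have : (fun x : ι → ℝ => e0 k * (x k)^2) = fun x => e0 k * (x k * x k) := by
      funext x; ring
    rw [this]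
    exact ((differentiable_coord k).fun_mul (differentiable_coord k)).const_mul _
  · exact Differentiable.fun_sum fun k _ => (differentiable_coord k).const_mul _

lemma pderiv'_quadlin (a0 b0 : ℝ) (e0 c0 : ι → ℝ) (i : ι) (p : ι → ℝ) :
    pderiv' i (fun x : ι → ℝ => a0 + b0 * ∑ k, e0 k * (x k)^2 + ∑ k, c0 k * x k) p
      = 2 * b0 * e0 i * p i + c0 i := by
  have hrw : (fun x : ι → ℝ => a0 + b0 * ∑ k, e0 k * (x k)^2 + ∑ k, c0 k * x k)
      = fun x : ι → ℝ => (a0 + b0 * ∑ k, e0 k * (x k * x k)) + ∑ k, c0 k * x k := by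
    funext x; simp only [pow_two]
  rw [hrw]
  have d1 : DifferentiableAt ℝ (fun x : ι → ℝ => a0 + b0 * ∑ k, e0 k * (x k * x k)) p := by
    apply DifferentiableAt.add (differentiableAt_const _)
    exact DifferentiableAt.const_mul (DifferentiableAt.fun_sum fun k _ =>
      (((differentiable_coord k) p).fun_mul ((differentiable_coord k) p)).const_mul _) _
  have d2 : DifferentiableAt ℝ (fun x : ι → ℝ => ∑ k, c0 k * x k) p :=
    DifferentiableAt.fun_sum fun k _ => ((differentiable_coord k) p).const_mul _
  rw [pderiv'_add d1 d2]
  have h1 : pderiv' i (fun x : ι → ℝ => a0 + b0 * ∑ k, e0 k * (x k * x k)) p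
      = 2 * b0 * e0 i * p i := by
    rw [pderiv'_add (differentiableAt_const _) (by
      exact DifferentiableAt.const_mul (DifferentiableAt.fun_sum fun k _ =>
        (((differentiable_coord k) p).fun_mul ((differentiable_coord k) p)).const_mul _) _)]
    rw [pderiv'_const]
    rw [pderiv'_const_mul _ (DifferentiableAt.fun_sum fun k _ =>
      (((differentiable_coord k) p).fun_mul ((differentiable_coord k) p)).const_mul _)]
    rw [pderiv'_sum Finset.univ _ (fun k _ =>
      (((differentiable_coord k) p).fun_mul ((differentiable_coord k) p)).const_mul _)]
    have : ∀ k, pderiv' i (fun x : ι → ℝ => e0 k * (x k * x k)) p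
        = if k = i then 2 * e0 k * p k else 0 := by
      intro k
      rw [pderiv'_const_mul _ (((differentiable_coord k) p).fun_mul ((differentiable_coord k) p))]
      rw [pderiv'_mul ((differentiable_coord k) p) ((differentiable_coord k) p),
        pderiv'_coord]
      by_cases h : k = i <;> simp [h] <;> ring
    simp only [this]
    rw [Finset.sum_ite_eq' Finset.univ i (fun k => 2 * e0 k * p k)]
    simp; ring
  have h2 : pderiv' i (fun x : ι → ℝ => ∑ k, c0 k * x k) p = c0 i := by
    rw [pderiv'_sum Finset.univ _ (fun k _ => ((differentiable_coord k) p).const_mul _)]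
    have : ∀ k, pderiv' i (fun x : ι → ℝ => c0 k * x k) p = if k = i then c0 k else 0 := by
      intro k
      rw [pderiv'_const_mul _ ((differentiable_coord k) p), pderiv'_coord]
      by_cases h : k = i <;> simp [h]
    simp only [this]
    rw [Finset.sum_ite_eq' Finset.univ i c0]
    simp
  rw [h1, h2]

lemma differentiable_quad (a0 b0 : ℝ) (e0 : ι → ℝ) :
    Differentiable ℝ (fun x : ι → ℝ => a0 + b0 * ∑ k, e0 k * (x k)^2) := by
  apply Differentiable.add (differentiable_const _)
  apply Differentiable.const_mul
  apply Differentiable.fun_sum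
  intro k _
  have : (fun x : ι → ℝ => e0 k * (x k)^2) = fun x => e0 k * (x k * x k) := by
    funext x; ring
  rw [this]
  exact ((differentiable_coord k).fun_mul (differentiable_coord k)).const_mul _

lemma pderiv'_quad (a0 b0 : ℝ) (e0 : ι → ℝ) (i : ι) (p : ι → ℝ) :
    pderiv' i (fun x : ι → ℝ => a0 + b0 * ∑ k, e0 k * (x k)^2) p
      = 2 * b0 * e0 i * p i := by
  have hrw : (fun x : ι → ℝ => a0 + b0 * ∑ k, e0 k * (x k)^2)
      = fun x : ι → ℝ => a0 + b0 * ∑ k, e0 k * (x k)^2 + ∑ k, (0:ℝ) * x k := by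
    funext x; simp
  rw [hrw, pderiv'_quadlin]
  simp

lemma ev_eq_of_ne {F0 : (ι → ℝ) → ℝ} (hF0 : Continuous F0) {p : ι → ℝ} (hp : F0 p ≠ 0)
    {u v : (ι → ℝ) → ℝ} (h : ∀ q, F0 q ≠ 0 → u q = v q) : u =ᶠ[nhds p] v := by
  have ho : IsOpen {q : ι → ℝ | F0 q ≠ 0} := IsOpen.preimage hF0 isOpen_ne
  exact Filter.eventuallyEq_of_mem (ho.mem_nhds hp) h

section Warp
variable (nb : ℕ) (ε : Fin nb → ℝ) (f : (Fin nb → ℝ) → ℝ)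
  (gt gtinv : (Fin 4 → ℝ) → Fin 4 → Fin 4 → ℝ)

lemma Wi_bb (q : (Fin nb ⊕ Fin 4) → ℝ) (m j : Fin nb) :
    warpGinv nb ε f gtinv q (Sum.inl m) (Sum.inl j) = if m = j then (ε m)⁻¹ else 0 := rfl
lemma Wi_bf (q : (Fin nb ⊕ Fin 4) → ℝ) (m : Fin nb) (β : Fin 4) :
    warpGinv nb ε f gtinv q (Sum.inl m) (Sum.inr β) = 0 := rfl
lemma Wi_fb (q : (Fin nb ⊕ Fin 4) → ℝ) (α : Fin 4) (m : Fin nb) :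
    warpGinv nb ε f gtinv q (Sum.inr α) (Sum.inl m) = 0 := rfl
lemma Wi_ff (q : (Fin nb ⊕ Fin 4) → ℝ) (α β : Fin 4) :
    warpGinv nb ε f gtinv q (Sum.inr α) (Sum.inr β)
      = ((f (q ∘ Sum.inl))⁻¹)^2 * gtinv (q ∘ Sum.inr) α β := rfl

lemma W_bb (q : (Fin nb ⊕ Fin 4) → ℝ) (m j : Fin nb) :
    warpG nb ε f gt q (Sum.inl m) (Sum.inl j) = if m = j then ε m else 0 := rfl
lemma W_bf (q : (Fin nb ⊕ Fin 4) → ℝ) (m : Fin nb) (β : Fin 4) :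
    warpG nb ε f gt q (Sum.inl m) (Sum.inr β) = 0 := rfl
lemma W_fb (q : (Fin nb ⊕ Fin 4) → ℝ) (α : Fin 4) (m : Fin nb) :
    warpG nb ε f gt q (Sum.inr α) (Sum.inl m) = 0 := rfl
lemma W_ff (q : (Fin nb ⊕ Fin 4) → ℝ) (α β : Fin 4) :
    warpG nb ε f gt q (Sum.inr α) (Sum.inr β)
      = (f (q ∘ Sum.inl))^2 * gt (q ∘ Sum.inr) α β := rfl

variable {f gt gtinv}

lemma warpG_symm (hgtsym : ∀ y α β, gt y α β = gt y β α) (q : (Fin nb ⊕ Fin 4) → ℝ)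
    (a b' : Fin nb ⊕ Fin 4) : warpG nb ε f gt q a b' = warpG nb ε f gt q b' a := by
  rcases a with m | α <;> rcases b' with j | β
  · rw [W_bb, W_bb]; rcases eq_or_ne m j with h | h
    · rw [h]
    · simp [h, h.symm]
  · rw [W_bf, W_fb]
  · rw [W_fb, W_bf]
  · rw [W_ff, W_ff, hgtsym]

-- differentiability of pullbacks
lemma Fq_diffAt (hf : Differentiable ℝ f) (q : (Fin nb ⊕ Fin 4) → ℝ) :
    DifferentiableAt ℝ (fun y : (Fin nb ⊕ Fin 4) → ℝ => f (y ∘ Sum.inl)) q :=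
  diff_comp Sum.inl f q (hf _)

lemma Gtq_diffAt {w : (Fin 4 → ℝ) → ℝ} (hw : Differentiable ℝ w) (q : (Fin nb ⊕ Fin 4) → ℝ) :
    DifferentiableAt ℝ (fun y : (Fin nb ⊕ Fin 4) → ℝ => w (y ∘ Sum.inr)) q :=
  diff_comp Sum.inr w q (hw _)

lemma dFq_l (hf : Differentiable ℝ f) (q : (Fin nb ⊕ Fin 4) → ℝ) (i : Fin nb) :
    pderiv' (Sum.inl i) (fun y : (Fin nb ⊕ Fin 4) → ℝ => f (y ∘ Sum.inl)) q
      = pderiv' i f (q ∘ Sum.inl) :=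
  pderiv'_inl_inl f q (hf _) i

lemma dFq_r (hf : Differentiable ℝ f) (q : (Fin nb ⊕ Fin 4) → ℝ) (γ : Fin 4) :
    pderiv' (Sum.inr γ) (fun y : (Fin nb ⊕ Fin 4) → ℝ => f (y ∘ Sum.inl)) q = 0 :=
  pderiv'_inr_inl f q (hf _) γ

lemma dGt_l {w : (Fin 4 → ℝ) → ℝ} (hw : Differentiable ℝ w) (q : (Fin nb ⊕ Fin 4) → ℝ)
    (i : Fin nb) :
    pderiv' (Sum.inl i) (fun y : (Fin nb ⊕ Fin 4) → ℝ => w (y ∘ Sum.inr)) q = 0 :=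
  pderiv'_inl_inr w q (hw _) i

lemma dGt_r {w : (Fin 4 → ℝ) → ℝ} (hw : Differentiable ℝ w) (q : (Fin nb ⊕ Fin 4) → ℝ)
    (γ : Fin 4) :
    pderiv' (Sum.inr γ) (fun y : (Fin nb ⊕ Fin 4) → ℝ => w (y ∘ Sum.inr)) q
      = pderiv' γ w (q ∘ Sum.inr) :=
  pderiv'_inr_inr w q (hw _) γ

-- derivatives of warp metric components
lemma dW_bb (m j : Fin nb) (d : Fin nb ⊕ Fin 4) (q : (Fin nb ⊕ Fin 4) → ℝ) :
    pderiv' d (fun y => warpG nb ε f gt y (Sum.inl m) (Sum.inl j)) q = 0 := by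
  have h : (fun y : (Fin nb ⊕ Fin 4) → ℝ => warpG nb ε f gt y (Sum.inl m) (Sum.inl j))
      = fun _ => if m = j then ε m else 0 := rfl
  rw [h, pderiv'_const]

lemma dW_bf (m : Fin nb) (β : Fin 4) (d : Fin nb ⊕ Fin 4) (q : (Fin nb ⊕ Fin 4) → ℝ) :
    pderiv' d (fun y => warpG nb ε f gt y (Sum.inl m) (Sum.inr β)) q = 0 := by
  have h : (fun y : (Fin nb ⊕ Fin 4) → ℝ => warpG nb ε f gt y (Sum.inl m) (Sum.inr β))
      = fun _ => (0:ℝ) := rfl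
  rw [h, pderiv'_const]

lemma dW_fb (α : Fin 4) (m : Fin nb) (d : Fin nb ⊕ Fin 4) (q : (Fin nb ⊕ Fin 4) → ℝ) :
    pderiv' d (fun y => warpG nb ε f gt y (Sum.inr α) (Sum.inl m)) q = 0 := by
  have h : (fun y : (Fin nb ⊕ Fin 4) → ℝ => warpG nb ε f gt y (Sum.inr α) (Sum.inl m))
      = fun _ => (0:ℝ) := rfl
  rw [h, pderiv'_const]

lemma dW_ff_l (hf : Differentiable ℝ f)
    (hgt : ∀ α β, Differentiable ℝ (fun y => gt y α β))
    (i : Fin nb) (α β : Fin 4) (q : (Fin nb ⊕ Fin 4) → ℝ) :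
    pderiv' (Sum.inl i) (fun y => warpG nb ε f gt y (Sum.inr α) (Sum.inr β)) q
      = 2 * f (q ∘ Sum.inl) * pderiv' i f (q ∘ Sum.inl) * gt (q ∘ Sum.inr) α β := by
  have h0 : (fun y : (Fin nb ⊕ Fin 4) → ℝ => warpG nb ε f gt y (Sum.inr α) (Sum.inr β))
      = fun y => (f (y ∘ Sum.inl) * f (y ∘ Sum.inl)) * gt (y ∘ Sum.inr) α β := by
    funext y
    rw [W_ff]; ring
  rw [h0]
  rw [pderiv'_mul ((Fq_diffAt nb hf q).fun_mul (Fq_diffAt nb hf q)) (Gtq_diffAt nb (hgt α β) q)]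
  rw [pderiv'_mul (Fq_diffAt nb hf q) (Fq_diffAt nb hf q)]
  rw [dFq_l nb hf q i, dGt_l nb (hgt α β) q i]
  ring

lemma dW_ff_r (hf : Differentiable ℝ f)
    (hgt : ∀ α β, Differentiable ℝ (fun y => gt y α β))
    (γ : Fin 4) (α β : Fin 4) (q : (Fin nb ⊕ Fin 4) → ℝ) :
    pderiv' (Sum.inr γ) (fun y => warpG nb ε f gt y (Sum.inr α) (Sum.inr β)) q
      = (f (q ∘ Sum.inl))^2 * pderiv' γ (fun y => gt y α β) (q ∘ Sum.inr) := by
  have h0 : (fun y : (Fin nb ⊕ Fin 4) → ℝ => warpG nb ε f gt y (Sum.inr α) (Sum.inr β))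
      = fun y => (f (y ∘ Sum.inl) * f (y ∘ Sum.inl)) * gt (y ∘ Sum.inr) α β := by
    funext y
    rw [W_ff]; ring
  rw [h0]
  rw [pderiv'_mul ((Fq_diffAt nb hf q).fun_mul (Fq_diffAt nb hf q)) (Gtq_diffAt nb (hgt α β) q)]
  rw [pderiv'_mul (Fq_diffAt nb hf q) (Fq_diffAt nb hf q)]
  rw [dFq_r nb hf q γ, dGt_r nb (hgt α β) q γ]
  ring

end Warp

section Chr
variable (nb : ℕ) (ε : Fin nb → ℝ) {f : (Fin nb → ℝ) → ℝ}
  {gt gtinv : (Fin 4 → ℝ) → Fin 4 → Fin 4 → ℝ}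

lemma chr_bbb (k i j : Fin nb) (q : (Fin nb ⊕ Fin 4) → ℝ) :
    christoffel (warpG nb ε f gt) (warpGinv nb ε f gtinv)
      (Sum.inl k) (Sum.inl i) (Sum.inl j) q = 0 := by
  unfold christoffel
  rw [Fintype.sum_sum_type]
  simp only [Wi_bb, Wi_bf, dW_bb, dW_bf, dW_fb]
  simp

lemma chr_fbb (γ : Fin 4) (i j : Fin nb) (q : (Fin nb ⊕ Fin 4) → ℝ) :
    christoffel (warpG nb ε f gt) (warpGinv nb ε f gtinv)
      (Sum.inr γ) (Sum.inl i) (Sum.inl j) q = 0 := by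
  unfold christoffel
  rw [Fintype.sum_sum_type]
  simp only [Wi_fb, Wi_ff, dW_bb, dW_bf, dW_fb]
  simp

lemma chr_bbf (k i : Fin nb) (β : Fin 4) (q : (Fin nb ⊕ Fin 4) → ℝ) :
    christoffel (warpG nb ε f gt) (warpGinv nb ε f gtinv)
      (Sum.inl k) (Sum.inl i) (Sum.inr β) q = 0 := by
  unfold christoffel
  rw [Fintype.sum_sum_type]
  simp only [Wi_bb, Wi_bf, dW_bb, dW_bf, dW_fb]
  simp

lemma chr_bff (hf : Differentiable ℝ f) (hgt : ∀ α β, Differentiable ℝ (fun y => gt y α β))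
    (k : Fin nb) (α β : Fin 4) (q : (Fin nb ⊕ Fin 4) → ℝ) :
    christoffel (warpG nb ε f gt) (warpGinv nb ε f gtinv)
      (Sum.inl k) (Sum.inr α) (Sum.inr β) q
      = -((ε k)⁻¹ * (f (q ∘ Sum.inl) * (pderiv' k f (q ∘ Sum.inl) * gt (q ∘ Sum.inr) α β))) := by
  unfold christoffel
  rw [Fintype.sum_sum_type]
  simp only [Wi_bb, Wi_bf, dW_bf nb, dW_fb nb, dW_ff_l nb ε hf hgt, ite_mul, zero_mul,
    Finset.sum_ite_eq, Finset.mem_univ, if_true]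
  simp only [Finset.sum_const_zero]
  ring

lemma chr_fbf (hf : Differentiable ℝ f) (hgt : ∀ α β, Differentiable ℝ (fun y => gt y α β))
    (hinv' : ∀ y α β, ∑ δ, gtinv y α δ * gt y δ β = if α = β then 1 else 0)
    (γ : Fin 4) (i : Fin nb) (β : Fin 4) (q : (Fin nb ⊕ Fin 4) → ℝ)
    (hq : f (q ∘ Sum.inl) ≠ 0) :
    christoffel (warpG nb ε f gt) (warpGinv nb ε f gtinv)
      (Sum.inr γ) (Sum.inl i) (Sum.inr β) q
      = if γ = β then (f (q ∘ Sum.inl))⁻¹ * pderiv' i f (q ∘ Sum.inl) else 0 := by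
  unfold christoffel
  rw [Fintype.sum_sum_type]
  simp only [Wi_fb, Wi_ff, dW_bf nb, dW_fb nb, dW_ff_l nb ε hf hgt, zero_mul]
  rw [Finset.sum_congr rfl (fun δ (_ : δ ∈ Finset.univ) =>
    (by ring : ((f (q ∘ Sum.inl))⁻¹)^2 * gtinv (q ∘ Sum.inr) γ δ *
      (2 * f (q ∘ Sum.inl) * pderiv' i f (q ∘ Sum.inl) * gt (q ∘ Sum.inr) δ β + 0 - 0)
      = (((f (q ∘ Sum.inl))⁻¹)^2 * (2 * f (q ∘ Sum.inl) * pderiv' i f (q ∘ Sum.inl)))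
          * (gtinv (q ∘ Sum.inr) γ δ * gt (q ∘ Sum.inr) δ β)))]
  rw [← Finset.mul_sum, hinv']
  by_cases hgb : γ = β
  · simp only [hgb, if_true]
    field_simp
    simp
  · simp [hgb]

lemma chr_fff (hf : Differentiable ℝ f) (hgt : ∀ α β, Differentiable ℝ (fun y => gt y α β))
    (γ α β : Fin 4) (q : (Fin nb ⊕ Fin 4) → ℝ) (hq : f (q ∘ Sum.inl) ≠ 0) :
    christoffel (warpG nb ε f gt) (warpGinv nb ε f gtinv)
      (Sum.inr γ) (Sum.inr α) (Sum.inr β) q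
      = christoffel gt gtinv γ α β (q ∘ Sum.inr) := by
  unfold christoffel
  rw [Fintype.sum_sum_type]
  simp only [Wi_fb, Wi_ff, dW_ff_r nb ε hf hgt, zero_mul]
  rw [Finset.sum_congr rfl (fun δ (_ : δ ∈ Finset.univ) =>
    (by field_simp : ((f (q ∘ Sum.inl))⁻¹)^2 * gtinv (q ∘ Sum.inr) γ δ *
      ((f (q ∘ Sum.inl))^2 * pderiv' α (fun y => gt y δ β) (q ∘ Sum.inr)
        + (f (q ∘ Sum.inl))^2 * pderiv' β (fun y => gt y δ α) (q ∘ Sum.inr)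
        - (f (q ∘ Sum.inl))^2 * pderiv' δ (fun y => gt y α β) (q ∘ Sum.inr))
      = gtinv (q ∘ Sum.inr) γ δ *
        (pderiv' α (fun y => gt y δ β) (q ∘ Sum.inr)
          + pderiv' β (fun y => gt y δ α) (q ∘ Sum.inr)
          - pderiv' δ (fun y => gt y α β) (q ∘ Sum.inr))))]
  simp

end Chr

lemma pderiv'_of_zero {u : (ι → ℝ) → ℝ} (h : ∀ q, u q = 0) (i : ι) (p : ι → ℝ) :
    pderiv' i u p = 0 := by
  rw [pderiv'_funext h i p, pderiv'_const]

section Riem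
variable (nb : ℕ) (ε : Fin nb → ℝ) {f : (Fin nb → ℝ) → ℝ}
  {gt gtinv : (Fin 4 → ℝ) → Fin 4 → Fin 4 → ℝ}

lemma Fq_cont (hf : ContDiff ℝ (⊤ : ℕ∞) f) :
    Continuous (fun q : (Fin nb ⊕ Fin 4) → ℝ => f (q ∘ Sum.inl)) := by
  have h : (fun q : (Fin nb ⊕ Fin 4) → ℝ => f (q ∘ Sum.inl))
      = f ∘ (cmap Sum.inl : ((Fin nb ⊕ Fin 4) → ℝ) →L[ℝ] (Fin nb → ℝ)) := rfl
  rw [h]; exact (hf.continuous).comp (cmap Sum.inl).continuous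

lemma chr_ffb (hf : Differentiable ℝ f) (hgtsym : ∀ y α β, gt y α β = gt y β α)
    (hgt : ∀ α β, Differentiable ℝ (fun y => gt y α β))
    (hinv' : ∀ y α β, ∑ δ, gtinv y α δ * gt y δ β = if α = β then 1 else 0)
    (γ γ' : Fin 4) (j : Fin nb) (q : (Fin nb ⊕ Fin 4) → ℝ) (hq : f (q ∘ Sum.inl) ≠ 0) :
    christoffel (warpG nb ε f gt) (warpGinv nb ε f gtinv)
      (Sum.inr γ) (Sum.inr γ') (Sum.inl j) q
      = if γ = γ' then (f (q ∘ Sum.inl))⁻¹ * pderiv' j f (q ∘ Sum.inl) else 0 := by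
  rw [christoffel_symm (fun y a b' => warpG_symm nb ε hgtsym y a b')]
  exact chr_fbf nb ε hf hgt hinv' γ j γ' q hq

lemma chr_bfb (k i : Fin nb) (β : Fin 4) (hgtsym : ∀ y α β, gt y α β = gt y β α)
    (q : (Fin nb ⊕ Fin 4) → ℝ) :
    christoffel (warpG nb ε f gt) (warpGinv nb ε f gtinv)
      (Sum.inl k) (Sum.inr β) (Sum.inl i) q = 0 := by
  rw [christoffel_symm (fun y a b' => warpG_symm nb ε hgtsym y a b')]
  exact chr_bbf nb ε k i β q

lemma chr_fbf' (hf : Differentiable ℝ f) (hgtsym : ∀ y α β, gt y α β = gt y β α)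
    (hgt : ∀ α β, Differentiable ℝ (fun y => gt y α β))
    (hinv' : ∀ y α β, ∑ δ, gtinv y α δ * gt y δ β = if α = β then 1 else 0)
    (γ : Fin 4) (β : Fin 4) (i : Fin nb) (q : (Fin nb ⊕ Fin 4) → ℝ)
    (hq : f (q ∘ Sum.inl) ≠ 0) :
    christoffel (warpG nb ε f gt) (warpGinv nb ε f gtinv)
      (Sum.inr γ) (Sum.inr β) (Sum.inl i) q
      = if γ = β then (f (q ∘ Sum.inl))⁻¹ * pderiv' i f (q ∘ Sum.inl) else 0 :=
  chr_ffb nb ε hf hgtsym hgt hinv' γ β i q hq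

-- derivative of Γ^{inr γ}_{(inr γ)(inl j)} in a base direction
lemma dchr_ffb (hf : ContDiff ℝ (⊤ : ℕ∞) f) (hgtsym : ∀ y α β, gt y α β = gt y β α)
    (hgt : ∀ α β, Differentiable ℝ (fun y => gt y α β))
    (hinv' : ∀ y α β, ∑ δ, gtinv y α δ * gt y δ β = if α = β then 1 else 0)
    (γ : Fin 4) (i j : Fin nb) (p : (Fin nb ⊕ Fin 4) → ℝ) (hp : f (p ∘ Sum.inl) ≠ 0) :
    pderiv' (Sum.inl i) (fun q => christoffel (warpG nb ε f gt) (warpGinv nb ε f gtinv)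
        (Sum.inr γ) (Sum.inr γ) (Sum.inl j) q) p
      = -(pderiv' i f (p ∘ Sum.inl) * pderiv' j f (p ∘ Sum.inl)) / (f (p ∘ Sum.inl))^2
        + (f (p ∘ Sum.inl))⁻¹ * pderiv' i (fun x => pderiv' j f x) (p ∘ Sum.inl) := by
  have hfd := hf.differentiable (by simp)
  have hev : (fun q => christoffel (warpG nb ε f gt) (warpGinv nb ε f gtinv)
        (Sum.inr γ) (Sum.inr γ) (Sum.inl j) q)
      =ᶠ[nhds p] (fun q => (f (q ∘ Sum.inl))⁻¹ * pderiv' j f (q ∘ Sum.inl)) := by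
    refine ev_eq_of_ne (Fq_cont nb hf) hp (fun q hq => ?_)
    rw [chr_ffb nb ε hfd hgtsym hgt hinv' γ γ j q hq]
    simp
  rw [pderiv'_congr hev]
  have d2 : DifferentiableAt ℝ (fun q : (Fin nb ⊕ Fin 4) → ℝ => pderiv' j f (q ∘ Sum.inl)) p :=
    diff_comp Sum.inl (fun x => pderiv' j f x) p
      (((contDiff_pderiv hf j).differentiable (by simp)) _)
  rw [pderiv'_mul ((Fq_diffAt nb hfd p).fun_inv hp) d2,
    pderiv'_inv (Fq_diffAt nb hfd p) hp, dFq_l nb hfd p i,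
    pderiv'_inl_inl (fun x => pderiv' j f x) p
      (((contDiff_pderiv hf j).differentiable (by simp)) _) i]
  ring

-- derivative of Γ^{inl k}_{(inr α)(inr β)} in a base direction
lemma dchr_bff (hf : ContDiff ℝ (⊤ : ℕ∞) f)
    (hgt : ∀ α β, Differentiable ℝ (fun y => gt y α β))
    (i k : Fin nb) (α β : Fin 4) (p : (Fin nb ⊕ Fin 4) → ℝ) :
    pderiv' (Sum.inl i) (fun q => christoffel (warpG nb ε f gt) (warpGinv nb ε f gtinv)
        (Sum.inl k) (Sum.inr α) (Sum.inr β) q) p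
      = -((ε k)⁻¹ * (pderiv' i f (p ∘ Sum.inl) * pderiv' k f (p ∘ Sum.inl)
          + f (p ∘ Sum.inl) * pderiv' i (fun x => pderiv' k f x) (p ∘ Sum.inl))
            * gt (p ∘ Sum.inr) α β) := by
  have hfd := hf.differentiable (by simp)
  rw [pderiv'_funext (fun q => chr_bff nb ε hfd hgt k α β q) _ p]
  have dP : DifferentiableAt ℝ (fun q : (Fin nb ⊕ Fin 4) → ℝ => pderiv' k f (q ∘ Sum.inl)) p :=
    diff_comp Sum.inl (fun x => pderiv' k f x) p
      (((contDiff_pderiv hf k).differentiable (by simp)) _)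
  have dGt : DifferentiableAt ℝ (fun q : (Fin nb ⊕ Fin 4) → ℝ => gt (q ∘ Sum.inr) α β) p :=
    Gtq_diffAt nb (hgt α β) p
  rw [pderiv'_neg, pderiv'_const_mul _ ((Fq_diffAt nb hfd p).fun_mul (dP.fun_mul dGt)),
    pderiv'_mul (Fq_diffAt nb hfd p) (dP.fun_mul dGt), pderiv'_mul dP dGt,
    dFq_l nb hfd p i, dGt_l nb (hgt α β) p i,
    pderiv'_inl_inl (fun x => pderiv' k f x) p
      (((contDiff_pderiv hf k).differentiable (by simp)) _) i]
  ring

-- derivative of Γ^{inr γ}_{(inr α)(inr β)} in a fiber direction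
lemma dchr_fff (hf : ContDiff ℝ (⊤ : ℕ∞) f)
    (hgtsm : ∀ α β, ContDiff ℝ (⊤ : ℕ∞) (fun y => gt y α β))
    (hgtinvsm : ∀ α β, ContDiff ℝ (⊤ : ℕ∞) (fun y => gtinv y α β))
    (γ α β δ : Fin 4) (p : (Fin nb ⊕ Fin 4) → ℝ) (hp : f (p ∘ Sum.inl) ≠ 0) :
    pderiv' (Sum.inr δ) (fun q => christoffel (warpG nb ε f gt) (warpGinv nb ε f gtinv)
        (Sum.inr γ) (Sum.inr α) (Sum.inr β) q) p
      = pderiv' δ (fun y => christoffel gt gtinv γ α β y) (p ∘ Sum.inr) := by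
  have hfd := hf.differentiable (by simp)
  have hgt : ∀ α β, Differentiable ℝ (fun y => gt y α β) :=
    fun α β => (hgtsm α β).differentiable (by simp)
  have hev : (fun q => christoffel (warpG nb ε f gt) (warpGinv nb ε f gtinv)
        (Sum.inr γ) (Sum.inr α) (Sum.inr β) q)
      =ᶠ[nhds p] (fun q => christoffel gt gtinv γ α β (q ∘ Sum.inr)) :=
    ev_eq_of_ne (Fq_cont nb hf) hp (fun q hq => chr_fff nb ε hfd hgt γ α β q hq)
  rw [pderiv'_congr hev]
  exact pderiv'_inr_inr (fun y => christoffel gt gtinv γ α β y) p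
    ((contDiff_christoffel hgtsm hgtinvsm γ α β).differentiable (by simp) _) δ

end Riem

section Riem2
variable (nb : ℕ) (ε : Fin nb → ℝ) {f : (Fin nb → ℝ) → ℝ}
  {gt gtinv : (Fin 4 → ℝ) → Fin 4 → Fin 4 → ℝ}

lemma riem_bb_b (k i j : Fin nb) (p : (Fin nb ⊕ Fin 4) → ℝ) :
    riemUp (warpG nb ε f gt) (warpGinv nb ε f gtinv)
      (Sum.inl k) (Sum.inl k) (Sum.inl i) (Sum.inl j) p = 0 := by
  unfold riemUp
  rw [pderiv'_of_zero (fun q => chr_bbb nb ε k i j q),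
    pderiv'_of_zero (fun q => chr_bbb nb ε k k j q),
    Fintype.sum_sum_type, Fintype.sum_sum_type]
  simp [chr_bbb nb ε, chr_fbb nb ε, chr_bbf nb ε]

lemma riem_bb_f (hf : ContDiff ℝ (⊤ : ℕ∞) f) (hgtsym : ∀ y α β, gt y α β = gt y β α)
    (hgt : ∀ α β, Differentiable ℝ (fun y => gt y α β))
    (hinv' : ∀ y α β, ∑ δ, gtinv y α δ * gt y δ β = if α = β then 1 else 0)
    (γ : Fin 4) (i j : Fin nb) (p : (Fin nb ⊕ Fin 4) → ℝ) (hp : f (p ∘ Sum.inl) ≠ 0) :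
    riemUp (warpG nb ε f gt) (warpGinv nb ε f gtinv)
      (Sum.inr γ) (Sum.inr γ) (Sum.inl i) (Sum.inl j) p
      = -((f (p ∘ Sum.inl))⁻¹ * pderiv' i (fun x => pderiv' j f x) (p ∘ Sum.inl)) := by
  have hfd := hf.differentiable (by simp)
  unfold riemUp
  rw [pderiv'_of_zero (fun q => chr_fbb nb ε γ i j q),
    dchr_ffb nb ε hf hgtsym hgt hinv' γ i j p hp,
    Fintype.sum_sum_type, Fintype.sum_sum_type]
  have h4 : ∑ δ : Fin 4, christoffel (warpG nb ε f gt) (warpGinv nb ε f gtinv)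
        (Sum.inr γ) (Sum.inl i) (Sum.inr δ) p *
      christoffel (warpG nb ε f gt) (warpGinv nb ε f gtinv)
        (Sum.inr δ) (Sum.inr γ) (Sum.inl j) p
      = ((f (p ∘ Sum.inl))⁻¹ * pderiv' i f (p ∘ Sum.inl))
        * ((f (p ∘ Sum.inl))⁻¹ * pderiv' j f (p ∘ Sum.inl)) := by
    rw [Finset.sum_congr rfl (fun δ _ => by
      rw [chr_fbf nb ε hfd hgt hinv' γ i δ p hp,
        chr_ffb nb ε hfd hgtsym hgt hinv' δ γ j p hp])]
    rw [Finset.sum_eq_single γ]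
    · simp
    · intro δ _ hne; simp [hne, Ne.symm hne]
    · simp
  rw [h4]
  simp only [chr_bbb nb ε, chr_fbb nb ε, mul_zero, zero_mul, Finset.sum_const_zero]
  field_simp
  ring

lemma riem_ff_b (hf : ContDiff ℝ (⊤ : ℕ∞) f) (hgtsym : ∀ y α β, gt y α β = gt y β α)
    (hgt : ∀ α β, Differentiable ℝ (fun y => gt y α β))
    (hinv' : ∀ y α β, ∑ δ, gtinv y α δ * gt y δ β = if α = β then 1 else 0)
    (k : Fin nb) (α β : Fin 4) (p : (Fin nb ⊕ Fin 4) → ℝ) (hp : f (p ∘ Sum.inl) ≠ 0) :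
    riemUp (warpG nb ε f gt) (warpGinv nb ε f gtinv)
      (Sum.inl k) (Sum.inl k) (Sum.inr α) (Sum.inr β) p
      = -((ε k)⁻¹ * f (p ∘ Sum.inl) *
          pderiv' k (fun x => pderiv' k f x) (p ∘ Sum.inl) * gt (p ∘ Sum.inr) α β) := by
  have hfd := hf.differentiable (by simp)
  unfold riemUp
  rw [pderiv'_of_zero (fun q => chr_bbf nb ε k k β q),
    dchr_bff nb ε hf hgt k k α β p,
    Fintype.sum_sum_type, Fintype.sum_sum_type]
  have h4 : ∑ δ : Fin 4, christoffel (warpG nb ε f gt) (warpGinv nb ε f gtinv)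
        (Sum.inl k) (Sum.inr α) (Sum.inr δ) p *
      christoffel (warpG nb ε f gt) (warpGinv nb ε f gtinv)
        (Sum.inr δ) (Sum.inl k) (Sum.inr β) p
      = -((ε k)⁻¹ * (f (p ∘ Sum.inl) * (pderiv' k f (p ∘ Sum.inl) * gt (p ∘ Sum.inr) α β)))
        * ((f (p ∘ Sum.inl))⁻¹ * pderiv' k f (p ∘ Sum.inl)) := by
    rw [Finset.sum_congr rfl (fun δ _ => by
      rw [chr_bff nb ε hfd hgt k α δ p,
        chr_fbf nb ε hfd hgt hinv' δ k β p hp])]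
    rw [Finset.sum_eq_single β]
    · simp
    · intro δ _ hne; simp [hne]
    · simp
  rw [h4]
  simp only [chr_bbb nb ε, chr_bbf nb ε, chr_bfb nb ε _ _ _ hgtsym, mul_zero, zero_mul,
    Finset.sum_const_zero]
  have hFF : f (p ∘ Sum.inl) * (f (p ∘ Sum.inl))⁻¹ = 1 := mul_inv_cancel₀ hp
  linear_combination (pderiv' k f (p ∘ Sum.inl)^2 * gt (p ∘ Sum.inr) α β * (ε k)⁻¹) * hFF

lemma riem_ff_f (hf : ContDiff ℝ (⊤ : ℕ∞) f)
    (hgtsm : ∀ α β, ContDiff ℝ (⊤ : ℕ∞) (fun y => gt y α β))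
    (hgtinvsm : ∀ α β, ContDiff ℝ (⊤ : ℕ∞) (fun y => gtinv y α β))
    (hgtsym : ∀ y α β, gt y α β = gt y β α)
    (hinv' : ∀ y α β, ∑ δ, gtinv y α δ * gt y δ β = if α = β then 1 else 0)
    (γ α β : Fin 4) (p : (Fin nb ⊕ Fin 4) → ℝ) (hp : f (p ∘ Sum.inl) ≠ 0) :
    riemUp (warpG nb ε f gt) (warpGinv nb ε f gtinv)
      (Sum.inr γ) (Sum.inr γ) (Sum.inr α) (Sum.inr β) p
      = riemUp gt gtinv γ γ α β (p ∘ Sum.inr)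
        - (∑ k, (ε k)⁻¹ * (pderiv' k f (p ∘ Sum.inl))^2) * gt (p ∘ Sum.inr) α β
        + (if γ = α then (∑ k, (ε k)⁻¹ * (pderiv' k f (p ∘ Sum.inl))^2)
            * gt (p ∘ Sum.inr) γ β else 0) := by
  have hfd := hf.differentiable (by simp)
  have hgt : ∀ α β, Differentiable ℝ (fun y => gt y α β) :=
    fun α β => (hgtsm α β).differentiable (by simp)
  unfold riemUp
  rw [dchr_fff nb ε hf hgtsm hgtinvsm γ α β γ p hp,
    dchr_fff nb ε hf hgtsm hgtinvsm γ γ β α p hp,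
    Fintype.sum_sum_type, Fintype.sum_sum_type]
  have e1 : ∑ k : Fin nb, christoffel (warpG nb ε f gt) (warpGinv nb ε f gtinv)
        (Sum.inr γ) (Sum.inr γ) (Sum.inl k) p *
      christoffel (warpG nb ε f gt) (warpGinv nb ε f gtinv)
        (Sum.inl k) (Sum.inr α) (Sum.inr β) p
      = -((∑ k, (ε k)⁻¹ * (pderiv' k f (p ∘ Sum.inl))^2) * gt (p ∘ Sum.inr) α β) := by
    have hterm : ∀ k : Fin nb, christoffel (warpG nb ε f gt) (warpGinv nb ε f gtinv)
        (Sum.inr γ) (Sum.inr γ) (Sum.inl k) p *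
        christoffel (warpG nb ε f gt) (warpGinv nb ε f gtinv)
          (Sum.inl k) (Sum.inr α) (Sum.inr β) p
        = -((ε k)⁻¹ * (pderiv' k f (p ∘ Sum.inl))^2 * gt (p ∘ Sum.inr) α β) := by
      intro k
      rw [chr_ffb nb ε hfd hgtsym hgt hinv' γ γ k p hp, chr_bff nb ε hfd hgt k α β p,
        if_pos rfl]
      have hFF : f (p ∘ Sum.inl) * (f (p ∘ Sum.inl))⁻¹ = 1 := mul_inv_cancel₀ hp
      linear_combination (-(pderiv' k f (p ∘ Sum.inl)^2 * gt (p ∘ Sum.inr) α β * (ε k)⁻¹)) * hFF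
    rw [Finset.sum_congr rfl (fun k _ => hterm k), Finset.sum_neg_distrib, ← Finset.sum_mul]
  have e2 : ∑ k : Fin nb, christoffel (warpG nb ε f gt) (warpGinv nb ε f gtinv)
        (Sum.inr γ) (Sum.inr α) (Sum.inl k) p *
      christoffel (warpG nb ε f gt) (warpGinv nb ε f gtinv)
        (Sum.inl k) (Sum.inr γ) (Sum.inr β) p
      = -(if γ = α then (∑ k, (ε k)⁻¹ * (pderiv' k f (p ∘ Sum.inl))^2)
          * gt (p ∘ Sum.inr) γ β else 0) := by
    by_cases hga : γ = α
    · have hterm : ∀ k : Fin nb, christoffel (warpG nb ε f gt) (warpGinv nb ε f gtinv)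
          (Sum.inr γ) (Sum.inr α) (Sum.inl k) p *
          christoffel (warpG nb ε f gt) (warpGinv nb ε f gtinv)
            (Sum.inl k) (Sum.inr γ) (Sum.inr β) p
          = -((ε k)⁻¹ * (pderiv' k f (p ∘ Sum.inl))^2 * gt (p ∘ Sum.inr) γ β) := by
        intro k
        rw [chr_ffb nb ε hfd hgtsym hgt hinv' γ α k p hp, chr_bff nb ε hfd hgt k γ β p,
          if_pos hga]
        have hFF : f (p ∘ Sum.inl) * (f (p ∘ Sum.inl))⁻¹ = 1 := mul_inv_cancel₀ hp
        linear_combination (-(pderiv' k f (p ∘ Sum.inl)^2 * gt (p ∘ Sum.inr) γ β * (ε k)⁻¹)) * hFF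
      rw [Finset.sum_congr rfl (fun k _ => hterm k), Finset.sum_neg_distrib, ← Finset.sum_mul,
        if_pos hga]
    · have hterm : ∀ k : Fin nb, christoffel (warpG nb ε f gt) (warpGinv nb ε f gtinv)
          (Sum.inr γ) (Sum.inr α) (Sum.inl k) p *
          christoffel (warpG nb ε f gt) (warpGinv nb ε f gtinv)
            (Sum.inl k) (Sum.inr γ) (Sum.inr β) p = 0 := by
        intro k
        rw [chr_ffb nb ε hfd hgtsym hgt hinv' γ α k p hp, if_neg hga, zero_mul]
      rw [Finset.sum_congr rfl (fun k _ => hterm k), if_neg hga]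
      simp
  have e3 : ∑ δ : Fin 4, christoffel (warpG nb ε f gt) (warpGinv nb ε f gtinv)
        (Sum.inr γ) (Sum.inr γ) (Sum.inr δ) p *
      christoffel (warpG nb ε f gt) (warpGinv nb ε f gtinv)
        (Sum.inr δ) (Sum.inr α) (Sum.inr β) p
      = ∑ δ : Fin 4, christoffel gt gtinv γ γ δ (p ∘ Sum.inr) *
          christoffel gt gtinv δ α β (p ∘ Sum.inr) :=
    Finset.sum_congr rfl (fun δ _ => by
      rw [chr_fff nb ε hfd hgt γ γ δ p hp, chr_fff nb ε hfd hgt δ α β p hp])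
  have e4 : ∑ δ : Fin 4, christoffel (warpG nb ε f gt) (warpGinv nb ε f gtinv)
        (Sum.inr γ) (Sum.inr α) (Sum.inr δ) p *
      christoffel (warpG nb ε f gt) (warpGinv nb ε f gtinv)
        (Sum.inr δ) (Sum.inr γ) (Sum.inr β) p
      = ∑ δ : Fin 4, christoffel gt gtinv γ α δ (p ∘ Sum.inr) *
          christoffel gt gtinv δ γ β (p ∘ Sum.inr) :=
    Finset.sum_congr rfl (fun δ _ => by
      rw [chr_fff nb ε hfd hgt γ α δ p hp, chr_fff nb ε hfd hgt δ γ β p hp])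
  rw [e1, e2, e3, e4]
  by_cases hga : γ = α
  · simp only [hga, if_true, ite_true, eq_self_iff_true]; ring
  · simp only [hga, if_false, ite_false, eq_self_iff_true]; ring

end Riem2

lemma contDiff_quad (a0 b0 : ℝ) (e0 : ι → ℝ) :
    ContDiff ℝ (⊤ : ℕ∞) (fun x : ι → ℝ => a0 + b0 * ∑ k, e0 k * (x k)^2) := by
  apply ContDiff.add contDiff_const
  apply ContDiff.mul contDiff_const
  apply ContDiff.sum
  intro k _
  exact ContDiff.mul contDiff_const
    ((ContinuousLinearMap.proj k : (ι → ℝ) →L[ℝ] ℝ).contDiff.pow 2)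

lemma sum_sum_factor {κ : Type} [Fintype κ] (C : ℝ) (w : κ → κ → ℝ) :
    ∑ α, ∑ β, C * w α β = C * ∑ α, ∑ β, w α β := by
  rw [Finset.mul_sum]
  exact Finset.sum_congr rfl (fun α _ => by rw [Finset.mul_sum])

lemma sum_sum_contract {ι : Type} [Fintype ι] (gi R G0 : ι → ι → ℝ) (cc ss : ℝ) :
    ∑ i, ∑ j, gi i j * (cc * (R i j - ss * G0 i j))
      = cc * ((∑ i, ∑ j, gi i j * R i j) - ss * ∑ i, ∑ j, gi i j * G0 i j) := by
  have h1 : ∀ (w : ι → ι → ℝ) (d : ℝ), ∑ i, ∑ j, d * w i j = d * ∑ i, ∑ j, w i j := by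
    intro w d
    rw [Finset.mul_sum]
    exact Finset.sum_congr rfl (fun i _ => by rw [Finset.mul_sum])
  calc ∑ i, ∑ j, gi i j * (cc * (R i j - ss * G0 i j))
      = ∑ i, ∑ j, (cc * (gi i j * R i j) - (cc * ss) * (gi i j * G0 i j)) :=
        Finset.sum_congr rfl (fun i _ => Finset.sum_congr rfl (fun j _ => by ring))
    _ = ∑ i, (∑ j, cc * (gi i j * R i j)) - ∑ i, (∑ j, (cc * ss) * (gi i j * G0 i j)) := by
        rw [← Finset.sum_sub_distrib]
        exact Finset.sum_congr rfl (fun i _ => Finset.sum_sub_distrib _ _)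
    _ = cc * (∑ i, ∑ j, gi i j * R i j) - (cc * ss) * ∑ i, ∑ j, gi i j * G0 i j := by
        rw [h1, h1]
    _ = _ := by ring

end WPAux


open WPAux in
theorem warped_product_scalar_curvature
    (nb : ℕ) (hnb : 1 ≤ nb) (ε : Fin nb → ℝ) (hε : ∀ i, ε i = 1 ∨ ε i = -1)
    (gt gtinv : (Fin 4 → ℝ) → Fin 4 → Fin 4 → ℝ)
    (hgtsym : ∀ y α β, gt y α β = gt y β α)
    (hgtsm : ∀ α β, ContDiff ℝ (⊤ : ℕ∞) (fun y => gt y α β))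
    (hgtinvsm : ∀ α β, ContDiff ℝ (⊤ : ℕ∞) (fun y => gtinv y α β))
    (hinv : ∀ y α β, ∑ γ, gt y α γ * gtinv y γ β = if α = β then 1 else 0)
    (a b A B : ℝ) (c : Fin nb → ℝ)
    (hEin : ∀ y α β, ricciT gt gtinv α β y = (-48 * a * b / 4) * gt y α β)
    (haB : a * B = -(b * A))
    (f : (Fin nb → ℝ) → ℝ) (hfdef : f = fun x => a + b * ∑ i, ε i * (x i)^2)
    (σ : ((Fin nb ⊕ Fin 4) → ℝ) → ℝ)
    (hσdef : σ = fun p => A + B * (∑ i, ε i * ((p ∘ Sum.inl) i)^2)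
        + ∑ i, c i * (p ∘ Sum.inl) i)
    (n : ℕ) (hn : n = nb + 4)
    (Jσ : ((Fin nb ⊕ Fin 4) → ℝ) → ℝ)
    (hJσ : Jσ = fun p =>
      -((n : ℝ)/2) * (∑ i, ∑ j, warpGinv nb ε f gtinv p i j * pderiv' i σ p * pderiv' j σ p)
        + σ p * lapT (warpG nb ε f gt) (warpGinv nb ε f gtinv) σ p
        + schoutenTr n (warpG nb ε f gt) (warpGinv nb ε f gtinv) p * (σ p)^2) :
    ∀ p : (Fin nb ⊕ Fin 4) → ℝ, f (p ∘ Sum.inl) ≠ 0 →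
      Jσ p = 2 * (n : ℝ) * A * B - ((n : ℝ)/2) * (∑ i, ε i * (c i)^2) ∧
      2 * ((n : ℝ) - 1) * Jσ p =
        (n : ℝ) * ((n : ℝ) - 1) * (4 * A * B - ∑ i, ε i * (c i)^2) := by
  intro p hp
  classical
  -- basic sign facts
  have hεne : ∀ i, ε i ≠ 0 := fun i => by rcases hε i with h | h <;> rw [h] <;> norm_num
  have hεinv : ∀ i, (ε i)⁻¹ = ε i := fun i => by rcases hε i with h | h <;> rw [h] <;> norm_num
  -- two-sided inverse
  have hinv' : ∀ y α β, ∑ δ, gtinv y α δ * gt y δ β = if α = β then 1 else 0 := by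
    intro y α β
    have h1 : (Matrix.of (gt y)) * (Matrix.of (gtinv y)) = 1 := by
      ext a' c'
      simpa [Matrix.mul_apply, Matrix.one_apply] using hinv y a' c'
    have h2 := mul_eq_one_comm.mp h1
    have h3 := congrFun (congrFun h2 α) β
    simpa [Matrix.mul_apply, Matrix.one_apply] using h3
  have htr : ∀ y : Fin 4 → ℝ, ∑ α, ∑ β, gtinv y α β * gt y α β = 4 := by
    intro y
    have h1 : ∀ α, ∑ β, gtinv y α β * gt y α β = 1 := by
      intro α
      have h2 := hinv' y α α
      rw [if_pos rfl] at h2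
      rw [← h2]
      exact Finset.sum_congr rfl (fun β _ => by rw [hgtsym y α β])
    rw [Finset.sum_congr rfl (fun α _ => h1 α)]
    norm_num
  -- f facts
  have hfC : ContDiff ℝ (⊤ : ℕ∞) f := by rw [hfdef]; exact contDiff_quad a b ε
  have hfd : Differentiable ℝ f := hfC.differentiable (by simp)
  have hgtd : ∀ α β, Differentiable ℝ (fun y => gt y α β) :=
    fun α β => (hgtsm α β).differentiable (by simp)
  have hdf : ∀ (x : Fin nb → ℝ) i0, pderiv' i0 f x = 2*b*ε i0 * x i0 := by
    intro x i0; rw [hfdef]; exact pderiv'_quad a b ε i0 x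
  have hd2f : ∀ (x : Fin nb → ℝ) j0, pderiv' j0 (fun x => pderiv' j0 f x) x = 2*b*ε j0 := by
    intro x j0
    rw [pderiv'_funext (fun y => hdf y j0) j0 x,
      pderiv'_const_mul _ (differentiable_coord j0 x), pderiv'_coord, if_pos rfl, mul_one]
  have hfp : f (p ∘ Sum.inl) = a + b * ∑ k, ε k * (p (Sum.inl k))^2 := by
    rw [hfdef]; simp only [Function.comp_apply]
  -- σ facts
  have hσdiffb := differentiable_quadlin (ι := Fin nb) A B ε c
  have hdσl : ∀ (q : (Fin nb ⊕ Fin 4) → ℝ) i0,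
      pderiv' (Sum.inl i0) σ q = 2*B*ε i0 * q (Sum.inl i0) + c i0 := by
    intro q i0; rw [hσdef]
    have h1 := pderiv'_inl_inl
      (fun x : Fin nb → ℝ => A + B * (∑ i, ε i * (x i)^2) + ∑ i, c i * x i) q
      (hσdiffb _) i0
    rw [pderiv'_quadlin] at h1
    exact h1
  have hdσr : ∀ (q : (Fin nb ⊕ Fin 4) → ℝ) γ, pderiv' (Sum.inr γ) σ q = 0 := by
    intro q γ; rw [hσdef]
    exact pderiv'_inr_inl
      (fun x : Fin nb → ℝ => A + B * (∑ i, ε i * (x i)^2) + ∑ i, c i * x i) q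
      (hσdiffb _) γ
  have hσp : σ p = A + B*(∑ k, ε k * (p (Sum.inl k))^2) + ∑ k, c k * p (Sum.inl k) := by
    rw [hσdef]; simp only [Function.comp_apply]
  have hFF : f (p ∘ Sum.inl) * (f (p ∘ Sum.inl))⁻¹ = 1 := mul_inv_cancel₀ hp
  -- Ricci base diagonal
  have hRicb : ∀ i0 : Fin nb, ricciT (warpG nb ε f gt) (warpGinv nb ε f gtinv)
      (Sum.inl i0) (Sum.inl i0) p = -(8*b*ε i0 * (f (p ∘ Sum.inl))⁻¹) := by
    intro i0
    unfold ricciT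
    rw [Fintype.sum_sum_type]
    simp only [riem_bb_b nb ε, riem_bb_f nb ε hfC hgtsym hgtd hinv' (p := p) (hp := hp),
      hd2f, Finset.sum_const_zero, Finset.sum_const, Finset.card_univ, Fintype.card_fin,
      nsmul_eq_mul, zero_add]
    push_cast
    ring
  -- |df|² evaluation
  have hQwf : ∀ k, (ε k)⁻¹ * (2*b*ε k * p (Sum.inl k))^2
      = 4*b^2*(ε k * (p (Sum.inl k))^2) := by
    intro k; rw [hεinv k]; rcases hε k with h | h <;> rw [h] <;> ring
  have hWf : (∑ k, (ε k)⁻¹ * (pderiv' k f (p ∘ Sum.inl))^2)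
      = 4*b^2 * ∑ k, ε k * (p (Sum.inl k))^2 := by
    simp only [hdf, Function.comp_apply]
    rw [Finset.sum_congr rfl (fun k (_ : k ∈ Finset.univ) => hQwf k), ← Finset.mul_sum]
  -- Ricci fiber block
  have hRicf : ∀ α β, ricciT (warpG nb ε f gt) (warpGinv nb ε f gtinv)
      (Sum.inr α) (Sum.inr β) p
      = -((2*(nb:ℝ)*b + 12*b) * f (p ∘ Sum.inl) * gt (p ∘ Sum.inr) α β) := by
    intro α β
    unfold ricciT
    rw [Fintype.sum_sum_type]
    simp only [riem_ff_b nb ε hfC hgtsym hgtd hinv' (p := p) (hp := hp),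
      riem_ff_f nb ε hfC hgtsm hgtinvsm hgtsym hinv' (p := p) (hp := hp), hd2f]
    have hQb : ∀ k : Fin nb, -((ε k)⁻¹ * f (p ∘ Sum.inl) * (2*b*ε k) * gt (p ∘ Sum.inr) α β)
        = -(2*b * (f (p ∘ Sum.inl) * gt (p ∘ Sum.inr) α β)) := by
      intro k; rw [hεinv k]; rcases hε k with h | h <;> rw [h] <;> ring
    rw [Finset.sum_congr rfl (fun k (_ : k ∈ Finset.univ) => hQb k)]
    rw [Finset.sum_add_distrib, Finset.sum_sub_distrib]
    have h1 : ∑ γ : Fin 4, riemUp gt gtinv γ γ α β (p ∘ Sum.inr)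
        = ricciT gt gtinv α β (p ∘ Sum.inr) := rfl
    rw [h1, hEin, Finset.sum_const, Finset.sum_const, Finset.sum_ite_eq' Finset.univ α
      (fun γ => (∑ k, (ε k)⁻¹ * (pderiv' k f (p ∘ Sum.inl))^2) * gt (p ∘ Sum.inr) γ β)]
    simp only [Finset.mem_univ, if_true, Finset.card_univ, Fintype.card_fin, nsmul_eq_mul]
    rw [hWf, hfp]
    push_cast
    ring
  -- scalar curvature
  have hscal : scalT (warpG nb ε f gt) (warpGinv nb ε f gtinv) p
      = -((16*(nb:ℝ) + 48) * b * (f (p ∘ Sum.inl))⁻¹) := by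
    unfold scalT
    simp only [Fintype.sum_sum_type, Wi_bb, Wi_bf, Wi_fb, Wi_ff, zero_mul,
      Finset.sum_const_zero, ite_mul, Finset.sum_ite_eq, Finset.mem_univ, if_true,
      add_zero, zero_add]
    simp only [hRicb, hRicf]
    have hQs : ∀ i : Fin nb, (ε i)⁻¹ * -(8*b*ε i * (f (p ∘ Sum.inl))⁻¹)
        = -(8*b*(f (p ∘ Sum.inl))⁻¹) := by
      intro i; rw [hεinv i]; rcases hε i with h | h <;> rw [h] <;> ring
    have hQf : ∀ α β : Fin 4, ((f (p ∘ Sum.inl))⁻¹)^2 * gtinv (p ∘ Sum.inr) α β *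
        -((2*(nb:ℝ)*b + 12*b) * f (p ∘ Sum.inl) * gt (p ∘ Sum.inr) α β)
        = (-((2*(nb:ℝ)*b + 12*b) * f (p ∘ Sum.inl) * ((f (p ∘ Sum.inl))⁻¹)^2))
          * (gtinv (p ∘ Sum.inr) α β * gt (p ∘ Sum.inr) α β) := fun α β => by ring
    rw [Finset.sum_congr rfl (fun i (_ : i ∈ Finset.univ) => hQs i),
      Finset.sum_congr rfl (fun α (_ : α ∈ Finset.univ) =>
        Finset.sum_congr rfl (fun β (_ : β ∈ Finset.univ) => hQf α β)),
      Finset.sum_congr rfl (fun α (_ : α ∈ Finset.univ) => (Finset.mul_sum _ _ _).symm),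
      ← Finset.mul_sum, htr, Finset.sum_const, Finset.card_univ]
    simp only [Fintype.card_fin, nsmul_eq_mul]
    push_cast
    linear_combination (-(8*(nb:ℝ) + 48) * b * (f (p ∘ Sum.inl))⁻¹) * hFF
  -- trace of g
  have htrG : ∑ i, ∑ j, warpGinv nb ε f gtinv p i j * warpG nb ε f gt p i j
      = (nb:ℝ) + 4 := by
    simp only [Fintype.sum_sum_type, Wi_bb, Wi_bf, Wi_fb, Wi_ff, W_bb, W_bf, W_fb, W_ff,
      zero_mul, mul_zero, Finset.sum_const_zero, ite_mul, mul_ite, Finset.sum_ite_eq,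
      Finset.mem_univ, if_true, add_zero, zero_add]
    have hQf : ∀ α β : Fin 4, ((f (p ∘ Sum.inl))⁻¹)^2 * gtinv (p ∘ Sum.inr) α β *
        ((f (p ∘ Sum.inl))^2 * gt (p ∘ Sum.inr) α β)
        = ((f (p ∘ Sum.inl)) * (f (p ∘ Sum.inl))⁻¹)^2
          * (gtinv (p ∘ Sum.inr) α β * gt (p ∘ Sum.inr) α β) := fun α β => by ring
    rw [Finset.sum_congr rfl (fun i (_ : i ∈ Finset.univ) => inv_mul_cancel₀ (hεne i)),
      Finset.sum_congr rfl (fun α (_ : α ∈ Finset.univ) =>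
        Finset.sum_congr rfl (fun β (_ : β ∈ Finset.univ) => hQf α β)),
      Finset.sum_congr rfl (fun α (_ : α ∈ Finset.univ) => (Finset.mul_sum _ _ _).symm),
      ← Finset.mul_sum, htr, hFF, Finset.sum_const, Finset.card_univ]
    simp
  -- Schouten trace
  have hnR5 : (5:ℝ) ≤ (n:ℝ) := by
    have h5 : 5 ≤ n := by omega
    exact_mod_cast h5
  have hn2 : ((n:ℝ) - 2) ≠ 0 := by linarith
  have hn1 : ((n:ℝ) - 1) ≠ 0 := by linarith
  have hsch : schoutenTr n (warpG nb ε f gt) (warpGinv nb ε f gtinv) p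
      = -(8*b*(f (p ∘ Sum.inl))⁻¹) := by
    unfold schoutenTr schoutenT
    rw [sum_sum_contract]
    have hs : (∑ i, ∑ j, warpGinv nb ε f gtinv p i j *
        ricciT (warpG nb ε f gt) (warpGinv nb ε f gtinv) i j p)
        = scalT (warpG nb ε f gt) (warpGinv nb ε f gtinv) p := rfl
    rw [hs, htrG, hscal]
    have hnb' : (nb:ℝ) = (n:ℝ) - 4 := by rw [hn]; push_cast; ring
    rw [hnb']
    field_simp
    ring
  -- Hessian components
  have hhess_bb : ∀ i0 : Fin nb, hessT (warpG nb ε f gt) (warpGinv nb ε f gtinv) σ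
      (Sum.inl i0) (Sum.inl i0) p = 2*B*ε i0 := by
    intro i0
    unfold hessT
    rw [pderiv'_funext (fun y => hdσl y i0) (Sum.inl i0) p,
      pderiv'_add ((differentiable_coord (Sum.inl i0) p).const_mul _) (differentiableAt_const _),
      pderiv'_const_mul _ (differentiable_coord (Sum.inl i0) p), pderiv'_coord, pderiv'_const,
      if_pos rfl, Fintype.sum_sum_type]
    simp only [chr_bbb nb ε, chr_fbb nb ε, zero_mul, Finset.sum_const_zero]
    simp
  have hhess_ff : ∀ α β, hessT (warpG nb ε f gt) (warpGinv nb ε f gtinv) σ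
      (Sum.inr α) (Sum.inr β) p
      = (f (p ∘ Sum.inl) * gt (p ∘ Sum.inr) α β)
        * (4*b*B*(∑ k, ε k * (p (Sum.inl k))^2) + 2*b*(∑ k, c k * p (Sum.inl k))) := by
    intro α β
    unfold hessT
    rw [pderiv'_of_zero (fun y => hdσr y β) (Sum.inr α) p, Fintype.sum_sum_type]
    simp only [chr_bff nb ε hfd hgtd, hdσl p, hdσr p, hdf, mul_zero, Function.comp_apply,
      Finset.sum_const_zero, add_zero]
    have hQh : ∀ k : Fin nb,
        -((ε k)⁻¹ * (f (p ∘ Sum.inl) * (2*b*ε k * p (Sum.inl k) * gt (p ∘ Sum.inr) α β)))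
          * (2*B*ε k * p (Sum.inl k) + c k)
        = -((f (p ∘ Sum.inl) * gt (p ∘ Sum.inr) α β)
            * (4*b*B*(ε k * (p (Sum.inl k))^2) + 2*b*(c k * p (Sum.inl k)))) := by
      intro k; rw [hεinv k]; rcases hε k with h | h <;> rw [h] <;> ring
    rw [Finset.sum_congr rfl (fun k (_ : k ∈ Finset.univ) => hQh k),
      Finset.sum_neg_distrib, ← Finset.mul_sum, Finset.sum_add_distrib,
      ← Finset.mul_sum, ← Finset.mul_sum]
    simp
  -- Laplacian
  have hlap : lapT (warpG nb ε f gt) (warpGinv nb ε f gtinv) σ p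
      = 2*(nb:ℝ)*B + 8*b*(f (p ∘ Sum.inl))⁻¹
          * (2*B*(∑ k, ε k * (p (Sum.inl k))^2) + ∑ k, c k * p (Sum.inl k)) := by
    unfold lapT
    simp only [Fintype.sum_sum_type, Wi_bb, Wi_bf, Wi_fb, Wi_ff, zero_mul,
      Finset.sum_const_zero, ite_mul, Finset.sum_ite_eq, Finset.mem_univ, if_true,
      add_zero, zero_add]
    simp only [hhess_bb, hhess_ff]
    have hQl : ∀ i : Fin nb, (ε i)⁻¹ * (2*B*ε i) = 2*B := by
      intro i; rw [hεinv i]; rcases hε i with h | h <;> rw [h] <;> ring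
    have hQf : ∀ α β : Fin 4, ((f (p ∘ Sum.inl))⁻¹)^2 * gtinv (p ∘ Sum.inr) α β *
        ((f (p ∘ Sum.inl) * gt (p ∘ Sum.inr) α β)
          * (4*b*B*(∑ k, ε k * (p (Sum.inl k))^2) + 2*b*(∑ k, c k * p (Sum.inl k))))
        = (f (p ∘ Sum.inl) * ((f (p ∘ Sum.inl))⁻¹)^2
            * (4*b*B*(∑ k, ε k * (p (Sum.inl k))^2) + 2*b*(∑ k, c k * p (Sum.inl k))))
          * (gtinv (p ∘ Sum.inr) α β * gt (p ∘ Sum.inr) α β) := fun α β => by ring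
    rw [Finset.sum_congr rfl (fun i (_ : i ∈ Finset.univ) => hQl i),
      Finset.sum_congr rfl (fun α (_ : α ∈ Finset.univ) =>
        Finset.sum_congr rfl (fun β (_ : β ∈ Finset.univ) => hQf α β)),
      sum_sum_factor (f (p ∘ Sum.inl) * ((f (p ∘ Sum.inl))⁻¹)^2
        * (4*b*B*(∑ k, ε k * (p (Sum.inl k))^2) + 2*b*(∑ k, c k * p (Sum.inl k))))
        (fun α β => gtinv (p ∘ Sum.inr) α β * gt (p ∘ Sum.inr) α β),
      htr, Finset.sum_const, Finset.card_univ]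
    simp only [Fintype.card_fin, nsmul_eq_mul]
    push_cast
    linear_combination (8*b*(2*B*(∑ k, ε k * (p (Sum.inl k))^2) + ∑ k, c k * p (Sum.inl k))
      * (f (p ∘ Sum.inl))⁻¹) * hFF
  -- gradient term
  have hgrad : (∑ i, ∑ j, warpGinv nb ε f gtinv p i j * pderiv' i σ p * pderiv' j σ p)
      = 4*B^2*(∑ k, ε k * (p (Sum.inl k))^2) + 4*B*(∑ k, c k * p (Sum.inl k))
        + ∑ k, ε k * (c k)^2 := by
    simp only [Fintype.sum_sum_type, Wi_bb, Wi_bf, Wi_fb, Wi_ff, hdσl p, hdσr p,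
      zero_mul, mul_zero, Finset.sum_const_zero, ite_mul, Finset.sum_ite_eq,
      Finset.mem_univ, if_true, add_zero, zero_add]
    have hQg : ∀ i : Fin nb,
        (ε i)⁻¹ * (2*B*ε i * p (Sum.inl i) + c i) * (2*B*ε i * p (Sum.inl i) + c i)
        = 4*B^2*(ε i * (p (Sum.inl i))^2) + 4*B*(c i * p (Sum.inl i)) + ε i * (c i)^2 := by
      intro i; rw [hεinv i]; rcases hε i with h | h <;> rw [h] <;> ring
    rw [Finset.sum_congr rfl (fun i (_ : i ∈ Finset.univ) => hQg i),
      Finset.sum_add_distrib, Finset.sum_add_distrib, ← Finset.mul_sum, ← Finset.mul_sum]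
  -- final assembly
  have h1 : Jσ p = 2 * (n : ℝ) * A * B - ((n : ℝ)/2) * (∑ i, ε i * (c i)^2) := by
    rw [hJσ]
    simp only []
    rw [hgrad, hlap, hsch, hσp]
    rw [hfp] at hFF
    rw [hfp]
    rw [hn]; push_cast
    linear_combination
      (8*B*(A + B*(∑ k, ε k * (p (Sum.inl k))^2) + ∑ k, c k * p (Sum.inl k))) * hFF
      - (8*(A + B*(∑ k, ε k * (p (Sum.inl k))^2) + ∑ k, c k * p (Sum.inl k))
          * (a + b * ∑ k, ε k * (p (Sum.inl k))^2)⁻¹) * haB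
  refine ⟨h1, ?_⟩
  rw [h1]
  ring
end
end
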